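/- arXiv:1805.02756 — 8 statements merged into one kernel-verified Lean document; each statement's English description precedes it below -/
import Mathlib

section
/- Fix n ≥ 1 and set N = 2ⁿ − 1. Then for every n-tuple (y₁,…,yₙ) of positive integers there exists a unique reduced N-tuple (z₁,…,z_N) of positive integers such that y_j = ∏_{h=1}^{N} z_h^{ε_j(h)} for every j ∈ {1,…,n}; moreover this tuple satisfies lcm(y₁,…,yₙ) = ∏_{h=1}^{N} z_h. -/
/-- `h` is dominated by `l`: every binary digit of `h` is at most the
corresponding binary digit of `l`. -/
def Dominates (h l : ℕ) : Prop := ∀ j : ℕ, h.testBit j = true → l.testBit j = true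

/-- An `N`-tuple `(z₁, …, z_N)` (indexed here by `Fin N`, with `i : Fin N`
corresponding to the integer `i + 1 ∈ {1, …, N}`) is reduced if
`gcd(z_h, z_ℓ) = 1` whenever `h` and `ℓ` are incomparable for domination. -/
def ReducedTuple {N : ℕ} (z : Fin N → ℕ) : Prop :=
  ∀ h l : Fin N, ¬ Dominates ((h : ℕ) + 1) ((l : ℕ) + 1) →
    ¬ Dominates ((l : ℕ) + 1) ((h : ℕ) + 1) → Nat.gcd (z h) (z l) = 1

/-!
Fix a prime `p`, let `a j` and `e i` be the `p`-adic valuations of `y j` and `z i`, and let `B i`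
be the set of binary digits of `i + 1`. The tuple `z` is reduced iff for every `p` the sets `B i`
with `e i ≠ 0` form a chain under inclusion, and the product formula says
`a j = ∑_{j ∈ B i} e i`. Such a chain-supported `e` exists: in the layer-cake decomposition each
threshold `t ∈ [1, max a]` contributes one unit to the index whose digit set is the level set
`{j | t ≤ a j}`. It is unique: the largest set of the chain must be the support of `a`, and
peeling one unit off it leaves a smaller instance of the same problem. Finally every set of the
chain contains the smallest one, so `max_j a j = ∑ i, e i`, which is `lcm y = ∏ i, z i` at `p`.
-/

open Finset Function

lemma sub_single_add_single {ι : Type*} [DecidableEq ι] {f : ι → ℕ} {i : ι} (hi : f i ≠ 0) :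
    f - Pi.single i 1 + Pi.single i 1 = f := by
  ext k
  by_cases hk : k = i
  · subst hk
    simp only [Pi.add_apply, Pi.sub_apply, Pi.single_eq_same]
    omega
  · simp [hk]

section Chain

variable {ι α : Type*} {B : ι → Finset α} {e : ι → ℕ}

lemma subset_of_card_le_of_isChain (he : IsChain (· ⊆ ·) (B '' support e)) {i i' : ι}
    (hi : e i ≠ 0) (hi' : e i' ≠ 0) (hcard : #(B i) ≤ #(B i')) : B i ⊆ B i' := by
  rcases he.total (Set.mem_image_of_mem B hi) (Set.mem_image_of_mem B hi') with h | h
  · exact h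
  · exact (eq_of_subset_of_card_le h hcard).ge

variable [Fintype ι]

lemma exists_greatest_of_isChain (he : IsChain (· ⊆ ·) (B '' support e)) (h0 : e ≠ 0) :
    ∃ i, e i ≠ 0 ∧ ∀ i', e i' ≠ 0 → B i' ⊆ B i := by
  obtain ⟨i, hi⟩ := Function.ne_iff.1 h0
  obtain ⟨i, hi, hmax⟩ := exists_max_image {i | e i ≠ 0} (fun i => #(B i)) ⟨i, by simpa using hi⟩
  simp only [mem_filter, mem_univ, true_and] at hi hmax
  exact ⟨i, hi, fun i' hi' => subset_of_card_le_of_isChain he hi' hi (hmax i' hi')⟩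

lemma exists_least_of_isChain (he : IsChain (· ⊆ ·) (B '' support e)) (h0 : e ≠ 0) :
    ∃ i, e i ≠ 0 ∧ ∀ i', e i' ≠ 0 → B i ⊆ B i' := by
  obtain ⟨i, hi⟩ := Function.ne_iff.1 h0
  obtain ⟨i, hi, hmin⟩ := exists_min_image {i | e i ≠ 0} (fun i => #(B i)) ⟨i, by simpa using hi⟩
  simp only [mem_filter, mem_univ, true_and] at hi hmin
  exact ⟨i, hi, fun i' hi' => subset_of_card_le_of_isChain he hi hi' (hmin i' hi')⟩

end Chain

section CoverWeight

variable {ι α : Type*} [Fintype ι] [DecidableEq α]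

def coverWeight (B : ι → Finset α) (e : ι → ℕ) (j : α) : ℕ := ∑ i with j ∈ B i, e i

variable {B : ι → Finset α}

lemma le_coverWeight (e : ι → ℕ) {i : ι} {j : α} (hj : j ∈ B i) : e i ≤ coverWeight B e j :=
  single_le_sum (fun _ _ => Nat.zero_le _) (mem_filter.2 ⟨mem_univ i, hj⟩)

lemma coverWeight_le_sum (e : ι → ℕ) (j : α) : coverWeight B e j ≤ ∑ i, e i :=
  sum_le_sum_of_subset (filter_subset _ _)

lemma coverWeight_add (e e' : ι → ℕ) :
    coverWeight B (e + e') = coverWeight B e + coverWeight B e' := by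
  ext j
  simp [coverWeight, sum_add_distrib]

lemma coverWeight_zero : coverWeight B (0 : ι → ℕ) = 0 := by
  ext j
  simp [coverWeight]

lemma eq_zero_of_coverWeight_eq_zero (hne : ∀ i, (B i).Nonempty) {e : ι → ℕ}
    (h : coverWeight B e = 0) : e = 0 := by
  ext i
  obtain ⟨j, hj⟩ := hne i
  simpa [h] using le_coverWeight e hj

variable {e : ι → ℕ}

lemma exists_mem_iff_coverWeight_ne_zero (he : IsChain (· ⊆ ·) (B '' support e)) (h0 : e ≠ 0) :
    ∃ i, e i ≠ 0 ∧ ∀ j, j ∈ B i ↔ coverWeight B e j ≠ 0 := by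
  obtain ⟨i, hi, hmax⟩ := exists_greatest_of_isChain he h0
  refine ⟨i, hi, fun j => ⟨fun hj => ?_, fun hj => ?_⟩⟩
  · exact (Nat.pos_of_ne_zero hi |>.trans_le (le_coverWeight e hj)).ne'
  · obtain ⟨k, hk, hek⟩ := exists_ne_zero_of_sum_ne_zero hj
    exact hmax k hek (mem_filter.1 hk).2

theorem eq_of_coverWeight_eq (hinj : Injective B) (hne : ∀ i, (B i).Nonempty) {e e' : ι → ℕ}
    (he : IsChain (· ⊆ ·) (B '' support e)) (he' : IsChain (· ⊆ ·) (B '' support e'))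
    (h : coverWeight B e = coverWeight B e') : e = e' := by
  classical
  induction hs : ∑ i, e i using Nat.strong_induction_on generalizing e e' with
  | _ s ih =>
  by_cases h0 : e = 0
  · subst h0
    exact (eq_zero_of_coverWeight_eq_zero hne (h.symm.trans coverWeight_zero)).symm
  have h0' : e' ≠ 0 := fun h0' =>
    h0 (eq_zero_of_coverWeight_eq_zero hne (h.trans (by rw [h0', coverWeight_zero])))
  obtain ⟨i, hi, hsupp⟩ := exists_mem_iff_coverWeight_ne_zero he h0
  obtain ⟨i', hi', hsupp'⟩ := exists_mem_iff_coverWeight_ne_zero he' h0'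
  obtain rfl : i = i' := hinj (by ext j; rw [hsupp, hsupp', h])
  obtain ⟨d, rfl⟩ : ∃ d : ι → ℕ, e = d + Pi.single i 1 := ⟨_, (sub_single_add_single hi).symm⟩
  obtain ⟨d', rfl⟩ : ∃ d' : ι → ℕ, e' = d' + Pi.single i 1 := ⟨_, (sub_single_add_single hi').symm⟩
  have hsupp_mono : ∀ f : ι → ℕ, B '' support f ⊆ B '' support (f + Pi.single i 1) := fun f =>
    Set.image_mono fun k hk => by simp only [mem_support, Pi.add_apply] at hk ⊢; omega
  have hlt : ∑ k, d k < s := by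
    rw [← hs]
    simp [sum_add_distrib]
  rw [coverWeight_add, coverWeight_add] at h
  rw [ih _ hlt (he.mono (hsupp_mono d)) (he'.mono (hsupp_mono d')) (add_right_cancel h) rfl]

theorem sup_coverWeight_eq_sum [Fintype α] (hne : ∀ i, (B i).Nonempty)
    (he : IsChain (· ⊆ ·) (B '' support e)) : univ.sup (coverWeight B e) = ∑ i, e i := by
  refine le_antisymm (Finset.sup_le fun j _ => coverWeight_le_sum e j) ?_
  by_cases h0 : e = 0
  · simp [h0]
  obtain ⟨i, -, hmin⟩ := exists_least_of_isChain he h0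
  obtain ⟨j, hj⟩ := hne i
  calc ∑ i, e i = coverWeight B e j := (sum_filter_of_ne fun k _ hk => hmin k hk hj).symm
    _ ≤ univ.sup (coverWeight B e) := le_sup (mem_univ j)

end CoverWeight

section Layers

variable {ι α : Type*} [Fintype ι] [Fintype α] [DecidableEq α] {B : ι → Finset α}

def layerCount (a : α → ℕ) (S : Finset α) : ℕ :=
  #{t ∈ Icc 1 (univ.sup a) | ({j | t ≤ a j} : Finset α) = S}

lemma layerCount_zero (S : Finset α) : layerCount 0 S = 0 := by
  simp [layerCount]

lemma isChain_support_layerCount (a : α → ℕ) : IsChain (· ⊆ ·) (support (layerCount a)) := by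
  intro S hS T hT _
  obtain ⟨t, ht⟩ := card_pos.1 (Nat.pos_of_ne_zero hS)
  obtain ⟨t', ht'⟩ := card_pos.1 (Nat.pos_of_ne_zero hT)
  rw [← (mem_filter.1 ht).2, ← (mem_filter.1 ht').2]
  rcases le_total t t' with h | h
  · exact Or.inr fun j hj => by simp only [mem_filter, mem_univ, true_and] at hj ⊢; omega
  · exact Or.inl fun j hj => by simp only [mem_filter, mem_univ, true_and] at hj ⊢; omega

lemma coverWeight_layerCount (hinj : Injective B)
    (hsurj : ∀ S : Finset α, S.Nonempty → ∃ i, B i = S) (a : α → ℕ) :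
    coverWeight B (fun i => layerCount a (B i)) = a := by
  ext j
  calc coverWeight B (fun i => layerCount a (B i)) j
      = ∑ S with j ∈ S, layerCount a S := by
        refine sum_nbij B (by simp) hinj.injOn (fun S hS => ?_) (fun _ _ => rfl)
        obtain ⟨i, rfl⟩ := hsurj S ⟨j, (mem_filter.1 hS).2⟩
        exact ⟨i, by simpa using hS, rfl⟩
    _ = #{t ∈ Icc 1 (univ.sup a) | ({k | t ≤ a k} : Finset α) ∈ ({S | j ∈ S} : Finset _)} :=
        sum_card_fiberwise_eq_card_filter _ _ _
    _ = #(Icc 1 (a j)) := by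
        congr 1
        ext t
        simp only [mem_filter, mem_Icc, mem_univ, true_and]
        exact ⟨fun h => ⟨h.1.1, h.2⟩, fun h => ⟨⟨h.1, h.2.trans (le_sup (mem_univ j))⟩, h.2⟩⟩
    _ = a j := by simp

end Layers

lemma Nat.coprime_iff_factorization_eq_zero_or {a b : ℕ} (ha : a ≠ 0) (hb : b ≠ 0) :
    a.Coprime b ↔ ∀ p, a.factorization p = 0 ∨ b.factorization p = 0 := by
  rw [← Nat.disjoint_primeFactors ha hb, disjoint_left]
  simp [← Nat.support_factorization, or_iff_not_imp_left]

lemma Nat.factorization_prod_pow_of_prime {P : Finset ℕ} (hP : ∀ p ∈ P, p.Prime) {f : ℕ → ℕ}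
    (hf : ∀ p ∉ P, f p = 0) (q : ℕ) : (∏ p ∈ P, p ^ f p).factorization q = f q := by
  rw [Nat.factorization_prod fun p hp => pow_ne_zero _ (hP p hp).ne_zero, Finsupp.finsetSum_apply,
    sum_congr rfl fun p hp => by rw [(hP p hp).factorization_pow]]
  by_cases hq : q ∈ P <;> simp [Finsupp.single_apply, hq, hf]

lemma Nat.prime_of_mem_biUnion_primeFactors {α : Type*} {s : Finset α} {y : α → ℕ} {p : ℕ}
    (hp : p ∈ s.biUnion fun j => (y j).primeFactors) : p.Prime := by
  obtain ⟨j, -, hj⟩ := mem_biUnion.1 hp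
  exact Nat.prime_of_mem_primeFactors hj

lemma coprime_iff_isChain_support_factorization {ι α : Type*} {B : ι → Finset α} {z : ι → ℕ}
    (hz : ∀ i, 0 < z i) :
    (∀ h l, ¬ B h ⊆ B l → ¬ B l ⊆ B h → Nat.Coprime (z h) (z l)) ↔
      ∀ p, IsChain (· ⊆ ·) (B '' support fun i => (z i).factorization p) := by
  simp only [Nat.coprime_iff_factorization_eq_zero_or (hz _).ne' (hz _).ne']
  constructor
  · rintro hred p _ ⟨h, hh, rfl⟩ _ ⟨l, hl, rfl⟩ -
    by_contra hnot
    obtain ⟨hhl, hlh⟩ := not_or.1 hnot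
    exact (hred h l hhl hlh p).elim hh hl
  · intro hchain h l hhl hlh p
    by_contra hnot
    obtain ⟨hh, hl⟩ := not_or.1 hnot
    exact ((hchain p).total ⟨h, hh, rfl⟩ ⟨l, hl, rfl⟩).elim hhl hlh

section ReducedFactorization

variable {ι α : Type*} [Fintype ι] [DecidableEq α] {B : ι → Finset α}

structure IsReducedFactorization (B : ι → Finset α) (y : α → ℕ) (z : ι → ℕ) : Prop where
  pos : ∀ i, 0 < z i
  coprime : ∀ h l, ¬ B h ⊆ B l → ¬ B l ⊆ B h → Nat.Coprime (z h) (z l)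
  prod_eq : ∀ j, y j = ∏ i with j ∈ B i, z i

lemma factorization_prod_eq_coverWeight {z : ι → ℕ} (hz : ∀ i, 0 < z i) (j : α) (p : ℕ) :
    (∏ i with j ∈ B i, z i).factorization p = coverWeight B (fun i => (z i).factorization p) j := by
  rw [Nat.factorization_prod fun i _ => (hz i).ne', Finsupp.finsetSum_apply]
  rfl

namespace IsReducedFactorization

variable {y : α → ℕ} {z : ι → ℕ}

lemma isChain (hz : IsReducedFactorization B y z) (p : ℕ) :
    IsChain (· ⊆ ·) (B '' support fun i => (z i).factorization p) :=
  (coprime_iff_isChain_support_factorization hz.pos).1 hz.coprime p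

lemma factorization_eq_coverWeight (hz : IsReducedFactorization B y z) (j : α) (p : ℕ) :
    (y j).factorization p = coverWeight B (fun i => (z i).factorization p) j := by
  rw [hz.prod_eq j, factorization_prod_eq_coverWeight hz.pos]

lemma ne_zero (hz : IsReducedFactorization B y z) (j : α) : y j ≠ 0 := by
  rw [hz.prod_eq j]
  exact (prod_pos fun i _ => hz.pos i).ne'

theorem unique (hinj : Injective B) (hne : ∀ i, (B i).Nonempty) {z' : ι → ℕ}
    (hz : IsReducedFactorization B y z) (hz' : IsReducedFactorization B y z') : z = z' := by
  funext i
  refine Nat.eq_of_factorization_eq (hz.pos i).ne' (hz'.pos i).ne' fun p => ?_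
  refine congrFun (eq_of_coverWeight_eq hinj hne (hz.isChain p) (hz'.isChain p) ?_) i
  ext j
  rw [← hz.factorization_eq_coverWeight, ← hz'.factorization_eq_coverWeight]

theorem lcm_eq_prod [Fintype α] (hne : ∀ i, (B i).Nonempty) (hz : IsReducedFactorization B y z) :
    univ.lcm y = ∏ i, z i := by
  refine Nat.eq_of_factorization_eq ?_ (prod_pos fun i _ => hz.pos i).ne' fun p => ?_
  · simpa [Finset.lcm_eq_zero_iff] using hz.ne_zero
  rw [factorization_lcm fun j _ => hz.ne_zero j, Nat.factorization_prod fun i _ => (hz.pos i).ne',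
    Finsupp.finsetSum_apply]
  simp_rw [hz.factorization_eq_coverWeight]
  exact sup_coverWeight_eq_sum hne (hz.isChain p)

end IsReducedFactorization

end ReducedFactorization

section Existence

variable {ι α : Type*} [Fintype α] [DecidableEq α] {B : ι → Finset α}

def reducedFactor (B : ι → Finset α) (y : α → ℕ) (i : ι) : ℕ :=
  ∏ p ∈ univ.biUnion fun j => (y j).primeFactors,
    p ^ layerCount (fun j => (y j).factorization p) (B i)

lemma reducedFactor_pos (y : α → ℕ) (i : ι) : 0 < reducedFactor B y i :=
  prod_pos fun _ hp => pow_pos (Nat.prime_of_mem_biUnion_primeFactors hp).pos _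

lemma factorization_reducedFactor (y : α → ℕ) (i : ι) (p : ℕ) :
    (reducedFactor B y i).factorization p = layerCount (fun j => (y j).factorization p) (B i) := by
  refine Nat.factorization_prod_pow_of_prime (fun _ hq => Nat.prime_of_mem_biUnion_primeFactors hq)
    (fun q hq => ?_) p
  have hzero : (fun j => (y j).factorization q) = 0 := by
    ext j
    simp only [mem_biUnion, mem_univ, true_and, not_exists] at hq
    simpa using Finsupp.notMem_support_iff.1 (hq j)
  rw [hzero, layerCount_zero]

variable [Fintype ι]

theorem isReducedFactorization_reducedFactor (hinj : Injective B)
    (hsurj : ∀ S : Finset α, S.Nonempty → ∃ i, B i = S) {y : α → ℕ} (hy : ∀ j, 0 < y j) :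
    IsReducedFactorization B y (reducedFactor B y) where
  pos := reducedFactor_pos y
  coprime := by
    refine (coprime_iff_isChain_support_factorization (reducedFactor_pos y)).2 fun p => ?_
    simp_rw [factorization_reducedFactor]
    refine (isChain_support_layerCount fun j => (y j).factorization p).mono ?_
    rw [← comp_def, support_comp_eq_preimage]
    exact Set.image_preimage_subset _ _
  prod_eq j := by
    refine Nat.eq_of_factorization_eq (hy j).ne' (prod_pos fun i _ => reducedFactor_pos y i).ne'
      fun p => ?_
    rw [factorization_prod_eq_coverWeight (reducedFactor_pos y)]
    simp_rw [factorization_reducedFactor]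
    rw [coverWeight_layerCount hinj hsurj]

theorem existsUnique_isReducedFactorization (hinj : Injective B) (hne : ∀ i, (B i).Nonempty)
    (hsurj : ∀ S : Finset α, S.Nonempty → ∃ i, B i = S) {y : α → ℕ} (hy : ∀ j, 0 < y j) :
    ∃! z, IsReducedFactorization B y z :=
  ⟨reducedFactor B y, isReducedFactorization_reducedFactor hinj hsurj hy,
    fun _ hz => hz.unique hinj hne (isReducedFactorization_reducedFactor hinj hsurj hy)⟩

end Existence

section DigitSet

def digitSet (n m : ℕ) : Finset (Fin n) := {j | m.testBit j}

variable {n : ℕ}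

@[simp] lemma digitSet_zero : digitSet n 0 = ∅ := by
  simp [digitSet]

@[simp] lemma mem_digitSet {m : ℕ} {j : Fin n} : j ∈ digitSet n m ↔ m.testBit j := by
  simp [digitSet]

lemma lt_of_testBit_of_lt_two_pow {m k : ℕ} (hm : m < 2 ^ n) (hk : m.testBit k) : k < n :=
  (Nat.pow_lt_pow_iff_right (by norm_num)).1 ((Nat.ge_two_pow_of_testBit hk).trans_lt hm)

lemma dominates_iff_digitSet_subset {h l : ℕ} (hh : h < 2 ^ n) :
    Dominates h l ↔ digitSet n h ⊆ digitSet n l :=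
  ⟨fun hd j hj => mem_digitSet.2 (hd j (mem_digitSet.1 hj)),
    fun hs k hk =>
      mem_digitSet.1 (hs ((mem_digitSet (j := ⟨k, lt_of_testBit_of_lt_two_pow hh hk⟩)).2 hk))⟩

lemma eq_of_digitSet_eq {h l : ℕ} (hh : h < 2 ^ n) (hl : l < 2 ^ n)
    (heq : digitSet n h = digitSet n l) : h = l := by
  have hhl := (dominates_iff_digitSet_subset hh).2 heq.subset
  have hlh := (dominates_iff_digitSet_subset hl).2 heq.superset
  exact Nat.eq_of_testBit_eq fun k => Bool.eq_iff_iff.2 ⟨hhl k, hlh k⟩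

lemma exists_lt_two_pow_digitSet_eq (S : Finset (Fin n)) : ∃ m < 2 ^ n, digitSet n m = S := by
  have hbij : Bijective fun m : Fin (2 ^ n) => digitSet n m :=
    (Fintype.bijective_iff_injective_and_card _).2
      ⟨fun m m' h => Fin.ext (eq_of_digitSet_eq m.2 m'.2 h), by simp⟩
  obtain ⟨m, hm⟩ := hbij.2 S
  exact ⟨m, m.2, hm⟩

lemma succ_lt_two_pow (i : Fin (2 ^ n - 1)) : (i : ℕ) + 1 < 2 ^ n := by
  have := i.2
  have := n.one_le_two_pow
  omega

lemma digitSet_succ_injective : Injective fun i : Fin (2 ^ n - 1) => digitSet n (i + 1) :=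
  fun i i' h =>
    Fin.ext (Nat.succ_injective (eq_of_digitSet_eq (succ_lt_two_pow i) (succ_lt_two_pow i') h))

lemma digitSet_succ_nonempty (i : Fin (2 ^ n - 1)) : (digitSet n (i + 1)).Nonempty := by
  rw [nonempty_iff_ne_empty]
  intro h
  have := eq_of_digitSet_eq (succ_lt_two_pow i) (Nat.two_pow_pos n) (h.trans digitSet_zero.symm)
  omega

lemma exists_digitSet_succ_eq {S : Finset (Fin n)} (hS : S.Nonempty) :
    ∃ i : Fin (2 ^ n - 1), digitSet n (i + 1) = S := by
  obtain ⟨m, hm, rfl⟩ := exists_lt_two_pow_digitSet_eq S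
  have : m ≠ 0 := by
    rintro rfl
    simp at hS
  exact ⟨⟨m - 1, by omega⟩, by simp only [Nat.sub_add_cancel (Nat.pos_of_ne_zero this)]⟩

lemma isReducedFactorization_digitSet_iff {y : Fin n → ℕ} {z : Fin (2 ^ n - 1) → ℕ} :
    ((∀ i, 0 < z i) ∧ ReducedTuple z ∧ ∀ j : Fin n, y j = ∏ i : Fin (2 ^ n - 1),
        z i ^ (if Nat.testBit ((i : ℕ) + 1) (j : ℕ) then 1 else 0)) ↔
      IsReducedFactorization (fun i : Fin (2 ^ n - 1) => digitSet n (i + 1)) y z := by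
  simp only [ReducedTuple, dominates_iff_digitSet_subset (succ_lt_two_pow _)]
  refine ⟨fun ⟨hpos, hcop, hprod⟩ => ⟨hpos, hcop, fun j => (hprod j).trans ?_⟩,
    fun hz => ⟨hz.pos, hz.coprime, fun j => (hz.prod_eq j).trans ?_⟩⟩ <;>
  simp [prod_filter, pow_ite]

end DigitSet

theorem statement3_general (n : ℕ) (y : Fin n → ℕ) (hy : ∀ j, 0 < y j) :
    (∃! z : Fin (2 ^ n - 1) → ℕ,
      (∀ i, 0 < z i) ∧ ReducedTuple z ∧
        ∀ j : Fin n, y j = ∏ i : Fin (2 ^ n - 1),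
          z i ^ (if Nat.testBit ((i : ℕ) + 1) (j : ℕ) then 1 else 0)) ∧
    ∀ z : Fin (2 ^ n - 1) → ℕ,
      ((∀ i, 0 < z i) ∧ ReducedTuple z ∧
        ∀ j : Fin n, y j = ∏ i : Fin (2 ^ n - 1),
          z i ^ (if Nat.testBit ((i : ℕ) + 1) (j : ℕ) then 1 else 0)) →
      Finset.univ.lcm y = ∏ i : Fin (2 ^ n - 1), z i := by
  simp only [isReducedFactorization_digitSet_iff]
  exact ⟨existsUnique_isReducedFactorization digitSet_succ_injective digitSet_succ_nonempty
      (fun _ => exists_digitSet_succ_eq) hy,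
    fun z hz => hz.lcm_eq_prod digitSet_succ_nonempty⟩

theorem statement3 (n : ℕ) (hn : 1 ≤ n) (y : Fin n → ℕ) (hy : ∀ j, 0 < y j) :
    (∃! z : Fin (2 ^ n - 1) → ℕ,
      (∀ i, 0 < z i) ∧ ReducedTuple z ∧
        ∀ j : Fin n, y j = ∏ i : Fin (2 ^ n - 1),
          z i ^ (if Nat.testBit ((i : ℕ) + 1) (j : ℕ) then 1 else 0)) ∧
    ∀ z : Fin (2 ^ n - 1) → ℕ,
      ((∀ i, 0 < z i) ∧ ReducedTuple z ∧
        ∀ j : Fin n, y j = ∏ i : Fin (2 ^ n - 1),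
          z i ^ (if Nat.testBit ((i : ℕ) + 1) (j : ℕ) then 1 else 0)) →
      Finset.univ.lcm y = ∏ i : Fin (2 ^ n - 1), z i :=
  statement3_general n y hy
end

section
/- For every real B ≥ 1, the cardinality of {(x₁,x₂,x₃,y₁,y₂,y₃) ∈ ℤ³ × ℤ_{>0}³ : gcd(xᵢ,yᵢ) = 1 for all i, x₁y₂y₃ + x₂y₁y₃ + x₃y₁y₂ = 0, and max(|x₁|,y₁)·max(|x₂|,y₂)·max(|x₃|,y₃) ≤ B} equals the cardinality of {(x₁,x₂,x₃,z₁,z₂,z₃,z₄) ∈ ℤ³ × ℤ_{>0}⁴ : gcd(x₁, z₂z₃z₄) = gcd(x₂, z₁z₃z₄) = gcd(x₃, z₁z₂z₄) = 1, gcd(z₁,z₂) = gcd(z₁,z₃) = gcd(z₂,z₃) = 1, max(|x₁|, z₂z₃z₄)·max(|x₂|, z₁z₃z₄)·max(|x₃|, z₁z₂z₄) ≤ B, and x₁z₁ + x₂z₂ + x₃z₃ = 0}. -/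
/-!
Write `y₁ = z₂z₃z₄`, `y₂ = z₁z₃z₄`, `y₃ = z₁z₂z₄` with `z₁, z₂, z₃` pairwise coprime; then the
equation `x₁y₂y₃ + x₂y₁y₃ + x₃y₁y₂ = 0` becomes `z₁z₂z₃z₄² (x₁z₁ + x₂z₂ + x₃z₃) = 0`, and the
coprimality and height conditions are the same on both sides. Conversely, since `gcd(xᵢ, yᵢ) = 1`,
the equation forces `y₁ · gcd(y₂, y₃) ∣ y₂y₃`, i.e. `y₁ ∣ lcm(y₂, y₃)`, and its permutations:
at every prime the largest valuation among `y₁, y₂, y₃` is attained twice.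
This is exactly what is needed for `z₄ = gcd(y₁, y₂, y₃)`, `z₁ = gcd(y₂, y₃) / z₄`, ... to produce
such a factorisation, and these formulas also show that it is unique.
-/

namespace Nat

theorem Coprime.gcd_mul_right_mul_right {a b : ℕ} (h : Coprime a b) (m : ℕ) :
    gcd (a * m) (b * m) = m := by
  rw [Nat.gcd_mul_right, h.gcd_eq_one, one_mul]

theorem gcd_products_of_pairwise_coprime {z₁ z₂ z₃ z₄ : ℕ} (h₁₂ : Coprime z₁ z₂)
    (h₁₃ : Coprime z₁ z₃) (h₂₃ : Coprime z₂ z₃) :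
    gcd (z₁ * z₃ * z₄) (z₁ * z₂ * z₄) = z₁ * z₄ ∧
    gcd (z₂ * z₃ * z₄) (z₁ * z₂ * z₄) = z₂ * z₄ ∧
    gcd (z₂ * z₃ * z₄) (z₁ * z₃ * z₄) = z₃ * z₄ ∧
    gcd (gcd (z₂ * z₃ * z₄) (z₁ * z₃ * z₄)) (z₁ * z₂ * z₄) = z₄ := by
  have h₁ : gcd (z₁ * z₃ * z₄) (z₁ * z₂ * z₄) = z₁ * z₄ := by
    simpa only [mul_comm, mul_left_comm] using h₂₃.symm.gcd_mul_right_mul_right (z₁ * z₄)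
  have h₂ : gcd (z₂ * z₃ * z₄) (z₁ * z₂ * z₄) = z₂ * z₄ := by
    simpa only [mul_comm, mul_left_comm] using h₁₃.symm.gcd_mul_right_mul_right (z₂ * z₄)
  have h₃ : gcd (z₂ * z₃ * z₄) (z₁ * z₃ * z₄) = z₃ * z₄ := by
    simpa only [mul_assoc] using h₁₂.symm.gcd_mul_right_mul_right (z₃ * z₄)
  refine ⟨h₁, h₂, h₃, ?_⟩
  rw [h₃, mul_comm z₃]
  simpa only [mul_comm] using
    (Coprime.mul_right h₁₃.symm h₂₃.symm).gcd_mul_right_mul_right z₄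

theorem eq_of_products_eq_of_pairwise_coprime {z₁ z₂ z₃ z₄ w₁ w₂ w₃ w₄ : ℕ} (hz₄ : z₄ ≠ 0)
    (h₁₂ : Coprime z₁ z₂) (h₁₃ : Coprime z₁ z₃) (h₂₃ : Coprime z₂ z₃)
    (k₁₂ : Coprime w₁ w₂) (k₁₃ : Coprime w₁ w₃) (k₂₃ : Coprime w₂ w₃)
    (e₁ : z₂ * z₃ * z₄ = w₂ * w₃ * w₄) (e₂ : z₁ * z₃ * z₄ = w₁ * w₃ * w₄)
    (e₃ : z₁ * z₂ * z₄ = w₁ * w₂ * w₄) :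
    z₁ = w₁ ∧ z₂ = w₂ ∧ z₃ = w₃ ∧ z₄ = w₄ := by
  obtain ⟨d₁, d₂, d₃, d₄⟩ := gcd_products_of_pairwise_coprime (z₄ := z₄) h₁₂ h₁₃ h₂₃
  obtain ⟨f₁, f₂, f₃, f₄⟩ := gcd_products_of_pairwise_coprime (z₄ := w₄) k₁₂ k₁₃ k₂₃
  simp only [e₁, e₂, e₃] at d₁ d₂ d₃ d₄
  have h₄ : z₄ = w₄ := d₄.symm.trans f₄
  subst h₄
  exact ⟨Nat.eq_of_mul_eq_mul_right (pos_of_ne_zero hz₄) (d₁.symm.trans f₁),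
    Nat.eq_of_mul_eq_mul_right (pos_of_ne_zero hz₄) (d₂.symm.trans f₂),
    Nat.eq_of_mul_eq_mul_right (pos_of_ne_zero hz₄) (d₃.symm.trans f₃), rfl⟩

/-- The hypothesis means `a ∣ lcm b c`: at no prime does `a` have the strictly largest valuation. -/
theorem mul_gcd_gcd_eq_gcd_mul_gcd {a b c : ℕ} (ha : a ≠ 0) (hb : b ≠ 0) (hc : c ≠ 0)
    (h : a * gcd b c ∣ b * c) : a * gcd (gcd a b) c = gcd a b * gcd a c := by
  have hab := gcd_ne_zero_left (n := b) ha
  have hac := gcd_ne_zero_left (n := c) ha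
  have hbc := gcd_ne_zero_left (n := c) hb
  refine eq_of_factorization_eq (mul_ne_zero ha (gcd_ne_zero_right hc))
    (mul_ne_zero hab hac) fun p ↦ ?_
  have hp := (factorization_le_iff_dvd (mul_ne_zero ha hbc) (mul_ne_zero hb hc)).2 h p
  simp only [factorization_mul ha hbc, factorization_mul hb hc, factorization_gcd hb hc,
    Finsupp.add_apply, Finsupp.inf_apply] at hp
  simp only [factorization_mul ha (gcd_ne_zero_right hc), factorization_mul hab hac,
    factorization_gcd hab hc, factorization_gcd ha hb, factorization_gcd ha hc,
    Finsupp.add_apply, Finsupp.inf_apply]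
  omega

theorem exists_pairwise_coprime_of_mul_gcd_dvd {a b c : ℕ} (ha : a ≠ 0) (hb : b ≠ 0)
    (hc : c ≠ 0) (h₁ : a * gcd b c ∣ b * c) (h₂ : b * gcd a c ∣ a * c)
    (h₃ : c * gcd a b ∣ a * b) :
    ∃ z₁ z₂ z₃ z₄ : ℕ, Coprime z₁ z₂ ∧ Coprime z₁ z₃ ∧ Coprime z₂ z₃ ∧
      a = z₂ * z₃ * z₄ ∧ b = z₁ * z₃ * z₄ ∧ c = z₁ * z₂ * z₄ := by
  set g := gcd (gcd a b) c with hg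
  have hg₀ : 0 < g := pos_of_ne_zero (gcd_ne_zero_right hc)
  obtain ⟨z₁, hz₁⟩ : g ∣ gcd b c :=
    dvd_gcd ((gcd_dvd_left _ _).trans (gcd_dvd_right _ _)) (gcd_dvd_right _ _)
  obtain ⟨z₂, hz₂⟩ : g ∣ gcd a c :=
    dvd_gcd ((gcd_dvd_left _ _).trans (gcd_dvd_left _ _)) (gcd_dvd_right _ _)
  obtain ⟨z₃, hz₃⟩ : g ∣ gcd a b := gcd_dvd_left _ _
  have coprime_of_gcd {m n : ℕ} (h : gcd (g * m) (g * n) = g) : Coprime m n :=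
    Nat.eq_of_mul_eq_mul_left hg₀ (by rw [← Nat.gcd_mul_left, h, mul_one])
  have ha' := mul_gcd_gcd_eq_gcd_mul_gcd ha hb hc h₁
  have hb' := mul_gcd_gcd_eq_gcd_mul_gcd hb ha hc h₂
  have hc' := mul_gcd_gcd_eq_gcd_mul_gcd hc ha hb h₃
  rw [gcd_comm b a, ← hg] at hb'
  rw [show gcd (gcd c a) b = g by rw [hg]; ac_rfl, gcd_comm c a, gcd_comm c b] at hc'
  rw [← hg] at ha'
  refine ⟨z₁, z₂, z₃, g, coprime_of_gcd ?_, coprime_of_gcd ?_, coprime_of_gcd ?_, ?_, ?_, ?_⟩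
  · rw [← hz₁, ← hz₂, hg]; grind
  · rw [← hz₁, ← hz₃, hg]; grind
  · rw [← hz₂, ← hz₃, hg]; grind
  · exact Nat.eq_of_mul_eq_mul_right hg₀ (by rw [ha', hz₃, hz₂]; ring)
  · exact Nat.eq_of_mul_eq_mul_right hg₀ (by rw [hb', hz₃, hz₁]; ring)
  · exact Nat.eq_of_mul_eq_mul_right hg₀ (by rw [hc', hz₂, hz₁]; ring)

end Nat

theorem Int.mul_gcd_dvd_mul_of_eq_zero {x₁ x₂ x₃ y₁ y₂ y₃ : ℤ} (hy₃ : y₃ ≠ 0)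
    (hx₁ : Int.gcd x₁ y₁ = 1)
    (h : x₁ * y₂ * y₃ + x₂ * y₁ * y₃ + x₃ * y₁ * y₂ = 0) : y₁ * Int.gcd y₂ y₃ ∣ y₂ * y₃ := by
  set d : ℤ := ↑(Int.gcd y₂ y₃)
  have hd : d ≠ 0 := by simp [d, hy₃]
  obtain ⟨v, hv⟩ : d ∣ y₃ := Int.gcd_dvd_right y₂ y₃
  obtain ⟨t, ht⟩ : d ∣ x₂ * y₃ + x₃ * y₂ :=
    dvd_add (dvd_mul_of_dvd_right (Int.gcd_dvd_right _ _))
      (dvd_mul_of_dvd_right (Int.gcd_dvd_left _ _))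
  have hx : x₁ * (y₂ * v) = y₁ * -t :=
    mul_left_cancel₀ hd (by linear_combination h - x₁ * y₂ * hv - y₁ * ht)
  have hy : y₁ ∣ y₂ * v :=
    (Int.isCoprime_iff_gcd_eq_one.2 hx₁).symm.dvd_of_dvd_mul_left ⟨-t, hx⟩
  calc y₁ * d ∣ y₂ * v * d := mul_dvd_mul_right hy d
    _ = y₂ * y₃ := by rw [hv]; ring

theorem Int.exists_pairwise_coprime_of_eq_zero {x₁ x₂ x₃ y₁ y₂ y₃ : ℤ}
    (h₁ : 0 < y₁) (h₂ : 0 < y₂) (h₃ : 0 < y₃)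
    (g₁ : Int.gcd x₁ y₁ = 1) (g₂ : Int.gcd x₂ y₂ = 1) (g₃ : Int.gcd x₃ y₃ = 1)
    (h : x₁ * y₂ * y₃ + x₂ * y₁ * y₃ + x₃ * y₁ * y₂ = 0) :
    ∃ z₁ z₂ z₃ z₄ : ℤ, 0 < z₁ ∧ 0 < z₂ ∧ 0 < z₃ ∧ 0 < z₄ ∧
      Int.gcd z₁ z₂ = 1 ∧ Int.gcd z₁ z₃ = 1 ∧ Int.gcd z₂ z₃ = 1 ∧
      y₁ = z₂ * z₃ * z₄ ∧ y₂ = z₁ * z₃ * z₄ ∧ y₃ = z₁ * z₂ * z₄ := by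
  have d₁ := mul_gcd_dvd_mul_of_eq_zero h₃.ne' g₁ h
  have d₂ := mul_gcd_dvd_mul_of_eq_zero (x₂ := x₁) (x₃ := x₃) (y₂ := y₁) h₃.ne' g₂
    (by linear_combination h)
  have d₃ := mul_gcd_dvd_mul_of_eq_zero (x₂ := x₁) (x₃ := x₂) (y₂ := y₁) (y₃ := y₂) h₂.ne' g₃
    (by linear_combination h)
  lift y₁ to ℕ using h₁.le
  lift y₂ to ℕ using h₂.le
  lift y₃ to ℕ using h₃.le
  simp only [Int.gcd_natCast_natCast] at d₁ d₂ d₃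
  norm_cast at h₁ h₂ h₃ d₁ d₂ d₃
  obtain ⟨z₁, z₂, z₃, z₄, c₁₂, c₁₃, c₂₃, rfl, rfl, rfl⟩ :=
    Nat.exists_pairwise_coprime_of_mul_gcd_dvd h₁.ne' h₂.ne' h₃.ne' d₁ d₂ d₃
  simp only [CanonicallyOrderedAdd.mul_pos] at h₁ h₂
  refine ⟨z₁, z₂, z₃, z₄, by omega, by omega, by omega, by omega, by simpa, by simpa, by simpa,
    by push_cast; rfl, by push_cast; rfl, by push_cast; rfl⟩

theorem Int.eq_of_products_eq_of_pairwise_coprime {z₁ z₂ z₃ z₄ w₁ w₂ w₃ w₄ : ℤ}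
    (hz₁ : 0 ≤ z₁) (hz₂ : 0 ≤ z₂) (hz₃ : 0 ≤ z₃) (hz₄ : 0 < z₄)
    (hw₁ : 0 ≤ w₁) (hw₂ : 0 ≤ w₂) (hw₃ : 0 ≤ w₃) (hw₄ : 0 ≤ w₄)
    (h₁₂ : Int.gcd z₁ z₂ = 1) (h₁₃ : Int.gcd z₁ z₃ = 1) (h₂₃ : Int.gcd z₂ z₃ = 1)
    (k₁₂ : Int.gcd w₁ w₂ = 1) (k₁₃ : Int.gcd w₁ w₃ = 1) (k₂₃ : Int.gcd w₂ w₃ = 1)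
    (e₁ : z₂ * z₃ * z₄ = w₂ * w₃ * w₄) (e₂ : z₁ * z₃ * z₄ = w₁ * w₃ * w₄)
    (e₃ : z₁ * z₂ * z₄ = w₁ * w₂ * w₄) :
    z₁ = w₁ ∧ z₂ = w₂ ∧ z₃ = w₃ ∧ z₄ = w₄ := by
  lift z₁ to ℕ using hz₁
  lift z₂ to ℕ using hz₂
  lift z₃ to ℕ using hz₃
  lift z₄ to ℕ using hz₄.le
  lift w₁ to ℕ using hw₁
  lift w₂ to ℕ using hw₂
  lift w₃ to ℕ using hw₃
  lift w₄ to ℕ using hw₄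
  simp only [Int.gcd_natCast_natCast] at h₁₂ h₁₃ h₂₃ k₁₂ k₁₃ k₂₃
  norm_cast at hz₄ e₁ e₂ e₃ ⊢
  exact Nat.eq_of_products_eq_of_pairwise_coprime hz₄.ne' h₁₂ h₁₃ h₂₃ k₁₂ k₁₃ k₂₃ e₁ e₂ e₃

theorem hypersurface_eq_zero_iff_torsor_eq_zero {x₁ x₂ x₃ z₁ z₂ z₃ z₄ : ℤ}
    (h₁ : z₁ ≠ 0) (h₂ : z₂ ≠ 0) (h₃ : z₃ ≠ 0) (h₄ : z₄ ≠ 0) :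
    x₁ * (z₁ * z₃ * z₄) * (z₁ * z₂ * z₄) + x₂ * (z₂ * z₃ * z₄) * (z₁ * z₂ * z₄) +
        x₃ * (z₂ * z₃ * z₄) * (z₁ * z₃ * z₄) = 0 ↔
      x₁ * z₁ + x₂ * z₂ + x₃ * z₃ = 0 := by
  rw [show x₁ * (z₁ * z₃ * z₄) * (z₁ * z₂ * z₄) + x₂ * (z₂ * z₃ * z₄) * (z₁ * z₂ * z₄) +
      x₃ * (z₂ * z₃ * z₄) * (z₁ * z₃ * z₄) =
      z₁ * z₂ * z₃ * z₄ ^ 2 * (x₁ * z₁ + x₂ * z₂ + x₃ * z₃) by ring]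
  simp [h₁, h₂, h₃, h₄]

def torsorMap : (ℤ × ℤ × ℤ) × (ℤ × ℤ × ℤ × ℤ) → (ℤ × ℤ × ℤ) × (ℤ × ℤ × ℤ) :=
  fun ⟨x, z₁, z₂, z₃, z₄⟩ ↦ (x, z₂ * z₃ * z₄, z₁ * z₃ * z₄, z₁ * z₂ * z₄)

theorem statement4_general (B : ℝ) :
    Nat.card {v : (ℤ × ℤ × ℤ) × (ℤ × ℤ × ℤ) |
        0 < v.2.1 ∧ 0 < v.2.2.1 ∧ 0 < v.2.2.2 ∧
        Int.gcd v.1.1 v.2.1 = 1 ∧ Int.gcd v.1.2.1 v.2.2.1 = 1 ∧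
        Int.gcd v.1.2.2 v.2.2.2 = 1 ∧
        v.1.1 * v.2.2.1 * v.2.2.2 + v.1.2.1 * v.2.1 * v.2.2.2 +
          v.1.2.2 * v.2.1 * v.2.2.1 = 0 ∧
        max |(v.1.1 : ℝ)| (v.2.1 : ℝ) * max |(v.1.2.1 : ℝ)| (v.2.2.1 : ℝ) *
          max |(v.1.2.2 : ℝ)| (v.2.2.2 : ℝ) ≤ B} =
    Nat.card {w : (ℤ × ℤ × ℤ) × (ℤ × ℤ × ℤ × ℤ) |
        0 < w.2.1 ∧ 0 < w.2.2.1 ∧ 0 < w.2.2.2.1 ∧ 0 < w.2.2.2.2 ∧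
        Int.gcd w.1.1 (w.2.2.1 * w.2.2.2.1 * w.2.2.2.2) = 1 ∧
        Int.gcd w.1.2.1 (w.2.1 * w.2.2.2.1 * w.2.2.2.2) = 1 ∧
        Int.gcd w.1.2.2 (w.2.1 * w.2.2.1 * w.2.2.2.2) = 1 ∧
        Int.gcd w.2.1 w.2.2.1 = 1 ∧ Int.gcd w.2.1 w.2.2.2.1 = 1 ∧
        Int.gcd w.2.2.1 w.2.2.2.1 = 1 ∧
        max |(w.1.1 : ℝ)| ((w.2.2.1 : ℝ) * (w.2.2.2.1 : ℝ) * (w.2.2.2.2 : ℝ)) *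
          max |(w.1.2.1 : ℝ)| ((w.2.1 : ℝ) * (w.2.2.2.1 : ℝ) * (w.2.2.2.2 : ℝ)) *
          max |(w.1.2.2 : ℝ)| ((w.2.1 : ℝ) * (w.2.2.1 : ℝ) * (w.2.2.2.2 : ℝ)) ≤ B ∧
        w.1.1 * w.2.1 + w.1.2.1 * w.2.2.1 + w.1.2.2 * w.2.2.2.1 = 0} := by
  refine (Nat.card_congr (Set.BijOn.equiv torsorMap ⟨?_, ?_, ?_⟩)).symm
  · rintro ⟨x, z₁, z₂, z₃, z₄⟩ ⟨p₁, p₂, p₃, p₄, g₁, g₂, g₃, -, -, -, hB, h⟩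
    simp only [torsorMap]
    refine ⟨by positivity, by positivity, by positivity, g₁, g₂, g₃,
      (hypersurface_eq_zero_iff_torsor_eq_zero p₁.ne' p₂.ne' p₃.ne' p₄.ne').2 h, ?_⟩
    push_cast
    exact hB
  · rintro ⟨x, z₁, z₂, z₃, z₄⟩ ⟨p₁, p₂, p₃, p₄, -, -, -, c₁₂, c₁₃, c₂₃, -⟩
      ⟨x', w₁, w₂, w₃, w₄⟩ ⟨q₁, q₂, q₃, q₄, -, -, -, d₁₂, d₁₃, d₂₃, -⟩ he
    simp only [torsorMap, Prod.mk.injEq] at he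
    obtain ⟨rfl, e₁, e₂, e₃⟩ := he
    obtain ⟨rfl, rfl, rfl, rfl⟩ := Int.eq_of_products_eq_of_pairwise_coprime p₁.le p₂.le p₃.le p₄
      q₁.le q₂.le q₃.le q₄.le c₁₂ c₁₃ c₂₃ d₁₂ d₁₃ d₂₃ e₁ e₂ e₃
    rfl
  · rintro ⟨⟨x₁, x₂, x₃⟩, y₁, y₂, y₃⟩ ⟨h₁, h₂, h₃, g₁, g₂, g₃, h, hB⟩
    obtain ⟨z₁, z₂, z₃, z₄, p₁, p₂, p₃, p₄, c₁₂, c₁₃, c₂₃, rfl, rfl, rfl⟩ :=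
      Int.exists_pairwise_coprime_of_eq_zero h₁ h₂ h₃ g₁ g₂ g₃ h
    refine ⟨((x₁, x₂, x₃), (z₁, z₂, z₃, z₄)), ⟨p₁, p₂, p₃, p₄, g₁, g₂, g₃, c₁₂, c₁₃, c₂₃, ?_,
      (hypersurface_eq_zero_iff_torsor_eq_zero p₁.ne' p₂.ne' p₃.ne' p₄.ne').1 h⟩, rfl⟩
    push_cast at hB
    exact hB

theorem statement4 (B : ℝ) (hB : 1 ≤ B) :
    Nat.card {v : (ℤ × ℤ × ℤ) × (ℤ × ℤ × ℤ) |
        0 < v.2.1 ∧ 0 < v.2.2.1 ∧ 0 < v.2.2.2 ∧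
        Int.gcd v.1.1 v.2.1 = 1 ∧ Int.gcd v.1.2.1 v.2.2.1 = 1 ∧
        Int.gcd v.1.2.2 v.2.2.2 = 1 ∧
        v.1.1 * v.2.2.1 * v.2.2.2 + v.1.2.1 * v.2.1 * v.2.2.2 +
          v.1.2.2 * v.2.1 * v.2.2.1 = 0 ∧
        max |(v.1.1 : ℝ)| (v.2.1 : ℝ) * max |(v.1.2.1 : ℝ)| (v.2.2.1 : ℝ) *
          max |(v.1.2.2 : ℝ)| (v.2.2.2 : ℝ) ≤ B} =
    Nat.card {w : (ℤ × ℤ × ℤ) × (ℤ × ℤ × ℤ × ℤ) |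
        0 < w.2.1 ∧ 0 < w.2.2.1 ∧ 0 < w.2.2.2.1 ∧ 0 < w.2.2.2.2 ∧
        Int.gcd w.1.1 (w.2.2.1 * w.2.2.2.1 * w.2.2.2.2) = 1 ∧
        Int.gcd w.1.2.1 (w.2.1 * w.2.2.2.1 * w.2.2.2.2) = 1 ∧
        Int.gcd w.1.2.2 (w.2.1 * w.2.2.1 * w.2.2.2.2) = 1 ∧
        Int.gcd w.2.1 w.2.2.1 = 1 ∧ Int.gcd w.2.1 w.2.2.2.1 = 1 ∧
        Int.gcd w.2.2.1 w.2.2.2.1 = 1 ∧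
        max |(w.1.1 : ℝ)| ((w.2.2.1 : ℝ) * (w.2.2.2.1 : ℝ) * (w.2.2.2.2 : ℝ)) *
          max |(w.1.2.1 : ℝ)| ((w.2.1 : ℝ) * (w.2.2.2.1 : ℝ) * (w.2.2.2.2 : ℝ)) *
          max |(w.1.2.2 : ℝ)| ((w.2.1 : ℝ) * (w.2.2.1 : ℝ) * (w.2.2.2.2 : ℝ)) ≤ B ∧
        w.1.1 * w.2.1 + w.1.2.1 * w.2.2.1 + w.1.2.2 * w.2.2.2.1 = 0} :=
  statement4_general B
end

section
/- For every real B ≥ 1, the cardinality of {(x₁,x₂,x₃,y₁,y₂,y₃) ∈ (ℤ∖{0})⁶ : gcd(x₁,x₂,x₃) = 1, gcd(y₁,y₂,y₃) = 1, x₁y₂y₃ + x₂y₁y₃ + x₃y₁y₂ = 0, and (max_{1≤i≤3}|xᵢ|)²·(max_{1≤i≤3}|yᵢ|) ≤ B} equals 8 times the cardinality of {(x′₁,x′₂,x′₃,z₁,…,z₆) ∈ (ℤ∖{0})³ × ℤ_{>0}⁶ : (max{z₁|x′₁|, z₂|x′₂|, z₄|x′₃|})²·max{z₁z₃z₅, z₂z₃z₆,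 z₄z₅z₆} ≤ B, x′₁z₆ + x′₂z₅ + x′₃z₃ = 0, gcd(z₁x′₁, z₂x′₂, z₄x′₃) = 1, and (z₁,…,z₆) is reduced}. -/
/-- A 6-tuple `(z₁, …, z₆)` (indexed by `Fin 6`, with `i` corresponding to the
integer `i + 1 ∈ {1, …, 6}`) is reduced if `gcd(z_h, z_ℓ) = 1` whenever `h` and
`ℓ` are incomparable for domination. -/
def Reduced6 (z : Fin 6 → ℤ) : Prop :=
  ∀ h l : Fin 6, ¬ Dominates ((h : ℕ) + 1) ((l : ℕ) + 1) →
    ¬ Dominates ((l : ℕ) + 1) ((h : ℕ) + 1) → Int.gcd (z h) (z l) = 1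

namespace St5

/-- the LHS predicate -/
def PP (B : ℝ) (v : (ℤ × ℤ × ℤ) × (ℤ × ℤ × ℤ)) : Prop :=
  v.1.1 ≠ 0 ∧ v.1.2.1 ≠ 0 ∧ v.1.2.2 ≠ 0 ∧
  v.2.1 ≠ 0 ∧ v.2.2.1 ≠ 0 ∧ v.2.2.2 ≠ 0 ∧
  Int.gcd v.1.1 (Int.gcd v.1.2.1 v.1.2.2) = 1 ∧
  Int.gcd v.2.1 (Int.gcd v.2.2.1 v.2.2.2) = 1 ∧
  v.1.1 * v.2.2.1 * v.2.2.2 + v.1.2.1 * v.2.1 * v.2.2.2 +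
    v.1.2.2 * v.2.1 * v.2.2.1 = 0 ∧
  (max |(v.1.1 : ℝ)| (max |(v.1.2.1 : ℝ)| |(v.1.2.2 : ℝ)|)) ^ 2 *
    max |(v.2.1 : ℝ)| (max |(v.2.2.1 : ℝ)| |(v.2.2.2 : ℝ)|) ≤ B

/-- the RHS predicate -/
def QQ (B : ℝ) (w : (ℤ × ℤ × ℤ) × (Fin 6 → ℤ)) : Prop :=
  w.1.1 ≠ 0 ∧ w.1.2.1 ≠ 0 ∧ w.1.2.2 ≠ 0 ∧ (∀ i, 0 < w.2 i) ∧
  (max ((w.2 0 : ℝ) * |(w.1.1 : ℝ)|)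
      (max ((w.2 1 : ℝ) * |(w.1.2.1 : ℝ)|) ((w.2 3 : ℝ) * |(w.1.2.2 : ℝ)|))) ^ 2 *
    max ((w.2 0 : ℝ) * (w.2 2 : ℝ) * (w.2 4 : ℝ))
      (max ((w.2 1 : ℝ) * (w.2 2 : ℝ) * (w.2 5 : ℝ))
        ((w.2 3 : ℝ) * (w.2 4 : ℝ) * (w.2 5 : ℝ))) ≤ B ∧
  w.1.1 * w.2 5 + w.1.2.1 * w.2 4 + w.1.2.2 * w.2 2 = 0 ∧
  Int.gcd (w.2 0 * w.1.1) (Int.gcd (w.2 1 * w.1.2.1) (w.2 3 * w.1.2.2)) = 1 ∧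
  Reduced6 w.2

def sg (b : Bool) : ℤ := cond b 1 (-1)

lemma sg_ne_zero (b : Bool) : sg b ≠ 0 := by cases b <;> simp [sg]

lemma sg_mul_sg (b : Bool) : sg b * sg b = 1 := by cases b <;> simp [sg]

lemma natAbs_sg_mul (b : Bool) (a : ℤ) : (sg b * a).natAbs = a.natAbs := by
  cases b <;> simp [sg]

lemma abs_cast_sg_mul (b : Bool) (a : ℤ) : |((sg b * a : ℤ) : ℝ)| = |(a : ℝ)| := by
  cases b <;> push_cast [sg] <;> simp

lemma sg_natAbs (y : ℤ) : sg (decide (0 < y)) * (y.natAbs : ℤ) = y := by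
  by_cases h : 0 < y
  · rw [show decide (0 < y) = true by simpa using h]
    simp only [sg, cond_true, one_mul]
    omega
  · rw [show decide (0 < y) = false by simpa using h]
    simp only [sg, cond_false, neg_mul, one_mul]
    omega

lemma sg_eq_of {b b' : Bool} {P P' : ℤ} (hP : 0 < P) (hP' : 0 < P')
    (h : sg b * P = sg b' * P') : b = b' ∧ P = P' := by
  cases b <;> cases b' <;> simp [sg] at h
  · exact ⟨rfl, h⟩
  · exfalso; omega
  · exfalso; omega
  · exact ⟨rfl, h⟩

lemma gcd_sg_left (b : Bool) (a c : ℤ) : Int.gcd (sg b * a) c = Int.gcd a c := by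
  unfold Int.gcd; rw [natAbs_sg_mul]

lemma gcd_sg_right (b : Bool) (a c : ℤ) : Int.gcd c (sg b * a) = Int.gcd c a := by
  unfold Int.gcd; rw [natAbs_sg_mul]

lemma dominates_iff (h l : ℕ) : Dominates h l ↔ h ||| l = l := by
  constructor
  · intro hd
    apply Nat.eq_of_testBit_eq
    intro j
    rw [Nat.testBit_or]
    cases hb : h.testBit j
    · simp
    · simp [hd j hb]
  · intro he j hj
    have := congrArg (fun n => Nat.testBit n j) he
    simp only [Nat.testBit_or, hj, Bool.true_or] at this
    exact this.symm

structure Red6 (z1 z2 z3 z4 z5 z6 : ℕ) : Prop where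
  c12 : Nat.Coprime z1 z2
  c14 : Nat.Coprime z1 z4
  c16 : Nat.Coprime z1 z6
  c24 : Nat.Coprime z2 z4
  c25 : Nat.Coprime z2 z5
  c34 : Nat.Coprime z3 z4
  c35 : Nat.Coprime z3 z5
  c36 : Nat.Coprime z3 z6
  c56 : Nat.Coprime z5 z6

variable {z1 z2 z3 z4 z5 z6 : ℕ}

lemma gcdP12 (r : Red6 z1 z2 z3 z4 z5 z6) :
    Nat.gcd (z1*z3*z5) (z2*z3*z6) = z3 := by
  have h : Nat.Coprime (z1*z5) (z2*z6) :=
    Nat.Coprime.mul (r.c12.mul_right r.c16) (r.c25.symm.mul_right r.c56)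
  calc Nat.gcd (z1*z3*z5) (z2*z3*z6) = Nat.gcd (z3*(z1*z5)) (z3*(z2*z6)) := by ring_nf
    _ = z3 * Nat.gcd (z1*z5) (z2*z6) := Nat.gcd_mul_left _ _ _
    _ = z3 := by rw [h]; ring

lemma gcdP13 (r : Red6 z1 z2 z3 z4 z5 z6) :
    Nat.gcd (z1*z3*z5) (z4*z5*z6) = z5 := by
  have h : Nat.Coprime (z1*z3) (z4*z6) :=
    Nat.Coprime.mul (r.c14.mul_right r.c16) (r.c34.mul_right r.c36)
  calc Nat.gcd (z1*z3*z5) (z4*z5*z6) = Nat.gcd (z5*(z1*z3)) (z5*(z4*z6)) := by ring_nf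
    _ = z5 * Nat.gcd (z1*z3) (z4*z6) := Nat.gcd_mul_left _ _ _
    _ = z5 := by rw [h]; ring

lemma gcdP23 (r : Red6 z1 z2 z3 z4 z5 z6) :
    Nat.gcd (z2*z3*z6) (z4*z5*z6) = z6 := by
  have h : Nat.Coprime (z2*z3) (z4*z5) :=
    Nat.Coprime.mul (r.c24.mul_right r.c25) (r.c34.mul_right r.c35)
  calc Nat.gcd (z2*z3*z6) (z4*z5*z6) = Nat.gcd (z6*(z2*z3)) (z6*(z4*z5)) := by ring_nf
    _ = z6 * Nat.gcd (z2*z3) (z4*z5) := Nat.gcd_mul_left _ _ _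
    _ = z6 := by rw [h]; ring

lemma gcdP (r : Red6 z1 z2 z3 z4 z5 z6) :
    Nat.gcd (z1*z3*z5) (Nat.gcd (z2*z3*z6) (z4*z5*z6)) = 1 := by
  rw [gcdP23 r]
  exact Nat.Coprime.mul (r.c16.mul r.c36) r.c56

lemma unique6 {w1 w2 w3 w4 w5 w6 : ℕ}
    (r : Red6 z1 z2 z3 z4 z5 z6) (r' : Red6 w1 w2 w3 w4 w5 w6)
    (hp3 : 0 < z3) (hp5 : 0 < z5) (hp6 : 0 < z6)
    (e1 : z1*z3*z5 = w1*w3*w5) (e2 : z2*z3*z6 = w2*w3*w6) (e3 : z4*z5*z6 = w4*w5*w6) :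
    z1 = w1 ∧ z2 = w2 ∧ z3 = w3 ∧ z4 = w4 ∧ z5 = w5 ∧ z6 = w6 := by
  have h3 : z3 = w3 := by rw [← gcdP12 r, ← gcdP12 r', e1, e2]
  have h5 : z5 = w5 := by rw [← gcdP13 r, ← gcdP13 r', e1, e3]
  have h6 : z6 = w6 := by rw [← gcdP23 r, ← gcdP23 r', e2, e3]
  subst h3 h5 h6
  have h1 : z1 = w1 := by
    have : z1 * (z3*z5) = w1 * (z3*z5) := by linarith [e1]
    exact Nat.eq_of_mul_eq_mul_right (Nat.mul_pos hp3 hp5) this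
  have h2 : z2 = w2 := by
    have : z2 * (z3*z6) = w2 * (z3*z6) := by linarith [e2]
    exact Nat.eq_of_mul_eq_mul_right (Nat.mul_pos hp3 hp6) this
  have h4 : z4 = w4 := by
    have : z4 * (z5*z6) = w4 * (z5*z6) := by linarith [e3]
    exact Nat.eq_of_mul_eq_mul_right (Nat.mul_pos hp5 hp6) this
  exact ⟨h1, h2, rfl, h4, rfl, rfl⟩

lemma construct6 (n1 n2 n3 : ℕ) (h1 : 0 < n1) (h2 : 0 < n2) (h3 : 0 < n3)
    (hg : Nat.gcd n1 (Nat.gcd n2 n3) = 1) :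
    ∃ z1 z2 z3 z4 z5 z6 : ℕ, Red6 z1 z2 z3 z4 z5 z6 ∧
      0 < z1 ∧ 0 < z2 ∧ 0 < z3 ∧ 0 < z4 ∧ 0 < z5 ∧ 0 < z6 ∧
      z1*z3*z5 = n1 ∧ z2*z3*z6 = n2 ∧ z4*z5*z6 = n3 := by
  set z3 := Nat.gcd n1 n2 with hz3
  set z5 := Nat.gcd n1 n3 with hz5
  set z6 := Nat.gcd n2 n3 with hz6
  have p3 : 0 < z3 := Nat.gcd_pos_of_pos_left _ h1
  have p5 : 0 < z5 := Nat.gcd_pos_of_pos_left _ h1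
  have p6 : 0 < z6 := Nat.gcd_pos_of_pos_left _ h2
  have c35 : Nat.Coprime z3 z5 := by
    have : Nat.gcd z3 z5 ∣ Nat.gcd n1 (Nat.gcd n2 n3) :=
      Nat.dvd_gcd ((Nat.gcd_dvd_left z3 z5).trans (Nat.gcd_dvd_left n1 n2))
        (Nat.dvd_gcd ((Nat.gcd_dvd_left z3 z5).trans (Nat.gcd_dvd_right n1 n2))
          ((Nat.gcd_dvd_right z3 z5).trans (Nat.gcd_dvd_right n1 n3)))
    exact Nat.dvd_one.mp (hg ▸ this)
  have c36 : Nat.Coprime z3 z6 := by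
    have : Nat.gcd z3 z6 ∣ Nat.gcd n1 (Nat.gcd n2 n3) :=
      Nat.dvd_gcd ((Nat.gcd_dvd_left z3 z6).trans (Nat.gcd_dvd_left n1 n2))
        (Nat.dvd_gcd ((Nat.gcd_dvd_left z3 z6).trans (Nat.gcd_dvd_right n1 n2))
          ((Nat.gcd_dvd_right z3 z6).trans (Nat.gcd_dvd_right n2 n3)))
    exact Nat.dvd_one.mp (hg ▸ this)
  have c56 : Nat.Coprime z5 z6 := by
    have : Nat.gcd z5 z6 ∣ Nat.gcd n1 (Nat.gcd n2 n3) :=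
      Nat.dvd_gcd ((Nat.gcd_dvd_left z5 z6).trans (Nat.gcd_dvd_left n1 n3))
        (Nat.dvd_gcd ((Nat.gcd_dvd_right z5 z6).trans (Nat.gcd_dvd_left n2 n3))
          ((Nat.gcd_dvd_left z5 z6).trans (Nat.gcd_dvd_right n1 n3)))
    exact Nat.dvd_one.mp (hg ▸ this)
  have d1 : z3 * z5 ∣ n1 :=
    c35.mul_dvd_of_dvd_of_dvd (Nat.gcd_dvd_left n1 n2) (Nat.gcd_dvd_left n1 n3)
  have d2 : z3 * z6 ∣ n2 :=
    c36.mul_dvd_of_dvd_of_dvd (Nat.gcd_dvd_right n1 n2) (Nat.gcd_dvd_left n2 n3)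
  have d3 : z5 * z6 ∣ n3 :=
    c56.mul_dvd_of_dvd_of_dvd (Nat.gcd_dvd_right n1 n3) (Nat.gcd_dvd_right n2 n3)
  set z1 := n1 / (z3 * z5) with hz1
  set z2 := n2 / (z3 * z6) with hz2
  set z4 := n3 / (z5 * z6) with hz4
  have e1 : z1 * (z3 * z5) = n1 := Nat.div_mul_cancel d1
  have e2 : z2 * (z3 * z6) = n2 := Nat.div_mul_cancel d2
  have e3 : z4 * (z5 * z6) = n3 := Nat.div_mul_cancel d3
  have p1 : 0 < z1 := by
    rcases Nat.eq_zero_or_pos z1 with h | h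
    · exfalso; rw [h, zero_mul] at e1; omega
    · exact h
  have p2 : 0 < z2 := by
    rcases Nat.eq_zero_or_pos z2 with h | h
    · exfalso; rw [h, zero_mul] at e2; omega
    · exact h
  have p4 : 0 < z4 := by
    rcases Nat.eq_zero_or_pos z4 with h | h
    · exfalso; rw [h, zero_mul] at e3; omega
    · exact h
  have f1 : n1 / z3 = z1 * z5 := by
    rw [show n1 = z1*z5*z3 by rw [← e1]; ring]; exact Nat.mul_div_cancel _ p3
  have f1' : n1 / z5 = z1 * z3 := by
    rw [show n1 = z1*z3*z5 by rw [← e1]; ring]; exact Nat.mul_div_cancel _ p5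
  have f2 : n2 / z3 = z2 * z6 := by
    rw [show n2 = z2*z6*z3 by rw [← e2]; ring]; exact Nat.mul_div_cancel _ p3
  have f2' : n2 / z6 = z2 * z3 := by
    rw [show n2 = z2*z3*z6 by rw [← e2]; ring]; exact Nat.mul_div_cancel _ p6
  have f3 : n3 / z5 = z4 * z6 := by
    rw [show n3 = z4*z6*z5 by rw [← e3]; ring]; exact Nat.mul_div_cancel _ p5
  have f3' : n3 / z6 = z4 * z5 := by
    rw [show n3 = z4*z5*z6 by rw [← e3]; ring]; exact Nat.mul_div_cancel _ p6
  have A : Nat.Coprime (z1*z5) (z2*z6) := by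
    have := Nat.coprime_div_gcd_div_gcd (m := n1) (n := n2) p3
    rwa [← hz3, f1, f2] at this
  have Bc : Nat.Coprime (z1*z3) (z4*z6) := by
    have := Nat.coprime_div_gcd_div_gcd (m := n1) (n := n3) p5
    rwa [← hz5, f1', f3] at this
  have Cc : Nat.Coprime (z2*z3) (z4*z5) := by
    have := Nat.coprime_div_gcd_div_gcd (m := n2) (n := n3) p6
    rwa [← hz6, f2', f3'] at this
  refine ⟨z1, z2, z3, z4, z5, z6, ⟨?_, ?_, ?_, ?_, ?_, ?_, ?_, ?_, ?_⟩,
    p1, p2, p3, p4, p5, p6, by rw [← e1]; ring, by rw [← e2]; ring, by rw [← e3]; ring⟩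
  · exact Nat.Coprime.coprime_dvd_left (dvd_mul_right z1 z5)
      (Nat.Coprime.coprime_dvd_right (dvd_mul_right z2 z6) A)
  · exact Nat.Coprime.coprime_dvd_left (dvd_mul_right z1 z3)
      (Nat.Coprime.coprime_dvd_right (dvd_mul_right z4 z6) Bc)
  · exact Nat.Coprime.coprime_dvd_left (dvd_mul_right z1 z5)
      (Nat.Coprime.coprime_dvd_right (dvd_mul_left z6 z2) A)
  · exact Nat.Coprime.coprime_dvd_left (dvd_mul_right z2 z3)
      (Nat.Coprime.coprime_dvd_right (dvd_mul_right z4 z5) Cc)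
  · exact Nat.Coprime.coprime_dvd_left (dvd_mul_right z2 z3)
      (Nat.Coprime.coprime_dvd_right (dvd_mul_left z5 z4) Cc)
  · exact Nat.Coprime.coprime_dvd_left (dvd_mul_left z3 z1)
      (Nat.Coprime.coprime_dvd_right (dvd_mul_right z4 z6) Bc)
  · exact Nat.Coprime.coprime_dvd_left (dvd_mul_left z3 z2)
      (Nat.Coprime.coprime_dvd_right (dvd_mul_left z5 z4) Cc)
  · exact Nat.Coprime.coprime_dvd_left (dvd_mul_left z3 z1)
      (Nat.Coprime.coprime_dvd_right (dvd_mul_left z6 z4) Bc)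
  · exact Nat.Coprime.coprime_dvd_left (dvd_mul_left z5 z1)
      (Nat.Coprime.coprime_dvd_right (dvd_mul_left z6 z2) A)

lemma reduced6_of_red6 {a1 a2 a3 a4 a5 a6 : ℕ} (r : Red6 a1 a2 a3 a4 a5 a6) :
    Reduced6 (fun i => (![a1,a2,a3,a4,a5,a6] i : ℤ)) := by
  intro h l h1 h2
  rw [dominates_iff] at h1 h2
  fin_cases h <;> fin_cases l <;>
    simp_all [Int.gcd_natCast_natCast, Nat.Coprime] <;>
    first
      | exact r.c12 | exact r.c14 | exact r.c16 | exact r.c24 | exact r.c25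
      | exact r.c34 | exact r.c35 | exact r.c36 | exact r.c56
      | exact Nat.Coprime.symm r.c12 | exact Nat.Coprime.symm r.c14
      | exact Nat.Coprime.symm r.c16 | exact Nat.Coprime.symm r.c24
      | exact Nat.Coprime.symm r.c25 | exact Nat.Coprime.symm r.c34
      | exact Nat.Coprime.symm r.c35 | exact Nat.Coprime.symm r.c36
      | exact Nat.Coprime.symm r.c56

lemma red6_of_reduced6 (z : Fin 6 → ℤ) (hr : Reduced6 z) :
    Red6 (z 0).natAbs (z 1).natAbs (z 2).natAbs (z 3).natAbs (z 4).natAbs (z 5).natAbs := by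
  have key : ∀ h l : Fin 6, ¬ ((h:ℕ)+1) ||| ((l:ℕ)+1) = ((l:ℕ)+1) →
      ¬ ((l:ℕ)+1) ||| ((h:ℕ)+1) = ((h:ℕ)+1) → Nat.Coprime (z h).natAbs (z l).natAbs := by
    intro h l h1 h2
    exact hr h l (fun hd => h1 ((dominates_iff _ _).mp hd))
      (fun hd => h2 ((dominates_iff _ _).mp hd))
  exact ⟨key 0 1 (by decide) (by decide), key 0 3 (by decide) (by decide),
    key 0 5 (by decide) (by decide), key 1 3 (by decide) (by decide),
    key 1 4 (by decide) (by decide), key 2 3 (by decide) (by decide),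
    key 2 4 (by decide) (by decide), key 2 5 (by decide) (by decide),
    key 4 5 (by decide) (by decide)⟩

/-- the map -/
def gmap (b : Bool × Bool × Bool) (w : (ℤ × ℤ × ℤ) × (Fin 6 → ℤ)) :
    (ℤ × ℤ × ℤ) × (ℤ × ℤ × ℤ) :=
  ((sg b.1 * (w.2 0 * w.1.1), sg b.2.1 * (w.2 1 * w.1.2.1), sg b.2.2 * (w.2 3 * w.1.2.2)),
   (sg b.1 * (w.2 0 * w.2 2 * w.2 4), sg b.2.1 * (w.2 1 * w.2 2 * w.2 5),
    sg b.2.2 * (w.2 3 * w.2 4 * w.2 5)))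

lemma mem_P_of (B : ℝ) (b : Bool × Bool × Bool) (w : (ℤ × ℤ × ℤ) × (Fin 6 → ℤ))
    (hw : QQ B w) : PP B (gmap b w) := by
  obtain ⟨hx1, hx2, hx3, hz, hht, heq, hgcd, hred⟩ := hw
  have hzne : ∀ i, w.2 i ≠ 0 := fun i => (hz i).ne'
  have hzr : ∀ i, (0:ℝ) < (w.2 i : ℝ) := fun i => by exact_mod_cast hz i
  refine ⟨mul_ne_zero (sg_ne_zero _) (mul_ne_zero (hzne 0) hx1),
    mul_ne_zero (sg_ne_zero _) (mul_ne_zero (hzne 1) hx2),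
    mul_ne_zero (sg_ne_zero _) (mul_ne_zero (hzne 3) hx3),
    mul_ne_zero (sg_ne_zero _) (mul_ne_zero (mul_ne_zero (hzne 0) (hzne 2)) (hzne 4)),
    mul_ne_zero (sg_ne_zero _) (mul_ne_zero (mul_ne_zero (hzne 1) (hzne 2)) (hzne 5)),
    mul_ne_zero (sg_ne_zero _) (mul_ne_zero (mul_ne_zero (hzne 3) (hzne 4)) (hzne 5)),
    ?_, ?_, ?_, ?_⟩
  · show Int.gcd (sg b.1 * (w.2 0 * w.1.1))
      (Int.gcd (sg b.2.1 * (w.2 1 * w.1.2.1)) (sg b.2.2 * (w.2 3 * w.1.2.2))) = 1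
    rw [gcd_sg_left, gcd_sg_left, gcd_sg_right]
    exact hgcd
  · show Int.gcd (sg b.1 * (w.2 0 * w.2 2 * w.2 4))
      (Int.gcd (sg b.2.1 * (w.2 1 * w.2 2 * w.2 5)) (sg b.2.2 * (w.2 3 * w.2 4 * w.2 5))) = 1
    rw [gcd_sg_left, gcd_sg_left, gcd_sg_right]
    have r := red6_of_reduced6 w.2 hred
    have key := gcdP r
    unfold Int.gcd
    simp only [Int.natAbs_mul, Int.natAbs_natCast]
    exact key
  · show sg b.1 * (w.2 0 * w.1.1) * (sg b.2.1 * (w.2 1 * w.2 2 * w.2 5)) *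
        (sg b.2.2 * (w.2 3 * w.2 4 * w.2 5)) +
      sg b.2.1 * (w.2 1 * w.1.2.1) * (sg b.1 * (w.2 0 * w.2 2 * w.2 4)) *
        (sg b.2.2 * (w.2 3 * w.2 4 * w.2 5)) +
      sg b.2.2 * (w.2 3 * w.1.2.2) * (sg b.1 * (w.2 0 * w.2 2 * w.2 4)) *
        (sg b.2.1 * (w.2 1 * w.2 2 * w.2 5)) = 0
    have hid : sg b.1 * (w.2 0 * w.1.1) * (sg b.2.1 * (w.2 1 * w.2 2 * w.2 5)) *
        (sg b.2.2 * (w.2 3 * w.2 4 * w.2 5)) +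
      sg b.2.1 * (w.2 1 * w.1.2.1) * (sg b.1 * (w.2 0 * w.2 2 * w.2 4)) *
        (sg b.2.2 * (w.2 3 * w.2 4 * w.2 5)) +
      sg b.2.2 * (w.2 3 * w.1.2.2) * (sg b.1 * (w.2 0 * w.2 2 * w.2 4)) *
        (sg b.2.1 * (w.2 1 * w.2 2 * w.2 5)) =
      sg b.1 * sg b.2.1 * sg b.2.2 * (w.2 0 * w.2 1 * w.2 2 * w.2 3 * w.2 4 * w.2 5) *
        (w.1.1 * w.2 5 + w.1.2.1 * w.2 4 + w.1.2.2 * w.2 2) := by ring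
    rw [hid, heq, mul_zero]
  · have e1 : |((sg b.1 * (w.2 0 * w.1.1) : ℤ) : ℝ)| = (w.2 0 : ℝ) * |(w.1.1 : ℝ)| := by
      rw [abs_cast_sg_mul]; push_cast; rw [abs_mul, abs_of_pos (hzr 0)]
    have e2 : |((sg b.2.1 * (w.2 1 * w.1.2.1) : ℤ) : ℝ)| = (w.2 1 : ℝ) * |(w.1.2.1 : ℝ)| := by
      rw [abs_cast_sg_mul]; push_cast; rw [abs_mul, abs_of_pos (hzr 1)]
    have e3 : |((sg b.2.2 * (w.2 3 * w.1.2.2) : ℤ) : ℝ)| = (w.2 3 : ℝ) * |(w.1.2.2 : ℝ)| := by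
      rw [abs_cast_sg_mul]; push_cast; rw [abs_mul, abs_of_pos (hzr 3)]
    have e4 : |((sg b.1 * (w.2 0 * w.2 2 * w.2 4) : ℤ) : ℝ)| =
        (w.2 0 : ℝ) * (w.2 2 : ℝ) * (w.2 4 : ℝ) := by
      rw [abs_cast_sg_mul]; push_cast
      rw [abs_of_pos (mul_pos (mul_pos (hzr 0) (hzr 2)) (hzr 4))]
    have e5 : |((sg b.2.1 * (w.2 1 * w.2 2 * w.2 5) : ℤ) : ℝ)| =
        (w.2 1 : ℝ) * (w.2 2 : ℝ) * (w.2 5 : ℝ) := by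
      rw [abs_cast_sg_mul]; push_cast
      rw [abs_of_pos (mul_pos (mul_pos (hzr 1) (hzr 2)) (hzr 5))]
    have e6 : |((sg b.2.2 * (w.2 3 * w.2 4 * w.2 5) : ℤ) : ℝ)| =
        (w.2 3 : ℝ) * (w.2 4 : ℝ) * (w.2 5 : ℝ) := by
      rw [abs_cast_sg_mul]; push_cast
      rw [abs_of_pos (mul_pos (mul_pos (hzr 3) (hzr 4)) (hzr 5))]
    show (max |((sg b.1 * (w.2 0 * w.1.1) : ℤ) : ℝ)|
        (max |((sg b.2.1 * (w.2 1 * w.1.2.1) : ℤ) : ℝ)|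
          |((sg b.2.2 * (w.2 3 * w.1.2.2) : ℤ) : ℝ)|)) ^ 2 *
      max |((sg b.1 * (w.2 0 * w.2 2 * w.2 4) : ℤ) : ℝ)|
        (max |((sg b.2.1 * (w.2 1 * w.2 2 * w.2 5) : ℤ) : ℝ)|
          |((sg b.2.2 * (w.2 3 * w.2 4 * w.2 5) : ℤ) : ℝ)|) ≤ B
    rw [e1, e2, e3, e4, e5, e6]
    exact hht

lemma g_inj (B : ℝ) {b b' : Bool × Bool × Bool} {w w' : (ℤ × ℤ × ℤ) × (Fin 6 → ℤ)}
    (hw : QQ B w) (hw' : QQ B w') (h : gmap b w = gmap b' w') : b = b' ∧ w = w' := by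
  obtain ⟨hx1, hx2, hx3, hz, -, -, -, hred⟩ := hw
  obtain ⟨hx1', hx2', hx3', hz', -, -, -, hred'⟩ := hw'
  simp only [gmap, Prod.mk.injEq] at h
  obtain ⟨⟨hX1, hX2, hX3⟩, hY1, hY2, hY3⟩ := h
  have s1 := sg_eq_of (mul_pos (mul_pos (hz 0) (hz 2)) (hz 4))
    (mul_pos (mul_pos (hz' 0) (hz' 2)) (hz' 4)) hY1
  have s2 := sg_eq_of (mul_pos (mul_pos (hz 1) (hz 2)) (hz 5))
    (mul_pos (mul_pos (hz' 1) (hz' 2)) (hz' 5)) hY2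
  have s3 := sg_eq_of (mul_pos (mul_pos (hz 3) (hz 4)) (hz 5))
    (mul_pos (mul_pos (hz' 3) (hz' 4)) (hz' 5)) hY3
  have hb : b = b' := Prod.ext s1.1 (Prod.ext s2.1 s3.1)
  have N1 : (w.2 0).natAbs * (w.2 2).natAbs * (w.2 4).natAbs =
      (w'.2 0).natAbs * (w'.2 2).natAbs * (w'.2 4).natAbs := by
    have := congrArg Int.natAbs s1.2; simpa [Int.natAbs_mul] using this
  have N2 : (w.2 1).natAbs * (w.2 2).natAbs * (w.2 5).natAbs =
      (w'.2 1).natAbs * (w'.2 2).natAbs * (w'.2 5).natAbs := by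
    have := congrArg Int.natAbs s2.2; simpa [Int.natAbs_mul] using this
  have N3 : (w.2 3).natAbs * (w.2 4).natAbs * (w.2 5).natAbs =
      (w'.2 3).natAbs * (w'.2 4).natAbs * (w'.2 5).natAbs := by
    have := congrArg Int.natAbs s3.2; simpa [Int.natAbs_mul] using this
  have u := unique6 (red6_of_reduced6 w.2 hred) (red6_of_reduced6 w'.2 hred')
    (Int.natAbs_pos.mpr (hz 2).ne') (Int.natAbs_pos.mpr (hz 4).ne')
    (Int.natAbs_pos.mpr (hz 5).ne') N1 N2 N3
  obtain ⟨u1, u2, u3, u4, u5, u6⟩ := u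
  have cast_eq : ∀ (a c : ℤ), 0 < a → 0 < c → a.natAbs = c.natAbs → a = c := by
    intro a c ha hc h; omega
  have hzf : w.2 = w'.2 := by
    funext i
    fin_cases i
    · exact cast_eq _ _ (hz 0) (hz' 0) u1
    · exact cast_eq _ _ (hz 1) (hz' 1) u2
    · exact cast_eq _ _ (hz 2) (hz' 2) u3
    · exact cast_eq _ _ (hz 3) (hz' 3) u4
    · exact cast_eq _ _ (hz 4) (hz' 4) u5
    · exact cast_eq _ _ (hz 5) (hz' 5) u6
  subst hb
  rw [hzf] at hX1 hX2 hX3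
  have hxx1 : w.1.1 = w'.1.1 :=
    mul_left_cancel₀ (hz' 0).ne' (mul_left_cancel₀ (sg_ne_zero b.1) hX1)
  have hxx2 : w.1.2.1 = w'.1.2.1 :=
    mul_left_cancel₀ (hz' 1).ne' (mul_left_cancel₀ (sg_ne_zero b.2.1) hX2)
  have hxx3 : w.1.2.2 = w'.1.2.2 :=
    mul_left_cancel₀ (hz' 3).ne' (mul_left_cancel₀ (sg_ne_zero b.2.2) hX3)
  exact ⟨rfl, Prod.ext (Prod.ext hxx1 (Prod.ext hxx2 hxx3)) hzf⟩


lemma g_surj (B : ℝ) (v : (ℤ × ℤ × ℤ) × (ℤ × ℤ × ℤ)) (hv : PP B v) :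
    ∃ b w, QQ B w ∧ gmap b w = v := by
  obtain ⟨⟨x1, x2, x3⟩, ⟨y1, y2, y3⟩⟩ := v
  obtain ⟨hx1, hx2, hx3, hy1, hy2, hy3, hgx, hgy, heq, hht⟩ := hv
  simp only at hx1 hx2 hx3 hy1 hy2 hy3 hgx hgy heq hht
  have hn1 : 0 < y1.natAbs := Int.natAbs_pos.mpr hy1
  have hn2 : 0 < y2.natAbs := Int.natAbs_pos.mpr hy2
  have hn3 : 0 < y3.natAbs := Int.natAbs_pos.mpr hy3
  have hg : Nat.gcd y1.natAbs (Nat.gcd y2.natAbs y3.natAbs) = 1 := by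
    unfold Int.gcd at hgy
    simpa [Int.natAbs_natCast] using hgy
  obtain ⟨a1, a2, a3, a4, a5, a6, r, p1, p2, p3, p4, p5, p6, e1, e2, e3⟩ :=
    construct6 _ _ _ hn1 hn2 hn3 hg
  -- divisibility
  have hdvd1 : (a1 : ℤ) ∣ x1 := by
    have hyd : y1 ∣ x1 * y2 * y3 := ⟨-(x2 * y3 + x3 * y2), by linear_combination heq⟩
    have hnd : y1.natAbs ∣ (x1 * y2 * y3).natAbs := Int.natAbs_dvd_natAbs.mpr hyd
    rw [Int.natAbs_mul, Int.natAbs_mul] at hnd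
    rw [← e1, ← e2, ← e3] at hnd
    rw [show x1.natAbs * (a2*a3*a6) * (a4*a5*a6) = (x1.natAbs*(a2*(a4*(a6*a6))))*(a3*a5) by ring,
      show a1*a3*a5 = a1*(a3*a5) by ring] at hnd
    have hc : a1 ∣ x1.natAbs * (a2*(a4*(a6*a6))) :=
      (Nat.mul_dvd_mul_iff_right (Nat.mul_pos p3 p5)).mp hnd
    have hco : Nat.Coprime a1 (a2*(a4*(a6*a6))) :=
      r.c12.mul_right (r.c14.mul_right (r.c16.mul_right r.c16))
    have h1 : a1 ∣ x1.natAbs := hco.dvd_of_dvd_mul_right hc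
    exact (Int.natCast_dvd_natCast.mpr h1).trans (Int.natAbs_dvd.mpr dvd_rfl)
  have hdvd2 : (a2 : ℤ) ∣ x2 := by
    have hyd : y2 ∣ x2 * y1 * y3 := ⟨-(x1 * y3 + x3 * y1), by linear_combination heq⟩
    have hnd : y2.natAbs ∣ (x2 * y1 * y3).natAbs := Int.natAbs_dvd_natAbs.mpr hyd
    rw [Int.natAbs_mul, Int.natAbs_mul] at hnd
    rw [← e1, ← e2, ← e3] at hnd
    rw [show x2.natAbs * (a1*a3*a5) * (a4*a5*a6) = (x2.natAbs*(a1*(a4*(a5*a5))))*(a3*a6) by ring,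
      show a2*a3*a6 = a2*(a3*a6) by ring] at hnd
    have hc : a2 ∣ x2.natAbs * (a1*(a4*(a5*a5))) :=
      (Nat.mul_dvd_mul_iff_right (Nat.mul_pos p3 p6)).mp hnd
    have hco : Nat.Coprime a2 (a1*(a4*(a5*a5))) :=
      r.c12.symm.mul_right (r.c24.mul_right (r.c25.mul_right r.c25))
    have h1 : a2 ∣ x2.natAbs := hco.dvd_of_dvd_mul_right hc
    exact (Int.natCast_dvd_natCast.mpr h1).trans (Int.natAbs_dvd.mpr dvd_rfl)
  have hdvd3 : (a4 : ℤ) ∣ x3 := by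
    have hyd : y3 ∣ x3 * y1 * y2 := ⟨-(x1 * y2 + x2 * y1), by linear_combination heq⟩
    have hnd : y3.natAbs ∣ (x3 * y1 * y2).natAbs := Int.natAbs_dvd_natAbs.mpr hyd
    rw [Int.natAbs_mul, Int.natAbs_mul] at hnd
    rw [← e1, ← e2, ← e3] at hnd
    rw [show x3.natAbs * (a1*a3*a5) * (a2*a3*a6) = (x3.natAbs*(a1*(a2*(a3*a3))))*(a5*a6) by ring,
      show a4*a5*a6 = a4*(a5*a6) by ring] at hnd
    have hc : a4 ∣ x3.natAbs * (a1*(a2*(a3*a3))) :=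
      (Nat.mul_dvd_mul_iff_right (Nat.mul_pos p5 p6)).mp hnd
    have hco : Nat.Coprime a4 (a1*(a2*(a3*a3))) :=
      r.c14.symm.mul_right (r.c24.symm.mul_right (r.c34.symm.mul_right r.c34.symm))
    have h1 : a4 ∣ x3.natAbs := hco.dvd_of_dvd_mul_right hc
    exact (Int.natCast_dvd_natCast.mpr h1).trans (Int.natAbs_dvd.mpr dvd_rfl)
  obtain ⟨c1, hc1⟩ := hdvd1
  obtain ⟨c2, hc2⟩ := hdvd2
  obtain ⟨c3, hc3⟩ := hdvd3
  have hc1ne : c1 ≠ 0 := by rintro rfl; rw [mul_zero] at hc1; exact hx1 hc1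
  have hc2ne : c2 ≠ 0 := by rintro rfl; rw [mul_zero] at hc2; exact hx2 hc2
  have hc3ne : c3 ≠ 0 := by rintro rfl; rw [mul_zero] at hc3; exact hx3 hc3
  set b1 := decide (0 < y1) with hb1
  set b2 := decide (0 < y2) with hb2
  set b3 := decide (0 < y3) with hb3
  have hx1e : sg b1 * ((a1 : ℤ) * (sg b1 * c1)) = x1 := by
    rw [hc1, show sg b1 * ((a1:ℤ) * (sg b1 * c1)) = (sg b1 * sg b1) * ((a1:ℤ) * c1) by ring,
      sg_mul_sg, one_mul]
  have hx2e : sg b2 * ((a2 : ℤ) * (sg b2 * c2)) = x2 := by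
    rw [hc2, show sg b2 * ((a2:ℤ) * (sg b2 * c2)) = (sg b2 * sg b2) * ((a2:ℤ) * c2) by ring,
      sg_mul_sg, one_mul]
  have hx3e : sg b3 * ((a4 : ℤ) * (sg b3 * c3)) = x3 := by
    rw [hc3, show sg b3 * ((a4:ℤ) * (sg b3 * c3)) = (sg b3 * sg b3) * ((a4:ℤ) * c3) by ring,
      sg_mul_sg, one_mul]
  have hy1e : sg b1 * (((a1*a3*a5 : ℕ) : ℤ)) = y1 := by rw [e1, hb1]; exact sg_natAbs y1
  have hy2e : sg b2 * (((a2*a3*a6 : ℕ) : ℤ)) = y2 := by rw [e2, hb2]; exact sg_natAbs y2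
  have hy3e : sg b3 * (((a4*a5*a6 : ℕ) : ℤ)) = y3 := by rw [e3, hb3]; exact sg_natAbs y3
  refine ⟨(b1, b2, b3),
    ((sg b1 * c1, sg b2 * c2, sg b3 * c3), fun i => (![a1,a2,a3,a4,a5,a6] i : ℤ)), ?_, ?_⟩
  · -- QQ membership
    refine ⟨mul_ne_zero (sg_ne_zero b1) hc1ne, mul_ne_zero (sg_ne_zero b2) hc2ne,
      mul_ne_zero (sg_ne_zero b3) hc3ne, ?_, ?_, ?_, ?_, ?_⟩
    · intro i
      fin_cases i
      · show (0:ℤ) < ((a1:ℕ):ℤ); exact_mod_cast p1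
      · show (0:ℤ) < ((a2:ℕ):ℤ); exact_mod_cast p2
      · show (0:ℤ) < ((a3:ℕ):ℤ); exact_mod_cast p3
      · show (0:ℤ) < ((a4:ℕ):ℤ); exact_mod_cast p4
      · show (0:ℤ) < ((a5:ℕ):ℤ); exact_mod_cast p5
      · show (0:ℤ) < ((a6:ℕ):ℤ); exact_mod_cast p6
    · -- height
      show (max (((a1:ℤ):ℝ) * |((sg b1 * c1 : ℤ) : ℝ)|)
          (max (((a2:ℤ):ℝ) * |((sg b2 * c2 : ℤ) : ℝ)|) (((a4:ℤ):ℝ) * |((sg b3 * c3 : ℤ) : ℝ)|))) ^ 2 *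
        max (((a1:ℤ):ℝ) * ((a3:ℤ):ℝ) * ((a5:ℤ):ℝ))
          (max (((a2:ℤ):ℝ) * ((a3:ℤ):ℝ) * ((a6:ℤ):ℝ))
            (((a4:ℤ):ℝ) * ((a5:ℤ):ℝ) * ((a6:ℤ):ℝ))) ≤ B
      have hax1 : ((a1:ℤ):ℝ) * |((sg b1 * c1 : ℤ) : ℝ)| = |(x1 : ℝ)| := by
        rw [abs_cast_sg_mul, hc1]
        push_cast
        rw [abs_mul, abs_of_nonneg (by positivity : (0:ℝ) ≤ (a1:ℝ))]
      have hax2 : ((a2:ℤ):ℝ) * |((sg b2 * c2 : ℤ) : ℝ)| = |(x2 : ℝ)| := by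
        rw [abs_cast_sg_mul, hc2]
        push_cast
        rw [abs_mul, abs_of_nonneg (by positivity : (0:ℝ) ≤ (a2:ℝ))]
      have hax3 : ((a4:ℤ):ℝ) * |((sg b3 * c3 : ℤ) : ℝ)| = |(x3 : ℝ)| := by
        rw [abs_cast_sg_mul, hc3]
        push_cast
        rw [abs_mul, abs_of_nonneg (by positivity : (0:ℝ) ≤ (a4:ℝ))]
      have hay1 : ((a1:ℤ):ℝ) * ((a3:ℤ):ℝ) * ((a5:ℤ):ℝ) = |(y1 : ℝ)| := by
        rw [← hy1e, abs_cast_sg_mul]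
        push_cast
        rw [abs_of_nonneg (by positivity : (0:ℝ) ≤ (a1:ℝ)*(a3:ℝ)*(a5:ℝ))]
      have hay2 : ((a2:ℤ):ℝ) * ((a3:ℤ):ℝ) * ((a6:ℤ):ℝ) = |(y2 : ℝ)| := by
        rw [← hy2e, abs_cast_sg_mul]
        push_cast
        rw [abs_of_nonneg (by positivity : (0:ℝ) ≤ (a2:ℝ)*(a3:ℝ)*(a6:ℝ))]
      have hay3 : ((a4:ℤ):ℝ) * ((a5:ℤ):ℝ) * ((a6:ℤ):ℝ) = |(y3 : ℝ)| := by
        rw [← hy3e, abs_cast_sg_mul]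
        push_cast
        rw [abs_of_nonneg (by positivity : (0:ℝ) ≤ (a4:ℝ)*(a5:ℝ)*(a6:ℝ))]
      rw [hax1, hax2, hax3, hay1, hay2, hay3]
      exact hht
    · -- equation
      show (sg b1 * c1) * ((a6:ℤ)) + (sg b2 * c2) * ((a5:ℤ)) + (sg b3 * c3) * ((a3:ℤ)) = 0
      have key : (sg b1 * sg b2 * sg b3) * ((a1:ℤ)*(a2:ℤ)*(a3:ℤ)*(a4:ℤ)*(a5:ℤ)*(a6:ℤ)) *
          ((sg b1 * c1) * (a6:ℤ) + (sg b2 * c2) * (a5:ℤ) + (sg b3 * c3) * (a3:ℤ)) =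
          (sg b1 * ((a1:ℤ) * (sg b1 * c1))) * (sg b2 * (((a2*a3*a6 : ℕ)) : ℤ)) *
            (sg b3 * (((a4*a5*a6 : ℕ)) : ℤ)) +
          (sg b2 * ((a2:ℤ) * (sg b2 * c2))) * (sg b1 * (((a1*a3*a5 : ℕ)) : ℤ)) *
            (sg b3 * (((a4*a5*a6 : ℕ)) : ℤ)) +
          (sg b3 * ((a4:ℤ) * (sg b3 * c3))) * (sg b1 * (((a1*a3*a5 : ℕ)) : ℤ)) *
            (sg b2 * (((a2*a3*a6 : ℕ)) : ℤ)) := by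
        push_cast
        ring
      rw [hx1e, hx2e, hx3e, hy1e, hy2e, hy3e, heq] at key
      have hne : (sg b1 * sg b2 * sg b3) * ((a1:ℤ)*(a2:ℤ)*(a3:ℤ)*(a4:ℤ)*(a5:ℤ)*(a6:ℤ)) ≠ 0 := by
        apply mul_ne_zero
        · exact mul_ne_zero (mul_ne_zero (sg_ne_zero b1) (sg_ne_zero b2)) (sg_ne_zero b3)
        · have q1 : ((a1:ℕ):ℤ) ≠ 0 := by exact_mod_cast p1.ne'
          have q2 : ((a2:ℕ):ℤ) ≠ 0 := by exact_mod_cast p2.ne'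
          have q3 : ((a3:ℕ):ℤ) ≠ 0 := by exact_mod_cast p3.ne'
          have q4 : ((a4:ℕ):ℤ) ≠ 0 := by exact_mod_cast p4.ne'
          have q5 : ((a5:ℕ):ℤ) ≠ 0 := by exact_mod_cast p5.ne'
          have q6 : ((a6:ℕ):ℤ) ≠ 0 := by exact_mod_cast p6.ne'
          exact mul_ne_zero (mul_ne_zero (mul_ne_zero (mul_ne_zero (mul_ne_zero q1 q2) q3) q4) q5) q6
      rcases mul_eq_zero.mp key with h | h
      · exact absurd h hne
      · exact h
    · -- gcd
      show Int.gcd ((a1:ℤ) * (sg b1 * c1)) (Int.gcd ((a2:ℤ) * (sg b2 * c2)) ((a4:ℤ) * (sg b3 * c3))) = 1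
      have n1e : ((a1:ℤ) * (sg b1 * c1)).natAbs = x1.natAbs := by
        rw [← hx1e, natAbs_sg_mul]
      have n2e : ((a2:ℤ) * (sg b2 * c2)).natAbs = x2.natAbs := by
        rw [← hx2e, natAbs_sg_mul]
      have n3e : ((a4:ℤ) * (sg b3 * c3)).natAbs = x3.natAbs := by
        rw [← hx3e, natAbs_sg_mul]
      unfold Int.gcd
      unfold Int.gcd at hgx
      rw [Int.natAbs_natCast] at hgx ⊢
      rw [n1e, n2e, n3e]
      exact hgx
    · -- reduced
      exact reduced6_of_red6 r
  · -- gmap equality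
    show ((sg b1 * ((a1:ℤ) * (sg b1 * c1)), sg b2 * ((a2:ℤ) * (sg b2 * c2)),
          sg b3 * ((a4:ℤ) * (sg b3 * c3))),
        (sg b1 * ((a1:ℤ) * (a3:ℤ) * (a5:ℤ)), sg b2 * ((a2:ℤ) * (a3:ℤ) * (a6:ℤ)),
         sg b3 * ((a4:ℤ) * (a5:ℤ) * (a6:ℤ)))) = ((x1, x2, x3), (y1, y2, y3))
    have k1 : sg b1 * ((a1:ℤ) * (a3:ℤ) * (a5:ℤ)) = y1 := by
      rw [← hy1e]; push_cast; ring
    have k2 : sg b2 * ((a2:ℤ) * (a3:ℤ) * (a6:ℤ)) = y2 := by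
      rw [← hy2e]; push_cast; ring
    have k3 : sg b3 * ((a4:ℤ) * (a5:ℤ) * (a6:ℤ)) = y3 := by
      rw [← hy3e]; push_cast; ring
    rw [hx1e, hx2e, hx3e, k1, k2, k3]

end St5

theorem statement5 (B : ℝ) (hB : 1 ≤ B) :
    Nat.card {v : (ℤ × ℤ × ℤ) × (ℤ × ℤ × ℤ) |
        v.1.1 ≠ 0 ∧ v.1.2.1 ≠ 0 ∧ v.1.2.2 ≠ 0 ∧
        v.2.1 ≠ 0 ∧ v.2.2.1 ≠ 0 ∧ v.2.2.2 ≠ 0 ∧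
        Int.gcd v.1.1 (Int.gcd v.1.2.1 v.1.2.2) = 1 ∧
        Int.gcd v.2.1 (Int.gcd v.2.2.1 v.2.2.2) = 1 ∧
        v.1.1 * v.2.2.1 * v.2.2.2 + v.1.2.1 * v.2.1 * v.2.2.2 +
          v.1.2.2 * v.2.1 * v.2.2.1 = 0 ∧
        (max |(v.1.1 : ℝ)| (max |(v.1.2.1 : ℝ)| |(v.1.2.2 : ℝ)|)) ^ 2 *
          max |(v.2.1 : ℝ)| (max |(v.2.2.1 : ℝ)| |(v.2.2.2 : ℝ)|) ≤ B} =
    8 * Nat.card {w : (ℤ × ℤ × ℤ) × (Fin 6 → ℤ) |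
        w.1.1 ≠ 0 ∧ w.1.2.1 ≠ 0 ∧ w.1.2.2 ≠ 0 ∧ (∀ i, 0 < w.2 i) ∧
        (max ((w.2 0 : ℝ) * |(w.1.1 : ℝ)|)
            (max ((w.2 1 : ℝ) * |(w.1.2.1 : ℝ)|) ((w.2 3 : ℝ) * |(w.1.2.2 : ℝ)|))) ^ 2 *
          max ((w.2 0 : ℝ) * (w.2 2 : ℝ) * (w.2 4 : ℝ))
            (max ((w.2 1 : ℝ) * (w.2 2 : ℝ) * (w.2 5 : ℝ))
              ((w.2 3 : ℝ) * (w.2 4 : ℝ) * (w.2 5 : ℝ))) ≤ B ∧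
        w.1.1 * w.2 5 + w.1.2.1 * w.2 4 + w.1.2.2 * w.2 2 = 0 ∧
        Int.gcd (w.2 0 * w.1.1) (Int.gcd (w.2 1 * w.1.2.1) (w.2 3 * w.1.2.2)) = 1 ∧
        Reduced6 w.2} := by
  show Nat.card {v : (ℤ × ℤ × ℤ) × (ℤ × ℤ × ℤ) | St5.PP B v} =
    8 * Nat.card {w : (ℤ × ℤ × ℤ) × (Fin 6 → ℤ) | St5.QQ B w}
  have hfb : Function.Bijective
      (fun p : (Bool × Bool × Bool) × {w // St5.QQ B w} =>
        (⟨St5.gmap p.1 p.2.1, St5.mem_P_of B p.1 p.2.1 p.2.2⟩ : {v // St5.PP B v})) := by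
    constructor
    · rintro ⟨b, w, hw⟩ ⟨b', w', hw'⟩ h
      simp only [Subtype.mk.injEq] at h
      obtain ⟨hb, hw2⟩ := St5.g_inj B hw hw' h
      simp only [Prod.mk.injEq, Subtype.mk.injEq]
      exact ⟨hb, hw2⟩
    · rintro ⟨v, hv⟩
      obtain ⟨b, w, hw, hgw⟩ := St5.g_surj B v hv
      exact ⟨⟨b, ⟨w, hw⟩⟩, Subtype.ext hgw⟩
  have hcard := Nat.card_eq_of_bijective _ hfb
  have h8 : Nat.card (Bool × Bool × Bool) = 8 := by
    simp [Nat.card_eq_fintype_card]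
  calc Nat.card {v : (ℤ × ℤ × ℤ) × (ℤ × ℤ × ℤ) | St5.PP B v}
      = Nat.card ((Bool × Bool × Bool) × {w // St5.QQ B w}) := hcard.symm
    _ = 8 * Nat.card {w : (ℤ × ℤ × ℤ) × (Fin 6 → ℤ) | St5.QQ B w} := by
        rw [Nat.card_prod, h8]
        rfl
end

section
/- Let a = (a₁,a₂,a₃) ∈ (ℤ∖{0})³ and let α = (α₁,α₂,α₃), β = (β₁,β₂,β₃) ∈ ℂ³ satisfy Re(αᵢ) > 2/3 and Re(βᵢ) > 2/3 for all i ∈ {1,2,3}. Then the series 𝒜_a(α,β) := (1/8) Σ over (n₁,n₂,n₃,m₁,m₂,m₃) ∈ (ℤ∖{0})⁶ with a₁n₁m₁ + a₂n₂m₂ + a₃n₃m₃ = 0 of 1/(|n₁|^{α₁}|m₁|^{β₁}|n₂|^{α₂}|m₂|^{β₂}|n₃|^{α₃}|m₃|^{β₃}) converges absolutely; i.e., the family of terms indexed by this solution set is summable. -/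
/-!
Group the terms by the products `uᵢ = nᵢ mᵢ`. Then `u` is a point with nonzero coordinates on
the plane `a₁ u₁ + a₂ u₂ + a₃ u₃ = 0`, and it has at most `∏ᵢ #(divisorsAntidiag uᵢ)`
preimages, which by the divisor bound is `≪ |u₁ u₂ u₃| ^ δ` for any `δ > 0`. With
`σ = min Re(αᵢ, βᵢ)` it remains to sum `|u₁ u₂ u₃| ^ (-τ)` over the plane for `τ = σ - δ > 2/3`.
If `|u₃|` is the largest coordinate then `|u₃|² ≥ |u₁ u₂|`, so the term is at most
`|u₁ u₂| ^ (-3τ/2)`; since `u₃` is determined by `(u₁, u₂)`, these terms are dominated by the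
convergent double series `∑ |u₁| ^ (-3τ/2) |u₂| ^ (-3τ/2)`, and likewise for the other two
coordinates.
-/

open Finset Real

lemma succ_le_mul_two_rpow {δ : ℝ} (hδ : 0 < δ) (a : ℕ) :
    (a + 1 : ℝ) ≤ (1 + (δ * log 2)⁻¹) * 2 ^ (a * δ) := by
  have hlog : 0 < δ * log 2 := mul_pos hδ (log_pos one_lt_two)
  have hexp : 1 + a * δ * log 2 ≤ (2 : ℝ) ^ (a * δ) := by
    rw [rpow_def_of_pos two_pos]
    linarith [add_one_le_exp (log 2 * (a * δ))]
  calc (a + 1 : ℝ) ≤ (1 + (δ * log 2)⁻¹) * (1 + a * δ * log 2) := by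
        have : (δ * log 2)⁻¹ * (a * δ * log 2) = a := by field_simp
        nlinarith [inv_pos.2 hlog, mul_nonneg hlog.le a.cast_nonneg]
    _ ≤ _ := by gcongr

lemma succ_le_rpow_of_two_le_rpow {p δ : ℝ} (hp : 0 ≤ p) (hpδ : 2 ≤ p ^ δ) (a : ℕ) :
    (a + 1 : ℝ) ≤ p ^ (a * δ) := by
  calc (a + 1 : ℝ) ≤ 2 ^ a := by exact_mod_cast Nat.lt_two_pow_self
    _ ≤ (p ^ δ) ^ a := by gcongr
    _ = p ^ (a * δ) := by rw [← rpow_natCast, ← rpow_mul hp, mul_comm]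

theorem Nat.card_divisors_le_mul_rpow {δ : ℝ} (hδ : 0 < δ) :
    ∃ C : ℝ, ∀ n : ℕ, n ≠ 0 → (#n.divisors : ℝ) ≤ C * (n : ℝ) ^ δ := by
  set M : ℝ := 1 + (δ * Real.log 2)⁻¹
  have hM : 1 ≤ M := le_add_of_nonneg_right (by have := Real.log_pos one_lt_two; positivity)
  set K : ℕ := ⌈(2 : ℝ) ^ δ⁻¹⌉₊
  refine ⟨M ^ (K + 1), fun n hn => ?_⟩
  -- `a + 1 ≤ p ^ (a * δ)` once `p ^ δ ≥ 2`, so only the primes `p ≤ K` cost a factor `M`.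
  have hprime : ∀ p ∈ n.primeFactors, (n.factorization p + 1 : ℝ) ≤
      (if p ≤ K then M else 1) * (p : ℝ) ^ (n.factorization p * δ) := by
    intro p hp
    have hp2 : (2 : ℝ) ≤ p := by exact_mod_cast (Nat.prime_of_mem_primeFactors hp).two_le
    split_ifs with hpK
    · calc (n.factorization p + 1 : ℝ) ≤ M * 2 ^ (n.factorization p * δ) :=
            succ_le_mul_two_rpow hδ _
        _ ≤ M * (p : ℝ) ^ (n.factorization p * δ) := by gcongr
    · rw [one_mul]
      refine succ_le_rpow_of_two_le_rpow (by positivity) ?_ _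
      have hKp : (2 : ℝ) ^ δ⁻¹ ≤ p :=
        (Nat.le_ceil _).trans (by exact_mod_cast (not_le.1 hpK).le)
      calc (2 : ℝ) = ((2 : ℝ) ^ δ⁻¹) ^ δ := by
            rw [← rpow_mul zero_le_two, inv_mul_cancel₀ hδ.ne', rpow_one]
        _ ≤ (p : ℝ) ^ δ := by gcongr
  have hconst : ∏ p ∈ n.primeFactors, (if p ≤ K then M else 1) ≤ M ^ (K + 1) := by
    rw [← prod_filter, prod_const]
    refine pow_le_pow_right₀ hM ((card_le_card fun p hp => ?_).trans (card_range _).le)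
    simpa [Nat.lt_succ_iff] using (mem_filter.1 hp).2
  calc (#n.divisors : ℝ) = ∏ p ∈ n.primeFactors, (n.factorization p + 1 : ℝ) := by
        rw [Nat.card_divisors hn]; push_cast; rfl
    _ ≤ ∏ p ∈ n.primeFactors, (if p ≤ K then M else 1) * (p : ℝ) ^ (n.factorization p * δ) :=
        prod_le_prod (fun _ _ => by positivity) hprime
    _ = (∏ p ∈ n.primeFactors, (if p ≤ K then M else 1)) * (n : ℝ) ^ δ := by
        rw [prod_mul_distrib]
        congr 1
        conv_rhs => rw [Nat.prod_primeFactors_pow_factorization hn]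
        push_cast
        rw [← finsetProd_rpow _ _ (fun _ _ => by positivity)]
        refine prod_congr rfl fun p _ => ?_
        rw [← rpow_natCast, ← rpow_mul (by positivity)]
    _ ≤ M ^ (K + 1) * (n : ℝ) ^ δ := by gcongr

theorem Int.card_divisors (z : ℤ) : #z.divisors = 2 * #z.natAbs.divisors := by
  rw [Int.divisors, card_disjUnion, card_map, card_map, two_mul]

theorem Int.card_divisorsAntidiag_le (z : ℤ) :
    #z.divisorsAntidiag ≤ 2 * #z.natAbs.divisors := by
  rw [← Int.card_divisors, ← Int.image_fst_divisorsAntidiag]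
  refine (card_image_of_injOn fun x hx y hy hxy => ?_).ge
  obtain ⟨hxz, hz⟩ := Int.mem_divisorsAntidiag.1 (mem_coe.1 hx)
  obtain ⟨hyz, -⟩ := Int.mem_divisorsAntidiag.1 (mem_coe.1 hy)
  refine Prod.ext hxy (mul_left_cancel₀ (left_ne_zero_of_mul (hxz ▸ hz)) ?_)
  rw [hxz, hxy, hyz]

theorem Int.card_divisorsAntidiag_le_mul_rpow {δ : ℝ} (hδ : 0 < δ) :
    ∃ C : ℝ, ∀ z : ℤ, z ≠ 0 → (#z.divisorsAntidiag : ℝ) ≤ C * |(z : ℝ)| ^ δ := by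
  obtain ⟨C, hC⟩ := Nat.card_divisors_le_mul_rpow hδ
  refine ⟨2 * C, fun z hz => ?_⟩
  calc (#z.divisorsAntidiag : ℝ) ≤ 2 * #z.natAbs.divisors := by
        exact_mod_cast z.card_divisorsAntidiag_le
    _ ≤ 2 * (C * (z.natAbs : ℝ) ^ δ) := by gcongr; exact hC _ (Int.natAbs_ne_zero.2 hz)
    _ = 2 * C * |(z : ℝ)| ^ δ := by rw [Nat.cast_natAbs, Int.cast_abs, mul_assoc]

theorem summable_of_le_comp_of_card_fiber_le {β γ : Type*} {f : β → ℝ} (hf : 0 ≤ f)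
    (φ : β → γ) {g : γ → ℝ} (hg₀ : 0 ≤ g) (hfg : ∀ b, f b ≤ g (φ b)) {N : γ → ℕ}
    (hN : ∀ c (s : Finset β), (∀ b ∈ s, φ b = c) → #s ≤ N c)
    (hg : Summable fun c => (N c : ℝ) * g c) : Summable f := by
  classical
  refine summable_of_sum_le (c := ∑' c, (N c : ℝ) * g c) hf fun s => ?_
  calc ∑ b ∈ s, f b ≤ ∑ b ∈ s, g (φ b) := sum_le_sum fun b _ => hfg b
    _ = ∑ c ∈ s.image φ, #{b ∈ s | φ b = c} * g c := by
        rw [← sum_fiberwise_of_maps_to (fun b hb => mem_image_of_mem φ hb)]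
        refine sum_congr rfl fun c _ => ?_
        rw [sum_congr rfl fun b hb => by rw [(mem_filter.1 hb).2], sum_const, nsmul_eq_mul]
    _ ≤ ∑ c ∈ s.image φ, (N c : ℝ) * g c := by
        gcongr with c
        · exact hg₀ c
        · exact hN c _ fun b hb => (mem_filter.1 hb).2
    _ ≤ ∑' c, (N c : ℝ) * g c :=
        hg.sum_le_tsum _ fun c _ => mul_nonneg (N c).cast_nonneg (hg₀ c)

lemma rpow_neg_mul_mul_le_of_le {x y z τ : ℝ} (hx : 0 < x) (hy : 0 < y) (hxz : x ≤ z)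
    (hyz : y ≤ z) (hτ : 0 ≤ τ) : (x * y * z) ^ (-τ) ≤ (x * y) ^ (-(3 / 2 * τ)) := by
  have hxy : 0 < x * y := mul_pos hx hy
  have hz : 0 < z := hx.trans_le hxz
  have hzz : z ^ (-τ) = (z * z) ^ (-(τ / 2)) := by
    rw [mul_rpow hz.le hz.le, ← rpow_add hz]; ring_nf
  calc (x * y * z) ^ (-τ) = (x * y) ^ (-τ) * (z * z) ^ (-(τ / 2)) := by
        rw [mul_rpow hxy.le hz.le, hzz]
    _ ≤ (x * y) ^ (-τ) * (x * y) ^ (-(τ / 2)) := by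
        gcongr (x * y) ^ (-τ) * ?_
        exact rpow_le_rpow_of_nonpos hxy (mul_le_mul hxz hyz hy.le hz.le) (by linarith)
    _ = (x * y) ^ (-(3 / 2 * τ)) := by rw [← rpow_add hxy]; ring_nf

lemma rpow_neg_mul_mul_le_add_add {x y z τ : ℝ} (hx : 0 < x) (hy : 0 < y) (hz : 0 < z)
    (hτ : 0 ≤ τ) : (x * y * z) ^ (-τ) ≤
      (x * y) ^ (-(3 / 2 * τ)) + (y * z) ^ (-(3 / 2 * τ)) + (z * x) ^ (-(3 / 2 * τ)) := by
  have h₁ := rpow_nonneg (mul_pos hx hy).le (-(3 / 2 * τ))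
  have h₂ := rpow_nonneg (mul_pos hy hz).le (-(3 / 2 * τ))
  have h₃ := rpow_nonneg (mul_pos hz hx).le (-(3 / 2 * τ))
  have e₂ : y * z * x = x * y * z := by ring
  have e₃ : z * x * y = x * y * z := by ring
  rcases le_total x z with hxz | hzx <;> rcases le_total y z with hyz | hzy <;>
    rcases le_total x y with hxy | hyx
  all_goals first
    | linarith [rpow_neg_mul_mul_le_of_le hx hy (by linarith : x ≤ z) (by linarith : y ≤ z) hτ]
    | linarith [e₂ ▸ rpow_neg_mul_mul_le_of_le hy hz (by linarith : y ≤ x) (by linarith : z ≤ x) hτ]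
    | linarith [e₃ ▸ rpow_neg_mul_mul_le_of_le hz hx (by linarith : z ≤ y) (by linarith : x ≤ y) hτ]

def nonzeroPlanePoints (a₁ a₂ a₃ : ℤ) : Set (ℤ × ℤ × ℤ) :=
  {u | u.1 ≠ 0 ∧ u.2.1 ≠ 0 ∧ u.2.2 ≠ 0 ∧ a₁ * u.1 + a₂ * u.2.1 + a₃ * u.2.2 = 0}

namespace nonzeroPlanePoints

variable {a₁ a₂ a₃ : ℤ}

def rotate (u : nonzeroPlanePoints a₁ a₂ a₃) : nonzeroPlanePoints a₂ a₃ a₁ :=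
  ⟨(u.1.2.1, u.1.2.2, u.1.1), u.2.2.1, u.2.2.2.1, u.2.1, by linear_combination u.2.2.2.2⟩

lemma rotate_injective : Function.Injective (rotate (a₁ := a₁) (a₂ := a₂) (a₃ := a₃)) := by
  intro u v huv
  have h := congrArg Subtype.val huv
  simp only [rotate, Prod.mk.injEq] at h
  exact Subtype.ext (Prod.ext h.2.2 (Prod.ext h.1 h.2.1))

lemma summable_rpow_neg_mul_fst_snd (a₁ a₂ : ℤ) (ha₃ : a₃ ≠ 0) {s : ℝ} (hs : 1 < s) :
    Summable fun u : nonzeroPlanePoints a₁ a₂ a₃ =>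
      (|(u.1.1 : ℝ)| * |(u.1.2.1 : ℝ)|) ^ (-s) := by
  have hpair : Summable fun p : ℤ × ℤ => |(p.1 : ℝ)| ^ (-s) * |(p.2 : ℝ)| ^ (-s) :=
    (summable_abs_int_rpow hs).mul_of_nonneg (summable_abs_int_rpow hs)
      (fun _ => by positivity) (fun _ => by positivity)
  have hinj : Function.Injective fun u : nonzeroPlanePoints a₁ a₂ a₃ => (u.1.1, u.1.2.1) := by
    rintro ⟨⟨x, y, z⟩, h⟩ ⟨⟨x', y', z'⟩, h'⟩ hxy
    simp only [Prod.mk.injEq] at hxy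
    obtain ⟨rfl, rfl⟩ := hxy
    obtain rfl : z = z' := mul_left_cancel₀ ha₃ (by linear_combination h.2.2.2 - h'.2.2.2)
    rfl
  refine (hpair.comp_injective hinj).congr fun u => ?_
  simp [mul_rpow]

theorem summable_rpow_neg_mul_mul (ha₁ : a₁ ≠ 0) (ha₂ : a₂ ≠ 0) (ha₃ : a₃ ≠ 0) {τ : ℝ}
    (hτ : 2 / 3 < τ) :
    Summable fun u : nonzeroPlanePoints a₁ a₂ a₃ =>
      (|(u.1.1 : ℝ)| * |(u.1.2.1 : ℝ)| * |(u.1.2.2 : ℝ)|) ^ (-τ) := by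
  have hs : 1 < 3 / 2 * τ := by linarith
  have h₁₂ := summable_rpow_neg_mul_fst_snd a₁ a₂ ha₃ hs
  have h₂₃ := (summable_rpow_neg_mul_fst_snd a₂ a₃ ha₁ hs).comp_injective rotate_injective
  have h₃₁ := (summable_rpow_neg_mul_fst_snd a₃ a₁ ha₂ hs).comp_injective
    (rotate_injective.comp rotate_injective)
  refine ((h₁₂.add h₂₃).add h₃₁).of_nonneg_of_le (fun _ => by positivity) fun u => ?_
  obtain ⟨h₁, h₂, h₃, -⟩ := u.2
  exact rpow_neg_mul_mul_le_add_add (by positivity) (by positivity) (by positivity)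
    (by linarith)

theorem summable_card_divisorsAntidiag_mul_rpow_neg (ha₁ : a₁ ≠ 0) (ha₂ : a₂ ≠ 0)
    (ha₃ : a₃ ≠ 0) {σ : ℝ} (hσ : 2 / 3 < σ) :
    Summable fun u : nonzeroPlanePoints a₁ a₂ a₃ =>
      ((#u.1.1.divisorsAntidiag * #u.1.2.1.divisorsAntidiag *
          #u.1.2.2.divisorsAntidiag : ℕ) : ℝ) *
        (|(u.1.1 : ℝ)| * |(u.1.2.1 : ℝ)| * |(u.1.2.2 : ℝ)|) ^ (-σ) := by
  set δ := (σ - 2 / 3) / 2 with hδ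
  obtain ⟨C, hC⟩ := Int.card_divisorsAntidiag_le_mul_rpow (δ := δ) (by positivity)
  refine ((summable_rpow_neg_mul_mul ha₁ ha₂ ha₃ (τ := σ - δ) (by linarith)).mul_left (C ^ 3)
    ).of_nonneg_of_le (fun _ => by positivity) fun u => ?_
  obtain ⟨h₁, h₂, h₃, -⟩ := u.2
  set x := |(u.1.1 : ℝ)|
  set y := |(u.1.2.1 : ℝ)|
  set z := |(u.1.2.2 : ℝ)|
  have hx : 0 < x := by positivity
  have hy : 0 < y := by positivity
  have hz : 0 < z := by positivity
  have hC₀ : 0 ≤ C := by simpa using (Nat.cast_nonneg _).trans (hC 1 one_ne_zero)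
  calc _ ≤ (C * x ^ δ * (C * y ^ δ) * (C * z ^ δ)) * (x * y * z) ^ (-σ) := by
        push_cast
        gcongr
        exacts [hC _ h₁, hC _ h₂, hC _ h₃]
    _ = C ^ 3 * (x * y * z) ^ (-(σ - δ)) := by
        rw [neg_sub, sub_eq_add_neg, rpow_add (by positivity)]
        simp only [mul_rpow (mul_pos hx hy).le hz.le, mul_rpow hx.le hy.le]
        ring

end nonzeroPlanePoints

lemma rpow_le_norm_intAbs_cpow {n : ℤ} (hn : n ≠ 0) {σ : ℝ} {γ : ℂ} (hσ : σ ≤ γ.re) :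
    |(n : ℝ)| ^ σ ≤ ‖((|n| : ℤ) : ℂ) ^ γ‖ := by
  have hn' : 0 < |(n : ℝ)| := abs_pos.2 (Int.cast_ne_zero.2 hn)
  have hcast : ((|n| : ℤ) : ℂ) = ((|(n : ℝ)| : ℝ) : ℂ) := by
    rw [← Int.cast_abs, Complex.ofReal_intCast]
  rw [hcast, Complex.norm_cpow_eq_rpow_re_of_pos hn']
  exact rpow_le_rpow_of_exponent_le (by exact_mod_cast Int.one_le_abs hn) hσ

def nonzeroSolutions (a₁ a₂ a₃ : ℤ) : Set ((ℤ × ℤ × ℤ) × (ℤ × ℤ × ℤ)) :=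
  {v | v.1.1 ≠ 0 ∧ v.1.2.1 ≠ 0 ∧ v.1.2.2 ≠ 0 ∧ v.2.1 ≠ 0 ∧ v.2.2.1 ≠ 0 ∧ v.2.2.2 ≠ 0 ∧
    a₁ * v.1.1 * v.2.1 + a₂ * v.1.2.1 * v.2.2.1 + a₃ * v.1.2.2 * v.2.2.2 = 0}

namespace nonzeroSolutions

variable {a₁ a₂ a₃ : ℤ}

def toPlane (v : nonzeroSolutions a₁ a₂ a₃) : nonzeroPlanePoints a₁ a₂ a₃ :=
  ⟨(v.1.1.1 * v.1.2.1, v.1.1.2.1 * v.1.2.2.1, v.1.1.2.2 * v.1.2.2.2), by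
    obtain ⟨hn₁, hn₂, hn₃, hm₁, hm₂, hm₃, h⟩ := v.2
    exact ⟨mul_ne_zero hn₁ hm₁, mul_ne_zero hn₂ hm₂, mul_ne_zero hn₃ hm₃,
      by linear_combination h⟩⟩

lemma card_le_of_toPlane_eq (u : nonzeroPlanePoints a₁ a₂ a₃)
    (s : Finset (nonzeroSolutions a₁ a₂ a₃)) (hs : ∀ v ∈ s, toPlane v = u) :
    #s ≤ #u.1.1.divisorsAntidiag * #u.1.2.1.divisorsAntidiag *
      #u.1.2.2.divisorsAntidiag := by
  let pairs : nonzeroSolutions a₁ a₂ a₃ → (ℤ × ℤ) × (ℤ × ℤ) × (ℤ × ℤ) := fun v =>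
    ((v.1.1.1, v.1.2.1), (v.1.1.2.1, v.1.2.2.1), (v.1.1.2.2, v.1.2.2.2))
  have hmaps : ∀ v ∈ s, pairs v ∈ u.1.1.divisorsAntidiag ×ˢ
      u.1.2.1.divisorsAntidiag ×ˢ u.1.2.2.divisorsAntidiag := by
    intro v hv
    obtain rfl := hs v hv
    obtain ⟨hn₁, hn₂, hn₃, hm₁, hm₂, hm₃, -⟩ := v.2
    simp [pairs, toPlane, *]
  have hinj : Set.InjOn pairs s := fun v _ w _ h => by
    simp only [pairs, Prod.mk.injEq] at h
    ext <;> simp [h]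
  simpa [mul_assoc] using card_le_card_of_injOn pairs hmaps hinj

lemma norm_one_div_cpow_le (v : nonzeroSolutions a₁ a₂ a₃) {α₁ α₂ α₃ β₁ β₂ β₃ : ℂ}
    {σ : ℝ}
    (hα₁ : σ ≤ α₁.re) (hα₂ : σ ≤ α₂.re) (hα₃ : σ ≤ α₃.re)
    (hβ₁ : σ ≤ β₁.re) (hβ₂ : σ ≤ β₂.re) (hβ₃ : σ ≤ β₃.re) :
    ‖1 / (((|v.1.1.1| : ℤ) : ℂ) ^ α₁ * ((|v.1.2.1| : ℤ) : ℂ) ^ β₁ *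
        ((|v.1.1.2.1| : ℤ) : ℂ) ^ α₂ * ((|v.1.2.2.1| : ℤ) : ℂ) ^ β₂ *
        ((|v.1.1.2.2| : ℤ) : ℂ) ^ α₃ * ((|v.1.2.2.2| : ℤ) : ℂ) ^ β₃)‖ ≤
      (|((toPlane v).1.1 : ℝ)| * |((toPlane v).1.2.1 : ℝ)| *
        |((toPlane v).1.2.2 : ℝ)|) ^ (-σ) := by
  obtain ⟨hn₁, hn₂, hn₃, hm₁, hm₂, hm₃, -⟩ := v.2
  calc _ ≤ 1 / (|(v.1.1.1 : ℝ)| ^ σ * |(v.1.2.1 : ℝ)| ^ σ * |(v.1.1.2.1 : ℝ)| ^ σ *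
          |(v.1.2.2.1 : ℝ)| ^ σ * |(v.1.1.2.2 : ℝ)| ^ σ * |(v.1.2.2.2 : ℝ)| ^ σ) := by
        simp only [norm_div, norm_one, norm_mul]
        gcongr <;> exact rpow_le_norm_intAbs_cpow ‹_› ‹_›
    _ = _ := by
        simp only [toPlane, Int.cast_mul, abs_mul]
        rw [rpow_neg (by positivity), inv_eq_one_div]
        simp (disch := positivity) only [mul_rpow]
        ring

end nonzeroSolutions

/-- Absolute convergence of the parabolic Eisenstein series `𝒜_a(α, β)` in the
range `Re(αᵢ), Re(βᵢ) > 2/3`.  Here `v.1 = (n₁, n₂, n₃)` and `v.2 = (m₁, m₂, m₃)`,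
and `|n|^α` denotes the principal complex power of the positive real `|n|`. -/
theorem statement6 (a₁ a₂ a₃ : ℤ) (ha₁ : a₁ ≠ 0) (ha₂ : a₂ ≠ 0) (ha₃ : a₃ ≠ 0)
    (α₁ α₂ α₃ β₁ β₂ β₃ : ℂ)
    (hα₁ : 2 / 3 < α₁.re) (hα₂ : 2 / 3 < α₂.re) (hα₃ : 2 / 3 < α₃.re)
    (hβ₁ : 2 / 3 < β₁.re) (hβ₂ : 2 / 3 < β₂.re) (hβ₃ : 2 / 3 < β₃.re) :
    Summable (fun v : {v : (ℤ × ℤ × ℤ) × (ℤ × ℤ × ℤ) //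
        v.1.1 ≠ 0 ∧ v.1.2.1 ≠ 0 ∧ v.1.2.2 ≠ 0 ∧
        v.2.1 ≠ 0 ∧ v.2.2.1 ≠ 0 ∧ v.2.2.2 ≠ 0 ∧
        a₁ * v.1.1 * v.2.1 + a₂ * v.1.2.1 * v.2.2.1 + a₃ * v.1.2.2 * v.2.2.2 = 0} =>
      1 / (((|v.val.1.1| : ℤ) : ℂ) ^ α₁ * ((|v.val.2.1| : ℤ) : ℂ) ^ β₁ *
        ((|v.val.1.2.1| : ℤ) : ℂ) ^ α₂ * ((|v.val.2.2.1| : ℤ) : ℂ) ^ β₂ *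
        ((|v.val.1.2.2| : ℤ) : ℂ) ^ α₃ * ((|v.val.2.2.2| : ℤ) : ℂ) ^ β₃)) := by
  set σ := min (min α₁.re (min α₂.re α₃.re)) (min β₁.re (min β₂.re β₃.re))
  have hσ : 2 / 3 < σ := by simp only [σ, lt_min_iff]; exact ⟨⟨hα₁, hα₂, hα₃⟩, hβ₁, hβ₂, hβ₃⟩
  refine Summable.of_norm <| summable_of_le_comp_of_card_fiber_le (fun _ => norm_nonneg _)
    (nonzeroSolutions.toPlane (a₁ := a₁) (a₂ := a₂) (a₃ := a₃)) (fun _ => by positivity)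
    (fun v => nonzeroSolutions.norm_one_div_cpow_le v (σ := σ)
      (by simp [σ]) (by simp [σ]) (by simp [σ]) (by simp [σ]) (by simp [σ]) (by simp [σ]))
    nonzeroSolutions.card_le_of_toPlane_eq
    (nonzeroPlanePoints.summable_card_divisorsAntidiag_mul_rpow_neg ha₁ ha₂ ha₃ hσ)
end

section
/- Let f : ℝ⁷ → ℂ be a function of compact support. Then Σ over (x₁,x₂,x₃,z₁,z₂,z₃,z₄) ∈ (ℤ∖{0})³ × ℤ_{>0}⁴ satisfying gcd(z₁,z₂) = gcd(z₁,z₃) = gcd(z₂,z₃) = 1 and gcd(x₁, z₂z₃z₄) = gcd(x₂, z₁z₃z₄) = gcd(x₃, z₁z₂z₄) = 1 of f(x₁,z₁,x₂,z₂,x₃,z₃,z₄) equals Σ over e = (e₁,e₂,e₃) ∈ ℤ_{>0}³, ℓ = (ℓ₁₂,ℓ₁₃,ℓ₂₃) ∈ ℤ_{>0}³, d = (d₁₂,d₁₃,d₂₁,d₂₃,d₃₁,d₃₂) ∈ ℤ_{>0}⁶ of μ(e,d,ℓ) · Σ over (x₁,x₂,x₃,z₁,z₂,z₃,z₄) ∈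 (ℤ∖{0})³ × ℤ_{>0}⁴ of f(b₁x₁, c₁z₁, b₂x₂, c₂z₂, b₃x₃, c₃z₃, c₄z₄), where all sums have only finitely many nonzero terms. -/
/-!
Substituting `u = (b₁x₁, c₁z₁, b₂x₂, c₂z₂, b₃x₃, c₃z₃, c₄z₄)` turns the right-hand side into
`Σ_u f(u) Σ_w μ(e,d,ℓ)`, the inner sum running over the indices whose scale factors divide the
corresponding coordinates of `u`. That condition says that each of the twelve indices divides the
gcd of the two coordinates of `u` in whose scale factors it occurs, so the inner sum factors into
twelve sums `Σ_{d ∣ n} μ(d) = [n = 1]`, whose product is the indicator of the coprimality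
conditions. Compact support of `f` leaves only finitely many nonzero terms everywhere.
-/

open scoped BigOperators

namespace Statement10

/-- Index `(e₁, e₂, e₃, ℓ₁₂, ℓ₁₃, ℓ₂₃, d₁₂, d₁₃, d₂₁, d₂₃, d₃₁, d₃₂)` of positive
integers, grouped as `e × ℓ × d`. -/
abbrev Idx := (ℕ+ × ℕ+ × ℕ+) × (ℕ+ × ℕ+ × ℕ+) × (ℕ+ × ℕ+ × ℕ+ × ℕ+ × ℕ+ × ℕ+)

/-- `b₁ = [e₁, d₁₂, d₁₃]`. -/
def B1 : Idx → ℕ := fun ((e₁, _, _), _, (d₁₂, d₁₃, _, _, _, _)) =>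
  Nat.lcm (Nat.lcm e₁ d₁₂) d₁₃
/-- `b₂ = [e₂, d₂₁, d₂₃]`. -/
def B2 : Idx → ℕ := fun ((_, e₂, _), _, (_, _, d₂₁, d₂₃, _, _)) =>
  Nat.lcm (Nat.lcm e₂ d₂₁) d₂₃
/-- `b₃ = [e₃, d₃₁, d₃₂]`. -/
def B3 : Idx → ℕ := fun ((_, _, e₃), _, (_, _, _, _, d₃₁, d₃₂)) =>
  Nat.lcm (Nat.lcm e₃ d₃₁) d₃₂
/-- `c₁ = [d₂₁, d₃₁, ℓ₁₂, ℓ₁₃]`. -/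
def C1 : Idx → ℕ := fun (_, (l₁₂, l₁₃, _), (_, _, d₂₁, _, d₃₁, _)) =>
  Nat.lcm (Nat.lcm (Nat.lcm d₂₁ d₃₁) l₁₂) l₁₃
/-- `c₂ = [d₁₂, d₃₂, ℓ₁₂, ℓ₂₃]`. -/
def C2 : Idx → ℕ := fun (_, (l₁₂, _, l₂₃), (d₁₂, _, _, _, _, d₃₂)) =>
  Nat.lcm (Nat.lcm (Nat.lcm d₁₂ d₃₂) l₁₂) l₂₃
/-- `c₃ = [d₁₃, d₂₃, ℓ₁₃, ℓ₂₃]`. -/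
def C3 : Idx → ℕ := fun (_, (_, l₁₃, l₂₃), (_, d₁₃, _, d₂₃, _, _)) =>
  Nat.lcm (Nat.lcm (Nat.lcm d₁₃ d₂₃) l₁₃) l₂₃
/-- `c₄ = [e₁, e₂, e₃]`. -/
def C4 : Idx → ℕ := fun ((e₁, e₂, e₃), _, _) => Nat.lcm (Nat.lcm e₁ e₂) e₃

/-- `μ(e, d, ℓ) = μ(ℓ₁₂)μ(ℓ₁₃)μ(ℓ₂₃) ∏ᵢ μ(eᵢ) ∏_{i≠j} μ(d_{ij})`. -/
def muIdx : Idx → ℤ := fun ((e₁, e₂, e₃), (l₁₂, l₁₃, l₂₃), (d₁₂, d₁₃, d₂₁, d₂₃, d₃₁, d₃₂)) =>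
  ArithmeticFunction.moebius l₁₂ * ArithmeticFunction.moebius l₁₃ *
    ArithmeticFunction.moebius l₂₃ *
  (ArithmeticFunction.moebius e₁ * ArithmeticFunction.moebius e₂ *
    ArithmeticFunction.moebius e₃) *
  (ArithmeticFunction.moebius d₁₂ * ArithmeticFunction.moebius d₁₃ *
    ArithmeticFunction.moebius d₂₁ * ArithmeticFunction.moebius d₂₃ *
    ArithmeticFunction.moebius d₃₁ * ArithmeticFunction.moebius d₃₂)

/-- Tuples `((x₁,x₂,x₃),(z₁,z₂,z₃,z₄))` with `xᵢ ≠ 0` and `zⱼ > 0`. -/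
def Tset : Set ((ℤ × ℤ × ℤ) × (ℤ × ℤ × ℤ × ℤ)) :=
  {v | v.1.1 ≠ 0 ∧ v.1.2.1 ≠ 0 ∧ v.1.2.2 ≠ 0 ∧
    0 < v.2.1 ∧ 0 < v.2.2.1 ∧ 0 < v.2.2.2.1 ∧ 0 < v.2.2.2.2}

/-- Tuples in `Tset` which moreover satisfy the coprimality conditions. -/
def Sset : Set ((ℤ × ℤ × ℤ) × (ℤ × ℤ × ℤ × ℤ)) :=
  {v | v ∈ Tset ∧
    Int.gcd v.2.1 v.2.2.1 = 1 ∧ Int.gcd v.2.1 v.2.2.2.1 = 1 ∧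
    Int.gcd v.2.2.1 v.2.2.2.1 = 1 ∧
    Int.gcd v.1.1 (v.2.2.1 * v.2.2.2.1 * v.2.2.2.2) = 1 ∧
    Int.gcd v.1.2.1 (v.2.1 * v.2.2.2.1 * v.2.2.2.2) = 1 ∧
    Int.gcd v.1.2.2 (v.2.1 * v.2.2.1 * v.2.2.2.2) = 1}

/-- Evaluation `f(x₁, z₁, x₂, z₂, x₃, z₃, z₄)`. -/
def ev (f : ℝ × ℝ × ℝ × ℝ × ℝ × ℝ × ℝ → ℂ)
    (v : (ℤ × ℤ × ℤ) × (ℤ × ℤ × ℤ × ℤ)) : ℂ :=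
  f ((v.1.1 : ℝ), (v.2.1 : ℝ), (v.1.2.1 : ℝ), (v.2.2.1 : ℝ), (v.1.2.2 : ℝ),
    (v.2.2.2.1 : ℝ), (v.2.2.2.2 : ℝ))

/-- Evaluation `f(b₁x₁, c₁z₁, b₂x₂, c₂z₂, b₃x₃, c₃z₃, c₄z₄)`. -/
def evScaled (f : ℝ × ℝ × ℝ × ℝ × ℝ × ℝ × ℝ → ℂ) (w : Idx)
    (v : (ℤ × ℤ × ℤ) × (ℤ × ℤ × ℤ × ℤ)) : ℂ :=
  f ((B1 w : ℝ) * (v.1.1 : ℝ), (C1 w : ℝ) * (v.2.1 : ℝ),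
    (B2 w : ℝ) * (v.1.2.1 : ℝ), (C2 w : ℝ) * (v.2.2.1 : ℝ),
    (B3 w : ℝ) * (v.1.2.2 : ℝ), (C3 w : ℝ) * (v.2.2.2.1 : ℝ),
    (C4 w : ℝ) * (v.2.2.2.2 : ℝ))

open Finset Function
open scoped ArithmeticFunction.Moebius

noncomputable def pdivisors (n : ℕ) : Finset ℕ+ := n.divisors.preimage (↑) PNat.coe_injective.injOn

theorem mem_pdivisors {n : ℕ} {d : ℕ+} : d ∈ pdivisors n ↔ (d : ℕ) ∣ n ∧ n ≠ 0 := by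
  rw [pdivisors, mem_preimage, Nat.mem_divisors]

theorem sum_moebius_pdivisors (n : ℕ) :
    ∑ d ∈ pdivisors n, (μ d : ℤ) = if n = 1 then 1 else 0 := by
  rw [pdivisors, sum_preimage _ _ _ (fun d : ℕ => μ d)
    fun d hd hdr => absurd ⟨⟨d, Nat.pos_of_mem_divisors hd⟩, rfl⟩ hdr,
    ← ArithmeticFunction.coe_mul_zeta_apply, ArithmeticFunction.moebius_mul_coe_zeta,
    ArithmeticFunction.one_apply]

theorem sum_muIdx_product (E₁ E₂ E₃ L₁₂ L₁₃ L₂₃ D₁₂ D₁₃ D₂₁ D₂₃ D₃₁ D₃₂ : Finset ℕ+) :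
    ∑ w ∈ (E₁ ×ˢ E₂ ×ˢ E₃) ×ˢ (L₁₂ ×ˢ L₁₃ ×ˢ L₂₃) ×ˢ
        (D₁₂ ×ˢ D₁₃ ×ˢ D₂₁ ×ˢ D₂₃ ×ˢ D₃₁ ×ˢ D₃₂), muIdx w =
      (∑ e ∈ E₁, μ e) * (∑ e ∈ E₂, μ e) * (∑ e ∈ E₃, μ e) *
      (∑ l ∈ L₁₂, μ l) * (∑ l ∈ L₁₃, μ l) * (∑ l ∈ L₂₃, μ l) *
      (∑ d ∈ D₁₂, μ d) * (∑ d ∈ D₁₃, μ d) * (∑ d ∈ D₂₁, μ d) *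
      (∑ d ∈ D₂₃, μ d) * (∑ d ∈ D₃₁, μ d) * (∑ d ∈ D₃₂, μ d) := by
  simp only [sum_product, muIdx, ← mul_sum, ← sum_mul]
  ring

abbrev Point := (ℤ × ℤ × ℤ) × (ℤ × ℤ × ℤ × ℤ)

theorem scale_factors_pos (w : Idx) :
    0 < B1 w ∧ 0 < B2 w ∧ 0 < B3 w ∧ 0 < C1 w ∧ 0 < C2 w ∧ 0 < C3 w ∧ 0 < C4 w := by
  simp only [B1, B2, B3, C1, C2, C3, C4]
  refine ⟨?_, ?_, ?_, ?_, ?_, ?_, ?_⟩ <;> positivity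

def scale (w : Idx) (v : Point) : Point :=
  (((B1 w : ℤ) * v.1.1, (B2 w : ℤ) * v.1.2.1, (B3 w : ℤ) * v.1.2.2),
    ((C1 w : ℤ) * v.2.1, (C2 w : ℤ) * v.2.2.1, (C3 w : ℤ) * v.2.2.2.1,
      (C4 w : ℤ) * v.2.2.2.2))

def ScaleDvd (w : Idx) (u : Point) : Prop :=
  (B1 w : ℤ) ∣ u.1.1 ∧ (B2 w : ℤ) ∣ u.1.2.1 ∧ (B3 w : ℤ) ∣ u.1.2.2 ∧
    (C1 w : ℤ) ∣ u.2.1 ∧ (C2 w : ℤ) ∣ u.2.2.1 ∧ (C3 w : ℤ) ∣ u.2.2.2.1 ∧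
    (C4 w : ℤ) ∣ u.2.2.2.2

theorem evScaled_eq_ev_comp_scale (f : ℝ × ℝ × ℝ × ℝ × ℝ × ℝ × ℝ → ℂ) (w : Idx) :
    evScaled f w = ev f ∘ scale w := by
  funext v
  simp only [evScaled, ev, scale, comp_apply]
  push_cast
  rfl

theorem scale_injective (w : Idx) : Injective (scale w) := by
  obtain ⟨h₁, h₂, h₃, h₄, h₅, h₆, h₇⟩ := scale_factors_pos w
  rintro ⟨⟨_, _, _⟩, _, _, _, _⟩ ⟨⟨_, _, _⟩, _, _, _, _⟩ h
  simp_all [scale, h₁.ne', h₂.ne', h₃.ne', h₄.ne', h₅.ne', h₆.ne', h₇.ne']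

theorem image_scale_Tset (w : Idx) : scale w '' Tset = {u ∈ Tset | ScaleDvd w u} := by
  obtain ⟨h₁, h₂, h₃, h₄, h₅, h₆, h₇⟩ := scale_factors_pos w
  ext u
  constructor
  · rintro ⟨v, ⟨hx₁, hx₂, hx₃, hz₁, hz₂, hz₃, hz₄⟩, rfl⟩
    refine ⟨⟨?_, ?_, ?_, ?_, ?_, ?_, ?_⟩, ?_, ?_, ?_, ?_, ?_, ?_, ?_⟩ <;>
      simp only [scale] <;> first | positivity | exact dvd_mul_right _ _
  · rintro ⟨⟨hx₁, hx₂, hx₃, hz₁, hz₂, hz₃, hz₄⟩,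
      ⟨y₁, hy₁⟩, ⟨y₂, hy₂⟩, ⟨y₃, hy₃⟩, ⟨y₄, hy₄⟩, ⟨y₅, hy₅⟩, ⟨y₆, hy₆⟩, ⟨y₇, hy₇⟩⟩
    refine ⟨((y₁, y₂, y₃), (y₄, y₅, y₆, y₇)),
      ⟨right_ne_zero_of_mul (hy₁ ▸ hx₁), right_ne_zero_of_mul (hy₂ ▸ hx₂),
        right_ne_zero_of_mul (hy₃ ▸ hx₃), pos_of_mul_pos_right (hy₄ ▸ hz₁) (Int.natCast_nonneg _),
        pos_of_mul_pos_right (hy₅ ▸ hz₂) (Int.natCast_nonneg _),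
        pos_of_mul_pos_right (hy₆ ▸ hz₃) (Int.natCast_nonneg _),
        pos_of_mul_pos_right (hy₇ ▸ hz₄) (Int.natCast_nonneg _)⟩, ?_⟩
    simp only [scale, ← hy₁, ← hy₂, ← hy₃, ← hy₄, ← hy₅, ← hy₆, ← hy₇]

-- `ScaleDvd w u` says that each of `eᵢ, ℓᵢⱼ, dᵢⱼ` divides the two coordinates of `u` in whose
-- scale factors it occurs, i.e. their gcd.
noncomputable def divisorBox : Point → Finset Idx := fun ((x₁, x₂, x₃), (z₁, z₂, z₃, z₄)) =>
  (pdivisors (x₁.gcd z₄) ×ˢ pdivisors (x₂.gcd z₄) ×ˢ pdivisors (x₃.gcd z₄)) ×ˢ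
    (pdivisors (z₁.gcd z₂) ×ˢ pdivisors (z₁.gcd z₃) ×ˢ pdivisors (z₂.gcd z₃)) ×ˢ
    (pdivisors (x₁.gcd z₂) ×ˢ pdivisors (x₁.gcd z₃) ×ˢ pdivisors (x₂.gcd z₁) ×ˢ
      pdivisors (x₂.gcd z₃) ×ˢ pdivisors (x₃.gcd z₁) ×ˢ pdivisors (x₃.gcd z₂))

theorem mem_divisorBox {u : Point} (hu : u ∈ Tset) {w : Idx} :
    w ∈ divisorBox u ↔ ScaleDvd w u := by
  obtain ⟨⟨x₁, x₂, x₃⟩, z₁, z₂, z₃, z₄⟩ := u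
  obtain ⟨hx₁, hx₂, hx₃, hz₁, hz₂, hz₃, hz₄⟩ := hu
  simp only [divisorBox, ScaleDvd, B1, B2, B3, C1, C2, C3, C4, mem_product, mem_pdivisors,
    Int.natCast_dvd, Nat.lcm_dvd_iff, Int.gcd_eq_natAbs, Nat.dvd_gcd_iff, ne_eq,
    Nat.gcd_eq_zero_iff, Int.natAbs_eq_zero, hx₁, hx₂, hx₃, hz₁.ne', hz₂.ne', hz₃.ne', hz₄.ne',
    and_false, not_false_eq_true, and_true]
  tauto

open Classical in
theorem sum_muIdx_divisorBox {u : Point} (hu : u ∈ Tset) :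
    ∑ w ∈ divisorBox u, muIdx w = if u ∈ Sset then 1 else 0 := by
  obtain ⟨⟨x₁, x₂, x₃⟩, z₁, z₂, z₃, z₄⟩ := u
  simp only [divisorBox, sum_muIdx_product, sum_moebius_pdivisors, ite_zero_mul_ite_zero, mul_one]
  refine if_congr ?_ rfl rfl
  simp only [Sset, Set.mem_ofPred_eq, hu, true_and, Int.gcd_eq_natAbs, Int.natAbs_mul,
    ← Nat.coprime_iff_gcd_eq_one, Nat.coprime_mul_iff_right, Nat.coprime_comm (m := z₄.natAbs)]
  tauto

theorem finite_support_ev {f : ℝ × ℝ × ℝ × ℝ × ℝ × ℝ × ℝ → ℂ} (hf : HasCompactSupport f) :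
    (support (ev f)).Finite := by
  obtain ⟨R, hR⟩ := hf.isBounded.subset_closedBall 0
  refine (isCompact_closedBall (0 : Point) R).finite_of_discrete.subset fun v hv => ?_
  have hvR := hR (subset_tsupport f hv)
  simp only [Metric.mem_closedBall, dist_zero_right, Prod.norm_def, max_le_iff,
    Int.norm_cast_real] at hvR ⊢
  tauto

section Rearrangement

variable {R : Type*} [CommRing R] {g : Point → R} (hg : (Tset ∩ support g).Finite)
include hg

open Classical

theorem finsum_Tset_comp_scale (w : Idx) :
    ∑ᶠ v ∈ Tset, g (scale w v) = ∑ u ∈ hg.toFinset with ScaleDvd w u, g u := by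
  rw [← finsum_mem_image (f := g) (scale_injective w).injOn, image_scale_Tset]
  refine finsum_mem_eq_sum_of_inter_support_eq _ (Set.ext fun u => ?_)
  simp only [Set.mem_inter_iff, Set.mem_ofPred_eq, coe_filter, Set.Finite.mem_toFinset]
  tauto

theorem support_subset_biUnion_divisorBox :
    support (fun w => (muIdx w : R) * ∑ᶠ v ∈ Tset, g (scale w v)) ⊆
      hg.toFinset.biUnion divisorBox := by
  intro w hw
  rw [mem_support, finsum_Tset_comp_scale hg] at hw
  obtain ⟨u, hu, -⟩ := exists_ne_zero_of_sum_ne_zero (right_ne_zero_of_mul hw)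
  rw [mem_filter, hg.mem_toFinset] at hu
  exact mem_biUnion.2 ⟨u, hg.mem_toFinset.2 hu.1, (mem_divisorBox hu.1.1).2 hu.2⟩

theorem finsum_Sset_eq_finsum_moebius :
    ∑ᶠ u ∈ Sset, g u = ∑ᶠ w, (muIdx w : R) * ∑ᶠ v ∈ Tset, g (scale w v) := by
  rw [finsum_eq_sum_of_support_subset _ (support_subset_biUnion_divisorBox hg)]
  simp_rw [finsum_Tset_comp_scale hg, mul_sum]
  rw [sum_comm' (t' := hg.toFinset) (s' := divisorBox) ?_]
  · rw [finsum_mem_eq_sum_of_inter_support_eq g (t := {u ∈ hg.toFinset | u ∈ Sset}) ?_,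
      sum_filter]
    · refine sum_congr rfl fun u hu => ?_
      rw [← sum_mul, ← Int.cast_sum, sum_muIdx_divisorBox (hg.mem_toFinset.1 hu).1]
      split_ifs <;> simp
    · ext u
      simp only [Set.mem_inter_iff, coe_filter, Set.Finite.mem_toFinset, Set.mem_ofPred_eq]
      exact ⟨fun h => ⟨⟨⟨h.1.1, h.2⟩, h.1⟩, h.2⟩, fun h => ⟨h.1.2, h.2⟩⟩
  · intro w u
    simp only [mem_biUnion, mem_filter]
    constructor
    · rintro ⟨-, hu, hdvd⟩
      exact ⟨(mem_divisorBox (hg.mem_toFinset.1 hu).1).2 hdvd, hu⟩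
    · rintro ⟨hw, hu⟩
      exact ⟨⟨u, hu, hw⟩, hu, (mem_divisorBox (hg.mem_toFinset.1 hu).1).1 hw⟩

end Rearrangement

theorem statement10 (f : ℝ × ℝ × ℝ × ℝ × ℝ × ℝ × ℝ → ℂ) (hf : HasCompactSupport f) :
    {v ∈ Sset | ev f v ≠ 0}.Finite ∧
    (∀ w : Idx, {v ∈ Tset | evScaled f w v ≠ 0}.Finite) ∧
    {w : Idx | (muIdx w : ℂ) * ∑ᶠ v ∈ Tset, evScaled f w v ≠ 0}.Finite ∧
    ∑ᶠ v ∈ Sset, ev f v = ∑ᶠ w : Idx, (muIdx w : ℂ) * ∑ᶠ v ∈ Tset, evScaled f w v := by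
  have hev := finite_support_ev hf
  have hT := hev.inter_of_right Tset
  simp only [evScaled_eq_ev_comp_scale, comp_apply]
  exact ⟨hev.subset fun v hv => hv.2,
    fun w => (hev.preimage (scale_injective w).injOn).subset fun v hv => hv.2,
    (finite_toSet _).subset (support_subset_biUnion_divisorBox hT),
    finsum_Sset_eq_finsum_moebius hT⟩

end Statement10
end

section
/- For every ε > 0 there exists a constant C_ε > 0 with the following property. Let u₁,u₂,u₃,w₁,w₂,w₃,w₄,κ be real numbers satisfying: uᵢ ≥ κ, wᵢ ≥ κ and uᵢ + w₄ − 1 − ε ≥ κ for all i ∈ {1,2,3}; w₄ ≥ 0; κ ≥ 0; uᵢ + w_j − κ > 1 + ε for all i,j ∈ {1,2,3} with i ≠ j; and wᵢ + w_j − κ > 1 + ε for all 1 ≤ i < j ≤ 3. Then Σ over e,ℓ ∈ ℤ_{>0}³ and d ∈ ℤ_{>0}⁶ of max(b₁c₁, b₂c₂, b₃c₃)^κ / (b₁^{u₁} b₂^{u₂} b₃^{u₃} c₁^{w₁} c₂^{w₂} c₃^{w₃} c₄^{w₄}) ≤ C_ε. -/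
/-!
Let `L` be the lcm of the twelve coordinates `e, ℓ, d`. Every coordinate divides exactly two of
the seven numbers `b₁, b₂, b₃, c₁, c₂, c₃, c₄`, and the hypotheses say that, once the exponents
of `bᵢ` and `cᵢ` are lowered by `κ`, the exponents of these two numbers add up to at least
`1 + ε`. Comparing `p`-adic valuations prime by prime gives
`L^(1+ε) (bᵢcᵢ)^κ ≤ b₁^u₁ ⋯ c₄^w₄` for each `i`, so every summand is at most `L^-(1+ε)`.
At most `τ(n)¹²` indices have `L = n`, and `τ(n) ≪_δ n^δ`, so `∑ L^-(1+ε)` converges; its value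
is the constant.
-/

namespace Statement11

/-- Index `(e₁, e₂, e₃, ℓ₁₂, ℓ₁₃, ℓ₂₃, d₁₂, d₁₃, d₂₁, d₂₃, d₃₁, d₃₂)` of positive
integers, grouped as `e × ℓ × d`. -/
abbrev Idx := (ℕ+ × ℕ+ × ℕ+) × (ℕ+ × ℕ+ × ℕ+) × (ℕ+ × ℕ+ × ℕ+ × ℕ+ × ℕ+ × ℕ+)

/-- `b₁ = [e₁, d₁₂, d₁₃]`. -/
def B1 : Idx → ℕ := fun ((e₁, _, _), _, (d₁₂, d₁₃, _, _, _, _)) =>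
  Nat.lcm (Nat.lcm e₁ d₁₂) d₁₃
/-- `b₂ = [e₂, d₂₁, d₂₃]`. -/
def B2 : Idx → ℕ := fun ((_, e₂, _), _, (_, _, d₂₁, d₂₃, _, _)) =>
  Nat.lcm (Nat.lcm e₂ d₂₁) d₂₃
/-- `b₃ = [e₃, d₃₁, d₃₂]`. -/
def B3 : Idx → ℕ := fun ((_, _, e₃), _, (_, _, _, _, d₃₁, d₃₂)) =>
  Nat.lcm (Nat.lcm e₃ d₃₁) d₃₂
/-- `c₁ = [d₂₁, d₃₁, ℓ₁₂, ℓ₁₃]`. -/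
def C1 : Idx → ℕ := fun (_, (l₁₂, l₁₃, _), (_, _, d₂₁, _, d₃₁, _)) =>
  Nat.lcm (Nat.lcm (Nat.lcm d₂₁ d₃₁) l₁₂) l₁₃
/-- `c₂ = [d₁₂, d₃₂, ℓ₁₂, ℓ₂₃]`. -/
def C2 : Idx → ℕ := fun (_, (l₁₂, _, l₂₃), (d₁₂, _, _, _, _, d₃₂)) =>
  Nat.lcm (Nat.lcm (Nat.lcm d₁₂ d₃₂) l₁₂) l₂₃
/-- `c₃ = [d₁₃, d₂₃, ℓ₁₃, ℓ₂₃]`. -/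
def C3 : Idx → ℕ := fun (_, (_, l₁₃, l₂₃), (_, d₁₃, _, d₂₃, _, _)) =>
  Nat.lcm (Nat.lcm (Nat.lcm d₁₃ d₂₃) l₁₃) l₂₃
/-- `c₄ = [e₁, e₂, e₃]`. -/
def C4 : Idx → ℕ := fun ((e₁, e₂, e₃), _, _) => Nat.lcm (Nat.lcm e₁ e₂) e₃

/-- The summand `max(b₁c₁, b₂c₂, b₃c₃)^κ / (b₁^{u₁}b₂^{u₂}b₃^{u₃}c₁^{w₁}c₂^{w₂}c₃^{w₃}c₄^{w₄})`. -/
noncomputable def term (u₁ u₂ u₃ w₁ w₂ w₃ w₄ κ : ℝ) (w : Idx) : ℝ :=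
  ((max (B1 w * C1 w) (max (B2 w * C2 w) (B3 w * C3 w)) : ℕ) : ℝ) ^ κ /
    ((B1 w : ℝ) ^ u₁ * (B2 w : ℝ) ^ u₂ * (B3 w : ℝ) ^ u₃ * (C1 w : ℝ) ^ w₁ *
      (C2 w : ℝ) ^ w₂ * (C3 w : ℝ) ^ w₃ * (C4 w : ℝ) ^ w₄)

open Finset

lemma exists_add_one_le_mul_pow {r : ℝ} (hr : 1 < r) :
    ∃ C : ℝ, 1 ≤ C ∧ ∀ a : ℕ, (a : ℝ) + 1 ≤ C * r ^ a := by
  refine ⟨max 1 (r - 1)⁻¹, le_max_left _ _, fun a => ?_⟩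
  have hC : 1 ≤ max 1 (r - 1)⁻¹ * (r - 1) := calc
    1 = (r - 1)⁻¹ * (r - 1) := (inv_mul_cancel₀ (sub_pos.2 hr).ne').symm
    _ ≤ _ := mul_le_mul_of_nonneg_right (le_max_right _ _) (sub_pos.2 hr).le
  have bernoulli : 1 + a * (r - 1) ≤ r ^ a := by
    simpa using one_add_mul_le_pow (by linarith : (-2 : ℝ) ≤ r - 1) a
  nlinarith [le_max_left 1 (r - 1)⁻¹, (Nat.cast_nonneg a : (0 : ℝ) ≤ a)]

lemma card_divisors_le_rpow {δ : ℝ} (hδ : 0 < δ) :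
    ∃ K : ℝ, 0 < K ∧ ∀ n : ℕ, n ≠ 0 → (#n.divisors : ℝ) ≤ K * (n : ℝ) ^ δ := by
  obtain ⟨C, hC, hCa⟩ := exists_add_one_le_mul_pow (Real.one_lt_rpow one_lt_two hδ)
  obtain ⟨Q, hQ⟩ := exists_nat_ge ((2 : ℝ) ^ δ⁻¹)
  refine ⟨C ^ Q, by positivity, fun n hn => ?_⟩
  -- small primes cost a factor `C` each, large primes (`2 ≤ p ^ δ`) nothing
  have hp : ∀ p ∈ n.primeFactors, ((n.factorization p : ℝ) + 1) ≤
      (if p < Q then C else 1) * ((p : ℝ) ^ δ) ^ n.factorization p := by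
    intro p hp
    have hp2 : (2 : ℝ) ≤ p := by exact_mod_cast (Nat.prime_of_mem_primeFactors hp).two_le
    split_ifs with hpQ
    · calc _ ≤ C * ((2 : ℝ) ^ δ) ^ n.factorization p := hCa _
        _ ≤ _ := by gcongr
    · have h2 : (2 : ℝ) ≤ (p : ℝ) ^ δ := calc
        (2 : ℝ) = ((2 : ℝ) ^ δ⁻¹) ^ δ := by
          rw [← Real.rpow_mul zero_le_two, inv_mul_cancel₀ hδ.ne', Real.rpow_one]
        _ ≤ (p : ℝ) ^ δ := by gcongr; exact hQ.trans (by exact_mod_cast not_lt.1 hpQ)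
      calc _ ≤ (2 : ℝ) ^ n.factorization p := by exact_mod_cast Nat.lt_two_pow_self
        _ ≤ _ := by rw [one_mul]; gcongr
  have hsmall : ∏ p ∈ n.primeFactors, (if p < Q then C else 1) ≤ C ^ Q := by
    rw [prod_ite, prod_const, prod_const_one, mul_one]
    exact pow_le_pow_right₀ hC <| (card_le_card fun p hp => mem_range.2 (mem_filter.1 hp).2).trans
      (card_range Q).le
  have hlarge : ∏ p ∈ n.primeFactors, ((p : ℝ) ^ δ) ^ n.factorization p = (n : ℝ) ^ δ := by
    simp_rw [← Real.rpow_natCast, ← Real.rpow_mul (Nat.cast_nonneg _), mul_comm δ,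
      Real.rpow_mul (Nat.cast_nonneg _), Real.rpow_natCast]
    rw [Real.finsetProd_rpow _ _ fun p _ => by positivity]
    exact_mod_cast congrArg (fun x : ℕ => (x : ℝ) ^ δ)
      (Nat.prod_primeFactors_pow_factorization hn).symm
  calc (#n.divisors : ℝ) = ∏ p ∈ n.primeFactors, ((n.factorization p : ℝ) + 1) := by
        rw [Nat.card_divisors hn]; push_cast; rfl
    _ ≤ ∏ p ∈ n.primeFactors, ((if p < Q then C else 1) * ((p : ℝ) ^ δ) ^ n.factorization p) :=
        prod_le_prod (fun _ _ => by positivity) hp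
    _ ≤ C ^ Q * (n : ℝ) ^ δ := by
        rw [prod_mul_distrib, hlarge]
        gcongr

lemma summable_comp_of_card_fiber_le {α : Type*} {f : α → ℕ} {g : ℕ → ℝ} (hg : ∀ n, 0 ≤ g n)
    {c : ℕ → ℕ} (hfib : ∀ n (S : Finset α), #{a ∈ S | f a = n} ≤ c n)
    (hsum : Summable fun n => c n * g n) : Summable fun a => g (f a) := by
  classical
  refine summable_of_sum_le (c := ∑' n, c n * g n) (fun a => hg _) fun S => ?_
  calc ∑ a ∈ S, g (f a) = ∑ n ∈ S.image f, ∑ a ∈ S with f a = n, g (f a) :=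
        (sum_fiberwise_of_maps_to (fun a ha => mem_image_of_mem f ha) _).symm
    _ = ∑ n ∈ S.image f, #{a ∈ S | f a = n} * g n := by
        refine sum_congr rfl fun n _ => ?_
        rw [sum_congr rfl fun a ha => by rw [(mem_filter.1 ha).2], sum_const, nsmul_eq_mul]
    _ ≤ ∑ n ∈ S.image f, c n * g n := by gcongr with n; exacts [hg n, hfib n S]
    _ ≤ ∑' n, c n * g n := hsum.sum_le_tsum _ fun n _ => mul_nonneg (Nat.cast_nonneg _) (hg n)

lemma rpow_le_prod_rpow_of_factorization_le {ι : Type*} (s : Finset ι) {n : ℕ} {m : ι → ℕ}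
    (hn : n ≠ 0) (hm : ∀ j ∈ s, m j ≠ 0) {t : ℝ} {y : ι → ℝ}
    (h : ∀ p, t * n.factorization p ≤ ∑ j ∈ s, y j * (m j).factorization p) :
    (n : ℝ) ^ t ≤ ∏ j ∈ s, (m j : ℝ) ^ y j := by
  have hm' : ∀ j ∈ s, (0 : ℝ) < m j := fun j hj => by
    exact_mod_cast Nat.pos_of_ne_zero (hm j hj)
  have hnpos : (0 : ℝ) < n := by exact_mod_cast Nat.pos_of_ne_zero hn
  have hN : n * ∏ j ∈ s, m j ≠ 0 := mul_ne_zero hn (prod_ne_zero_iff.2 hm)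
  set P := (n * ∏ j ∈ s, m j).primeFactors
  have hlog : ∀ k, k ∣ n * ∏ j ∈ s, m j →
      Real.log k = ∑ p ∈ P, k.factorization p * Real.log p := fun k hk => by
    rw [Real.log_nat_eq_sum_factorization]
    exact Finsupp.sum_of_support_subset _ (by simpa using Nat.primeFactors_mono hk hN) _
      (fun _ _ => by simp)
  have hrhs : Real.log (∏ j ∈ s, (m j : ℝ) ^ y j) =
      ∑ p ∈ P, (∑ j ∈ s, y j * (m j).factorization p) * Real.log p := by
    rw [Real.log_prod fun j hj => (Real.rpow_pos_of_pos (hm' j hj) _).ne']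
    simp_rw [sum_mul, mul_assoc]
    rw [sum_comm]
    refine sum_congr rfl fun j hj => ?_
    rw [Real.log_rpow (hm' j hj), hlog _ (dvd_mul_of_dvd_right (dvd_prod_of_mem m hj) n), mul_sum]
  rw [← Real.log_le_log_iff (by positivity)
      (prod_pos fun j hj => Real.rpow_pos_of_pos (hm' j hj) _),
    Real.log_rpow hnpos, hrhs, hlog n (dvd_mul_right _ _), mul_sum]
  refine sum_le_sum fun p _ => ?_
  rw [← mul_assoc]
  exact mul_le_mul_of_nonneg_right (h p) (Real.log_natCast_nonneg p)

lemma lcm_rpow_le_prod_rpow {ι κ : Type*} [Fintype ι] [Fintype κ] {v : κ → ℕ} {m : ι → ℕ}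
    (hm : ∀ j, m j ≠ 0) {y : ι → ℝ} (hy : ∀ j, 0 ≤ y j) {a b : κ → ι} (hab : ∀ k, a k ≠ b k)
    (ha : ∀ k, v k ∣ m (a k)) (hb : ∀ k, v k ∣ m (b k)) {t : ℝ}
    (ht : ∀ k, t ≤ y (a k) + y (b k)) :
    ((univ.lcm v : ℕ) : ℝ) ^ t ≤ ∏ j, (m j : ℝ) ^ y j := by
  classical
  have hv : ∀ k, v k ≠ 0 := fun k => ne_zero_of_dvd_ne_zero (hm _) (ha k)
  have hterm : ∀ p j, 0 ≤ y j * (m j).factorization p := fun p j =>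
    mul_nonneg (hy j) (Nat.cast_nonneg _)
  refine rpow_le_prod_rpow_of_factorization_le univ
    (lcm_eq_zero_iff.not.2 fun ⟨k, _, hk⟩ => hv k hk) (fun j _ => hm j) fun p => ?_
  rw [Finset.factorization_lcm fun k _ => hv k]
  refine sup_induction (p := fun e : ℕ => t * e ≤ ∑ j, y j * (m j).factorization p)
    (by simpa using sum_nonneg fun j _ => hterm p j) (fun e₁ h₁ e₂ h₂ => ?_) fun k _ => ?_
  · rcases le_total e₁ e₂ with h | h
    · rwa [sup_of_le_right h]
    · rwa [sup_of_le_left h]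
  · have hle : ∀ j, v k ∣ m j → (v k).factorization p ≤ (m j).factorization p :=
      fun j h => (Nat.factorization_le_iff_dvd (hv k) (hm j)).2 h p
    calc t * (v k).factorization p ≤ (y (a k) + y (b k)) * (v k).factorization p := by
          gcongr; exact ht k
      _ ≤ y (a k) * (m (a k)).factorization p + y (b k) * (m (b k)).factorization p := by
          rw [add_mul]
          gcongr
          exacts [hy _, hle _ (ha k), hy _, hle _ (hb k)]
      _ = ∑ j ∈ {a k, b k}, y j * (m j).factorization p := by rw [sum_pair (hab k)]
      _ ≤ ∑ j, y j * (m j).factorization p :=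
          sum_le_sum_of_subset_of_nonneg (subset_univ _) fun j _ _ => hterm p j

lemma prod_rpow_eq_mul_rpow_mul_prod_rpow {ι : Type*} [Fintype ι] [DecidableEq ι] {m : ι → ℝ}
    (hm : ∀ j, 0 < m j) (y : ι → ℝ) (a b : ι) (κ : ℝ) :
    ∏ j, m j ^ y j =
      (m a * m b) ^ κ * ∏ j, m j ^ (y - Pi.single a κ - Pi.single b κ : ι → ℝ) j := by
  have hsingle : ∀ c, ∏ j, m j ^ (Pi.single c κ : ι → ℝ) j = m c ^ κ := fun c => by
    rw [Fintype.prod_eq_single c fun j hj => by simp [hj]]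
    simp
  calc ∏ j, m j ^ y j = ∏ j, (m j ^ (Pi.single a κ : ι → ℝ) j * m j ^ (Pi.single b κ : ι → ℝ) j *
        m j ^ (y - Pi.single a κ - Pi.single b κ : ι → ℝ) j) := prod_congr rfl fun j _ => by
          rw [← Real.rpow_add (hm j), ← Real.rpow_add (hm j)]
          simp
    _ = _ := by
          rw [prod_mul_distrib, prod_mul_distrib, hsingle, hsingle,
            Real.mul_rpow (hm a).le (hm b).le]

def coords : Idx → Fin 12 → ℕ :=
  fun ((e₁, e₂, e₃), (l₁₂, l₁₃, l₂₃), (d₁₂, d₁₃, d₂₁, d₂₃, d₃₁, d₃₂)) =>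
    ![e₁, e₂, e₃, l₁₂, l₁₃, l₂₃, d₁₂, d₁₃, d₂₁, d₂₃, d₃₁, d₃₂]

def pools (w : Idx) : Fin 7 → ℕ := ![B1 w, B2 w, B3 w, C1 w, C2 w, C3 w, C4 w]

def firstPool : Fin 12 → Fin 7 := ![0, 1, 2, 3, 3, 4, 0, 0, 1, 1, 2, 2]

def secondPool : Fin 12 → Fin 7 := ![6, 6, 6, 4, 5, 5, 4, 5, 3, 5, 3, 4]

lemma coords_dvd_pools (w : Idx) (k : Fin 12) :
    coords w k ∣ pools w (firstPool k) ∧ coords w k ∣ pools w (secondPool k) := by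
  obtain ⟨⟨e₁, e₂, e₃⟩, ⟨l₁₂, l₁₃, l₂₃⟩, ⟨d₁₂, d₁₃, d₂₁, d₂₃, d₃₁, d₃₂⟩⟩ := w
  fin_cases k <;> simp only [coords, pools, firstPool, secondPool, B1, B2, B3, C1, C2, C3, C4] <;>
    constructor <;> solve_by_elim [Nat.dvd_lcm_of_dvd_left, Nat.dvd_lcm_of_dvd_right, dvd_refl]

lemma coords_ne_zero (w : Idx) (k : Fin 12) : coords w k ≠ 0 := by
  obtain ⟨⟨e₁, e₂, e₃⟩, ⟨l₁₂, l₁₃, l₂₃⟩, ⟨d₁₂, d₁₃, d₂₁, d₂₃, d₃₁, d₃₂⟩⟩ := w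
  fin_cases k <;> simp [coords]

lemma pools_ne_zero (w : Idx) (j : Fin 7) : pools w j ≠ 0 := by
  obtain ⟨⟨e₁, e₂, e₃⟩, ⟨l₁₂, l₁₃, l₂₃⟩, ⟨d₁₂, d₁₃, d₂₁, d₂₃, d₃₁, d₃₂⟩⟩ := w
  fin_cases j <;> simp [pools, B1, B2, B3, C1, C2, C3, C4]

lemma coords_injective : Function.Injective coords := by
  rintro ⟨⟨e₁, e₂, e₃⟩, ⟨l₁₂, l₁₃, l₂₃⟩, ⟨d₁₂, d₁₃, d₂₁, d₂₃, d₃₁, d₃₂⟩⟩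
    ⟨⟨e₁', e₂', e₃'⟩, ⟨l₁₂', l₁₃', l₂₃'⟩, ⟨d₁₂', d₁₃', d₂₁', d₂₃', d₃₁', d₃₂'⟩⟩ h
  simp only [coords, funext_iff, Fin.forall_fin_succ, Matrix.cons_val_zero, Matrix.cons_val_succ,
    Matrix.cons_val_fin_one, PNat.coe_inj] at h
  simp [h]

def lcmCoords (w : Idx) : ℕ := univ.lcm (coords w)

lemma lcmCoords_ne_zero (w : Idx) : lcmCoords w ≠ 0 :=
  lcm_eq_zero_iff.not.2 fun ⟨k, _, hk⟩ => coords_ne_zero w k hk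

lemma card_filter_lcmCoords_eq_le (n : ℕ) (S : Finset Idx) :
    #{w ∈ S | lcmCoords w = n} ≤ #n.divisors ^ 12 := by
  rw [← Fintype.card_piFinset_const]
  refine card_le_card_of_injOn coords (fun w hw => ?_) coords_injective.injOn
  obtain ⟨-, rfl⟩ := mem_filter.1 hw
  exact Fintype.mem_piFinset.2 fun k =>
    Nat.mem_divisors.2 ⟨dvd_lcm (mem_univ k), lcmCoords_ne_zero w⟩

lemma summable_lcmCoords_rpow_neg {t : ℝ} (ht : 1 < t) :
    Summable fun w : Idx => (lcmCoords w : ℝ) ^ (-t) := by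
  obtain ⟨K, -, hτ⟩ := card_divisors_le_rpow (δ := (t - 1) / 24) (by linarith)
  refine summable_comp_of_card_fiber_le (g := fun n : ℕ => (n : ℝ) ^ (-t))
    (fun n => by positivity) card_filter_lcmCoords_eq_le ?_
  refine Summable.of_nonneg_of_le (fun n => by positivity) (fun n => ?_)
    ((Real.summable_nat_rpow.2 (by linarith : -((t + 1) / 2) < -1)).mul_left (K ^ 12))
  rcases eq_or_ne n 0 with rfl | hn
  · rw [Nat.divisors_zero, card_empty, zero_pow (by norm_num), Nat.cast_zero, zero_mul]
    positivity
  · have hn' : (0 : ℝ) < n := by exact_mod_cast Nat.pos_of_ne_zero hn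
    calc ((#n.divisors ^ 12 : ℕ) : ℝ) * (n : ℝ) ^ (-t)
        ≤ (K * (n : ℝ) ^ ((t - 1) / 24)) ^ 12 * (n : ℝ) ^ (-t) := by
          push_cast; gcongr; exact hτ n hn
      _ = K ^ 12 * (n : ℝ) ^ (-((t + 1) / 2)) := by
          rw [mul_pow, ← Real.rpow_natCast ((n : ℝ) ^ _) 12, ← Real.rpow_mul hn'.le, mul_assoc,
            ← Real.rpow_add hn']
          ring_nf

def CoversCoords (t : ℝ) (y : Fin 7 → ℝ) : Prop :=
  (∀ j, 0 ≤ y j) ∧ ∀ k, t ≤ y (firstPool k) + y (secondPool k)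

lemma lcmCoords_rpow_le {t : ℝ} {y : Fin 7 → ℝ} (hy : CoversCoords t y) (w : Idx) :
    (lcmCoords w : ℝ) ^ t ≤ ∏ j, (pools w j : ℝ) ^ y j :=
  lcm_rpow_le_prod_rpow (pools_ne_zero w) hy.1 (by decide) (fun k => (coords_dvd_pools w k).1)
    (fun k => (coords_dvd_pools w k).2) hy.2

lemma pools_rpow_div_le {t κ : ℝ} {y : Fin 7 → ℝ} {a b : Fin 7}
    (hy : CoversCoords t (y - Pi.single a κ - Pi.single b κ)) (w : Idx) :
    ((pools w a * pools w b : ℕ) : ℝ) ^ κ / ∏ j, (pools w j : ℝ) ^ y j ≤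
      (lcmCoords w : ℝ) ^ (-t) := by
  have hm : ∀ j, (0 : ℝ) < pools w j := fun j => by
    exact_mod_cast Nat.pos_of_ne_zero (pools_ne_zero w j)
  have hL : (0 : ℝ) < lcmCoords w := by exact_mod_cast Nat.pos_of_ne_zero (lcmCoords_ne_zero w)
  rw [prod_rpow_eq_mul_rpow_mul_prod_rpow hm y a b κ, Nat.cast_mul,
    div_mul_cancel_left₀ (Real.rpow_pos_of_pos (mul_pos (hm a) (hm b)) κ).ne',
    Real.rpow_neg hL.le]
  exact inv_anti₀ (Real.rpow_pos_of_pos hL t) (lcmCoords_rpow_le hy w)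

def weights (u₁ u₂ u₃ w₁ w₂ w₃ w₄ : ℝ) : Fin 7 → ℝ := ![u₁, u₂, u₃, w₁, w₂, w₃, w₄]

lemma term_le_lcmCoords_rpow_neg {t u₁ u₂ u₃ w₁ w₂ w₃ w₄ κ : ℝ}
    (h₁ : CoversCoords t (weights u₁ u₂ u₃ w₁ w₂ w₃ w₄ - Pi.single 0 κ - Pi.single 3 κ))
    (h₂ : CoversCoords t (weights u₁ u₂ u₃ w₁ w₂ w₃ w₄ - Pi.single 1 κ - Pi.single 4 κ))
    (h₃ : CoversCoords t (weights u₁ u₂ u₃ w₁ w₂ w₃ w₄ - Pi.single 2 κ - Pi.single 5 κ))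
    (w : Idx) : term u₁ u₂ u₃ w₁ w₂ w₃ w₄ κ w ≤ (lcmCoords w : ℝ) ^ (-t) := by
  have hD : (B1 w : ℝ) ^ u₁ * (B2 w : ℝ) ^ u₂ * (B3 w : ℝ) ^ u₃ * (C1 w : ℝ) ^ w₁ *
      (C2 w : ℝ) ^ w₂ * (C3 w : ℝ) ^ w₃ * (C4 w : ℝ) ^ w₄ =
      ∏ j, (pools w j : ℝ) ^ weights u₁ u₂ u₃ w₁ w₂ w₃ w₄ j := by
    simp [Fin.prod_univ_seven, pools, weights]
  rw [term, hD]
  rcases max_choice (B1 w * C1 w) (max (B2 w * C2 w) (B3 w * C3 w)) with h | h <;> rw [h]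
  · exact pools_rpow_div_le h₁ w
  · rcases max_choice (B2 w * C2 w) (B3 w * C3 w) with h | h <;> rw [h]
    exacts [pools_rpow_div_le h₂ w, pools_rpow_div_le h₃ w]

theorem statement11 (ε : ℝ) (hε : 0 < ε) :
    ∃ C : ℝ, 0 < C ∧ ∀ u₁ u₂ u₃ w₁ w₂ w₃ w₄ κ : ℝ,
      κ ≤ u₁ → κ ≤ u₂ → κ ≤ u₃ → κ ≤ w₁ → κ ≤ w₂ → κ ≤ w₃ →
      κ ≤ u₁ + w₄ - 1 - ε → κ ≤ u₂ + w₄ - 1 - ε → κ ≤ u₃ + w₄ - 1 - ε →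
      0 ≤ w₄ → 0 ≤ κ →
      1 + ε < u₁ + w₂ - κ → 1 + ε < u₁ + w₃ - κ → 1 + ε < u₂ + w₁ - κ →
      1 + ε < u₂ + w₃ - κ → 1 + ε < u₃ + w₁ - κ → 1 + ε < u₃ + w₂ - κ →
      1 + ε < w₁ + w₂ - κ → 1 + ε < w₁ + w₃ - κ → 1 + ε < w₂ + w₃ - κ →
      Summable (term u₁ u₂ u₃ w₁ w₂ w₃ w₄ κ) ∧
      ∑' w : Idx, term u₁ u₂ u₃ w₁ w₂ w₃ w₄ κ w ≤ C := by
  have hL := summable_lcmCoords_rpow_neg (t := 1 + ε) (by linarith)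
  refine ⟨_, hL.tsum_pos (fun _ => by positivity) default (Real.rpow_pos_of_pos
    (Nat.cast_pos.2 (Nat.pos_of_ne_zero (lcmCoords_ne_zero _))) _), ?_⟩
  intro u₁ u₂ u₃ w₁ w₂ w₃ w₄ κ _ _ _ _ _ _ _ _ _ _ _ _ _ _ _ _ _ _ _ _
  have hle : ∀ w, term u₁ u₂ u₃ w₁ w₂ w₃ w₄ κ w ≤ (lcmCoords w : ℝ) ^ (-(1 + ε)) := by
    refine term_le_lcmCoords_rpow_neg ?_ ?_ ?_ <;>
      constructor <;> intro i <;> fin_cases i <;>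
      simp only [weights, firstPool, secondPool, Pi.sub_apply, Pi.single_apply, Matrix.cons_val,
        Fin.reduceFinMk, Fin.reduceEq, if_true, if_false] <;>
      linarith
  have hnn : ∀ w, 0 ≤ term u₁ u₂ u₃ w₁ w₂ w₃ w₄ κ w := fun w => by unfold term; positivity
  have hsum := hL.of_nonneg_of_le hnn hle
  exact ⟨hsum, hsum.tsum_le_tsum hle hL⟩

end Statement11
end

section
/- Let α₁, α₂, α₃ ∈ ℂ with α₁ + α₂ + α₃ = 2 and αᵢ ∉ ℤ for all i. Then √π · ∏_{i=1}^{3} Γ((1 − αᵢ)/2)/Γ(αᵢ/2) = Σ_{i=1}^{3} Γ(1−α₁)Γ(1−α₂)Γ(1−α₃)/(Γ(1−αᵢ)·Γ(αᵢ)). -/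
/-!
Duplication and reflection give `Γ((1 - α)/2) / Γ(α/2) = √π / (2^(1-α) cos(πα/2) Γ(α))`, and
reflection gives `Γ(1 - α) Γ(α) = π / sin(πα)`, so both sides become rational expressions in
`sin(παᵢ/2)`, `cos(παᵢ/2)` and `Γ(αᵢ)`. Since `∑ παᵢ/2 = π`, the triangle identity
`sin 2a + sin 2b + sin 2c = 4 sin a sin b sin c` and `∏ 2^(1-αᵢ) = 2` make them agree.
-/

open Complex
open scoped Real

lemma ofReal_sqrt_pi_sq : (√π : ℂ) ^ 2 = π := by
  rw [← ofReal_pow, Real.sq_sqrt Real.pi_pos.le]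

lemma mem_integerComplement_of_forall_ne {s : ℂ} (hs : ∀ n : ℤ, s ≠ n) : s ∈ integerComplement :=
  fun ⟨n, hn⟩ => hs n hn.symm

lemma Gamma_ne_zero_of_forall_ne_intCast {s : ℂ} (hs : ∀ n : ℤ, s ≠ n) : Gamma s ≠ 0 :=
  Gamma_ne_zero fun m hm => hs (-m) (by push_cast; exact hm)

lemma sin_pi_mul_eq_two_mul_sin_mul_cos (s : ℂ) :
    sin (π * s) = 2 * sin (π * s / 2) * cos (π * s / 2) := by
  rw [← sin_two_mul]; ring_nf

lemma sin_pi_mul_div_two_ne_zero {s : ℂ} (hs : ∀ n : ℤ, s ≠ n) : sin (π * s / 2) ≠ 0 :=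
  right_ne_zero_of_mul <| left_ne_zero_of_mul <|
    sin_pi_mul_eq_two_mul_sin_mul_cos s ▸
      sin_pi_mul_ne_zero (mem_integerComplement_of_forall_ne hs)

lemma cos_pi_mul_div_two_ne_zero {s : ℂ} (hs : ∀ n : ℤ, s ≠ n) : cos (π * s / 2) ≠ 0 :=
  right_ne_zero_of_mul <|
    sin_pi_mul_eq_two_mul_sin_mul_cos s ▸
      sin_pi_mul_ne_zero (mem_integerComplement_of_forall_ne hs)

lemma Gamma_one_sub_eq_div {s : ℂ} (hs : Gamma s ≠ 0) :
    Gamma (1 - s) = π / (sin (π * s) * Gamma s) := by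
  rw [← div_div]
  exact eq_div_of_mul_eq hs (by rw [mul_comm, Gamma_mul_Gamma_one_sub])

lemma div_Gamma_one_sub_mul_Gamma (x s : ℂ) :
    x / (Gamma (1 - s) * Gamma s) = x * sin (π * s) / π := by
  rw [mul_comm, Gamma_mul_Gamma_one_sub, div_div_eq_mul_div]

lemma Gamma_one_sub_div_two_div_Gamma_div_two {s : ℂ} (hs : ∀ n : ℤ, s ≠ n) :
    Gamma ((1 - s) / 2) / Gamma (s / 2) = √π / (2 ^ (1 - s) * cos (π * s / 2) * Gamma s) := by
  have hdup := Gamma_mul_Gamma_add_half (s / 2)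
  have hrefl := Gamma_mul_Gamma_one_sub ((1 - s) / 2)
  rw [show 2 * (s / 2) = s by ring] at hdup
  rw [show 1 - (1 - s) / 2 = s / 2 + 1 / 2 by ring,
    show π * ((1 - s) / 2) = π / 2 - π * s / 2 by ring, sin_pi_div_two_sub,
    eq_div_iff (cos_pi_mul_div_two_ne_zero hs)] at hrefl
  have hhalf : Gamma (s / 2) ≠ 0 :=
    Gamma_ne_zero fun m hm => hs (-(2 * m)) (by push_cast; linear_combination 2 * hm)
  have hhalf' : Gamma (s / 2 + 1 / 2) ≠ 0 :=
    Gamma_ne_zero fun m hm => hs (-(2 * m) - 1) (by push_cast; linear_combination 2 * hm)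
  have hden : (2 : ℂ) ^ (1 - s) * cos (π * s / 2) * Gamma s ≠ 0 :=
    mul_ne_zero (mul_ne_zero (by simp) (cos_pi_mul_div_two_ne_zero hs))
      (Gamma_ne_zero_of_forall_ne_intCast hs)
  rw [div_eq_div_iff hhalf hden]
  refine mul_right_cancel₀ hhalf' ?_
  linear_combination (2 ^ (1 - s) * Gamma s) * hrefl - √π * hdup -
    (2 ^ (1 - s) * Gamma s) * ofReal_sqrt_pi_sq

lemma sin_two_mul_add_sin_two_mul_add_sin_two_mul {a b c : ℂ} (h : a + b + c = π) :
    sin (2 * a) + sin (2 * b) + sin (2 * c) = 4 * sin a * sin b * sin c := by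
  obtain rfl : c = π - (a + b) := by linear_combination h
  rw [sin_pi_sub, mul_sub, sin_sub, sin_two_mul π, sin_pi, cos_two_mul π, cos_pi,
    two_mul (a + b), sin_add, sin_add, cos_add, sin_two_mul, sin_two_mul, cos_add]
  linear_combination (-2 * sin a * cos a) * sin_sq_add_cos_sq b +
    (-2 * sin b * cos b) * sin_sq_add_cos_sq a

theorem statement15 (α₁ α₂ α₃ : ℂ) (hsum : α₁ + α₂ + α₃ = 2)
    (h₁ : ∀ n : ℤ, α₁ ≠ (n : ℂ)) (h₂ : ∀ n : ℤ, α₂ ≠ (n : ℂ)) (h₃ : ∀ n : ℤ, α₃ ≠ (n : ℂ)) :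
    (Real.sqrt Real.pi : ℂ) *
        (Complex.Gamma ((1 - α₁) / 2) / Complex.Gamma (α₁ / 2)) *
        (Complex.Gamma ((1 - α₂) / 2) / Complex.Gamma (α₂ / 2)) *
        (Complex.Gamma ((1 - α₃) / 2) / Complex.Gamma (α₃ / 2)) =
      Complex.Gamma (1 - α₁) * Complex.Gamma (1 - α₂) * Complex.Gamma (1 - α₃) /
          (Complex.Gamma (1 - α₁) * Complex.Gamma α₁) +
        Complex.Gamma (1 - α₁) * Complex.Gamma (1 - α₂) * Complex.Gamma (1 - α₃) /
          (Complex.Gamma (1 - α₂) * Complex.Gamma α₂) +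
        Complex.Gamma (1 - α₁) * Complex.Gamma (1 - α₂) * Complex.Gamma (1 - α₃) /
          (Complex.Gamma (1 - α₃) * Complex.Gamma α₃) := by
  have hpow : (2 : ℂ) ^ (1 - α₁) * 2 ^ (1 - α₂) * 2 ^ (1 - α₃) = 2 := by
    rw [← cpow_add _ _ two_ne_zero, ← cpow_add _ _ two_ne_zero,
      show 1 - α₁ + (1 - α₂) + (1 - α₃) = 1 by linear_combination -hsum, cpow_one]
  have htrig := sin_two_mul_add_sin_two_mul_add_sin_two_mul
    (a := π * α₁ / 2) (b := π * α₂ / 2) (c := π * α₃ / 2) (by linear_combination π / 2 * hsum)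
  have hΓ₁ := Gamma_ne_zero_of_forall_ne_intCast h₁
  have hΓ₂ := Gamma_ne_zero_of_forall_ne_intCast h₂
  have hΓ₃ := Gamma_ne_zero_of_forall_ne_intCast h₃
  have hs₁ := sin_pi_mul_div_two_ne_zero h₁
  have hs₂ := sin_pi_mul_div_two_ne_zero h₂
  have hs₃ := sin_pi_mul_div_two_ne_zero h₃
  have hc₁ := cos_pi_mul_div_two_ne_zero h₁
  have hc₂ := cos_pi_mul_div_two_ne_zero h₂
  have hc₃ := cos_pi_mul_div_two_ne_zero h₃
  rw [Gamma_one_sub_div_two_div_Gamma_div_two h₁, Gamma_one_sub_div_two_div_Gamma_div_two h₂,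
    Gamma_one_sub_div_two_div_Gamma_div_two h₃, div_Gamma_one_sub_mul_Gamma,
    div_Gamma_one_sub_mul_Gamma, div_Gamma_one_sub_mul_Gamma,
    Gamma_one_sub_eq_div hΓ₁, Gamma_one_sub_eq_div hΓ₂, Gamma_one_sub_eq_div hΓ₃]
  simp only [sin_pi_mul_eq_two_mul_sin_mul_cos, mul_div_cancel₀ _ (two_ne_zero' ℂ)] at htrig ⊢
  generalize sin (π * α₁ / 2) = s₁, sin (π * α₂ / 2) = s₂, sin (π * α₃ / 2) = s₃,
    cos (π * α₁ / 2) = c₁, cos (π * α₂ / 2) = c₂, cos (π * α₃ / 2) = c₃ at *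
  field_simp
  linear_combination 4 * s₁ * s₂ * s₃ * ((√π : ℂ) ^ 2 + π) * ofReal_sqrt_pi_sq - π ^ 2 * htrig -
    π ^ 2 * (c₁ * s₁ + c₂ * s₂ + c₃ * s₃) * hpow
end

section
/- Let p be a prime. The number of tuples (x₁,x₂,x₃,z₁,z₂,z₃,z₄) ∈ 𝔽_p⁷ satisfying x₁z₁ + x₂z₂ + x₃z₃ = 0 together with the conditions ¬(x₁ = 0 ∧ z₂z₃z₄ = 0), ¬(x₂ = 0 ∧ z₁z₃z₄ = 0), ¬(x₃ = 0 ∧ z₁z₂z₄ = 0), ¬(z₁ = 0 ∧ z₂ = 0), ¬(z₁ = 0 ∧ z₃ = 0), ¬(z₂ = 0 ∧ z₃ = 0) equals (p−1)⁴·(p² + 4p + 1), i.e. p⁶·(1 − 1/p)⁴·(1 + 4/p + 1/p²). -/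
/-!
At most one of `z₁, z₂, z₃` vanishes, and the conditions are invariant under the cyclic
permutation of the indices `1, 2, 3`. So over a field with `q` elements the points fall into the
three families `zᵢ = 0` (`i ≤ 3`), which are exchanged by the symmetry and have
`(q² - 1)(q - 1)³` points each, the family `z₄ = 0 ≠ z₁z₂z₃` with `(q - 2)(q - 1)⁴` points, and
the family `z₁z₂z₃z₄ ≠ 0` with `q²(q - 1)⁴` points. In the last four families `z₁ ≠ 0`, so the
equation determines `x₁`, and the remaining coordinates range over a product of simple sets.
-/

theorem Nat.card_subtype_ne {α : Type*} [Finite α] (a : α) :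
    Nat.card {x // x ≠ a} = Nat.card α - 1 := by
  classical
  have := Fintype.ofFinite α
  simp [Nat.card_eq_fintype_card, Fintype.card_subtype_compl]

namespace TorsorCount

variable {F : Type*} [Field F]

local notation "F⁷" => F × F × F × F × F × F × F

def IsTorsorPoint (x₁ x₂ x₃ z₁ z₂ z₃ z₄ : F) : Prop :=
  x₁ * z₁ + x₂ * z₂ + x₃ * z₃ = 0 ∧
    ¬(x₁ = 0 ∧ z₂ * z₃ * z₄ = 0) ∧ ¬(x₂ = 0 ∧ z₁ * z₃ * z₄ = 0) ∧
    ¬(x₃ = 0 ∧ z₁ * z₂ * z₄ = 0) ∧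
    ¬(z₁ = 0 ∧ z₂ = 0) ∧ ¬(z₁ = 0 ∧ z₃ = 0) ∧ ¬(z₂ = 0 ∧ z₃ = 0)

theorem isTorsorPoint_rotate {x₁ x₂ x₃ z₁ z₂ z₃ z₄ : F} :
    IsTorsorPoint x₂ x₃ x₁ z₂ z₃ z₁ z₄ ↔ IsTorsorPoint x₁ x₂ x₃ z₁ z₂ z₃ z₄ := by
  unfold IsTorsorPoint
  rw [show x₂ * z₂ + x₃ * z₃ + x₁ * z₁ = x₁ * z₁ + x₂ * z₂ + x₃ * z₃ by ring]
  simp only [mul_eq_zero]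
  tauto

theorem card_torsorPoints_rotate (R : F → F → F → F → Prop) :
    Nat.card {(x₁, x₂, x₃, z₁, z₂, z₃, z₄) : F⁷ |
        IsTorsorPoint x₁ x₂ x₃ z₁ z₂ z₃ z₄ ∧ R z₁ z₂ z₃ z₄} =
      Nat.card {(x₁, x₂, x₃, z₁, z₂, z₃, z₄) : F⁷ |
        IsTorsorPoint x₁ x₂ x₃ z₁ z₂ z₃ z₄ ∧ R z₂ z₃ z₁ z₄} := by
  let rotate : F⁷ ≃ F⁷ :=
    { toFun := fun (x₁, x₂, x₃, z₁, z₂, z₃, z₄) => (x₃, x₁, x₂, z₃, z₁, z₂, z₄)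
      invFun := fun (x₁, x₂, x₃, z₁, z₂, z₃, z₄) => (x₂, x₃, x₁, z₂, z₃, z₁, z₄)
      left_inv := fun _ => rfl
      right_inv := fun _ => rfl }
  exact Nat.card_congr <| rotate.subtypeEquiv fun ⟨_, _, _, _, _, _, _⟩ =>
    and_congr_left' isTorsorPoint_rotate

def torsorPointsZThreeEquiv :
    {(x₁, x₂, x₃, z₁, z₂, z₃, z₄) : F⁷ | IsTorsorPoint x₁ x₂ x₃ z₁ z₂ z₃ z₄ ∧ z₃ = 0} ≃
      {w : F × F // w ≠ 0} × {a : F // a ≠ 0} × {a : F // a ≠ 0} × {a : F // a ≠ 0} where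
  toFun := fun ⟨(_, x₂, x₃, z₁, z₂, _, z₄), ⟨_, _, h₂, h₃, _, h₁₃, h₂₃⟩, hz₃⟩ =>
    (⟨(x₃, z₄), fun h => h₃ ⟨(Prod.mk_eq_zero.1 h).1, by simp [(Prod.mk_eq_zero.1 h).2]⟩⟩,
      ⟨x₂, fun h => h₂ ⟨h, by simp [hz₃]⟩⟩, ⟨z₁, fun h => h₁₃ ⟨h, hz₃⟩⟩,
      ⟨z₂, fun h => h₂₃ ⟨h, hz₃⟩⟩)
  invFun := fun ⟨⟨(x₃, z₄), h⟩, ⟨x₂, hx₂⟩, ⟨z₁, hz₁⟩, ⟨z₂, hz₂⟩⟩ =>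
    ⟨(-(x₂ * z₂) / z₁, x₂, x₃, z₁, z₂, 0, z₄), by
      refine ⟨⟨by field_simp; ring, ?_, ?_, ?_, ?_, ?_, ?_⟩, rfl⟩ <;> simp_all [Prod.ext_iff]⟩
  left_inv := by
    rintro ⟨⟨x₁, x₂, x₃, z₁, z₂, z₃, z₄⟩, ⟨heq, -, -, -, -, h₁₃, -⟩, rfl⟩
    have hz₁ : z₁ ≠ 0 := fun h => h₁₃ ⟨h, rfl⟩
    ext
    · field_simp; linear_combination -heq
    all_goals rfl
  right_inv := fun _ => rfl

/-- The summands `xᵢzᵢ` are `(t - 1)u, u, -tu` with `u = x₂z₂`; all of them are nonzero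
iff `t ≠ 0, 1`. -/
def torsorPointsZFourEquiv :
    {(x₁, x₂, x₃, z₁, z₂, z₃, z₄) : F⁷ |
        IsTorsorPoint x₁ x₂ x₃ z₁ z₂ z₃ z₄ ∧ z₁ ≠ 0 ∧ z₂ ≠ 0 ∧ z₃ ≠ 0 ∧ z₄ = 0} ≃
      {t : F // t ≠ 0 ∧ t ≠ 1} × {a : F // a ≠ 0} × {a : F // a ≠ 0} × {a : F // a ≠ 0} ×
        {a : F // a ≠ 0} where
  toFun := fun ⟨(x₁, x₂, x₃, z₁, z₂, z₃, _), h⟩ =>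
    (⟨-(x₃ * z₃) / (x₂ * z₂), by
      obtain ⟨⟨heq, h₁, h₂, h₃, -⟩, hz₁, hz₂, hz₃, hz₄⟩ := h
      simp only [hz₄, mul_zero, and_true] at h₁ h₂ h₃
      refine ⟨by simp [h₂, h₃, hz₂, hz₃], fun ht => h₁ ?_⟩
      rw [div_eq_one_iff_eq (mul_ne_zero h₂ hz₂)] at ht
      simpa [hz₁] using (by linear_combination heq + ht : x₁ * z₁ = 0)⟩,
      ⟨x₂, fun hx => h.1.2.2.1 ⟨hx, by simp [h.2.2.2.2]⟩⟩, ⟨z₁, h.2.1⟩, ⟨z₂, h.2.2.1⟩,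
      ⟨z₃, h.2.2.2.1⟩)
  invFun := fun ⟨⟨t, ht⟩, ⟨x₂, hx₂⟩, ⟨z₁, hz₁⟩, ⟨z₂, hz₂⟩, ⟨z₃, hz₃⟩⟩ =>
    ⟨((t - 1) * x₂ * z₂ / z₁, x₂, -(t * x₂ * z₂) / z₃, z₁, z₂, z₃, 0), by
      refine ⟨⟨by field_simp; ring, ?_, ?_, ?_, ?_, ?_, ?_⟩, hz₁, hz₂, hz₃, rfl⟩ <;>
        simp_all [sub_eq_zero]⟩
  left_inv := by
    rintro ⟨⟨x₁, x₂, x₃, z₁, z₂, z₃, z₄⟩, ⟨heq, -, h₂, -⟩, hz₁, hz₂, hz₃, rfl⟩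
    have hx₂ : x₂ ≠ 0 := fun h => h₂ ⟨h, by simp⟩
    ext
    · field_simp; linear_combination -heq
    · rfl
    · field_simp
    all_goals rfl
  right_inv := by
    rintro ⟨⟨t, ht⟩, ⟨x₂, hx₂⟩, ⟨z₁, hz₁⟩, ⟨z₂, hz₂⟩, ⟨z₃, hz₃⟩⟩
    ext
    · dsimp only; field_simp
    all_goals rfl

def torsorPointsGenericEquiv :
    {(x₁, x₂, x₃, z₁, z₂, z₃, z₄) : F⁷ |
        IsTorsorPoint x₁ x₂ x₃ z₁ z₂ z₃ z₄ ∧ z₁ ≠ 0 ∧ z₂ ≠ 0 ∧ z₃ ≠ 0 ∧ z₄ ≠ 0} ≃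
      F × F × {a : F // a ≠ 0} × {a : F // a ≠ 0} × {a : F // a ≠ 0} × {a : F // a ≠ 0} where
  toFun := fun ⟨(_, x₂, x₃, z₁, z₂, z₃, z₄), h⟩ =>
    (x₂, x₃, ⟨z₁, h.2.1⟩, ⟨z₂, h.2.2.1⟩, ⟨z₃, h.2.2.2.1⟩, ⟨z₄, h.2.2.2.2⟩)
  invFun := fun ⟨x₂, x₃, ⟨z₁, hz₁⟩, ⟨z₂, hz₂⟩, ⟨z₃, hz₃⟩, ⟨z₄, hz₄⟩⟩ =>
    ⟨(-(x₂ * z₂ + x₃ * z₃) / z₁, x₂, x₃, z₁, z₂, z₃, z₄), by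
      refine ⟨⟨by field_simp; ring, ?_, ?_, ?_, ?_, ?_, ?_⟩, hz₁, hz₂, hz₃, hz₄⟩ <;> simp_all⟩
  left_inv := by
    rintro ⟨⟨x₁, x₂, x₃, z₁, z₂, z₃, z₄⟩, ⟨heq, -⟩, hz₁, -⟩
    ext
    · field_simp; linear_combination -heq
    all_goals rfl
  right_inv := fun _ => rfl

theorem card_torsorPoints_eq_sum [Finite F] :
    Nat.card {(x₁, x₂, x₃, z₁, z₂, z₃, z₄) : F⁷ | IsTorsorPoint x₁ x₂ x₃ z₁ z₂ z₃ z₄} =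
      Nat.card {(x₁, x₂, x₃, z₁, z₂, z₃, z₄) : F⁷ |
          IsTorsorPoint x₁ x₂ x₃ z₁ z₂ z₃ z₄ ∧ z₁ = 0} +
        Nat.card {(x₁, x₂, x₃, z₁, z₂, z₃, z₄) : F⁷ |
          IsTorsorPoint x₁ x₂ x₃ z₁ z₂ z₃ z₄ ∧ z₂ = 0} +
        Nat.card {(x₁, x₂, x₃, z₁, z₂, z₃, z₄) : F⁷ |
          IsTorsorPoint x₁ x₂ x₃ z₁ z₂ z₃ z₄ ∧ z₃ = 0} +
        Nat.card {(x₁, x₂, x₃, z₁, z₂, z₃, z₄) : F⁷ |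
          IsTorsorPoint x₁ x₂ x₃ z₁ z₂ z₃ z₄ ∧ z₁ ≠ 0 ∧ z₂ ≠ 0 ∧ z₃ ≠ 0 ∧ z₄ = 0} +
        Nat.card {(x₁, x₂, x₃, z₁, z₂, z₃, z₄) : F⁷ |
          IsTorsorPoint x₁ x₂ x₃ z₁ z₂ z₃ z₄ ∧ z₁ ≠ 0 ∧ z₂ ≠ 0 ∧ z₃ ≠ 0 ∧ z₄ ≠ 0} := by
  classical
  have := Fintype.ofFinite F
  simp only [Nat.card_eq_fintype_card, Fintype.card_subtype, Finset.card_filter,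
    ← Finset.sum_add_distrib]
  refine Finset.sum_congr rfl fun ⟨x₁, x₂, x₃, z₁, z₂, z₃, z₄⟩ _ => ?_
  by_cases h : IsTorsorPoint x₁ x₂ x₃ z₁ z₂ z₃ z₄
  · have ⟨_, _, _, _, h₁₂, h₁₃, h₂₃⟩ := h
    by_cases z₁ = 0 <;> by_cases z₂ = 0 <;> by_cases z₃ = 0 <;> by_cases z₄ = 0 <;> simp_all
  · simp [h]

theorem card_ne_zero_and_ne_one [Finite F] :
    Nat.card {t : F // t ≠ 0 ∧ t ≠ 1} = Nat.card F - 2 := by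
  classical
  have := Fintype.ofFinite F
  rw [Nat.card_eq_fintype_card, Fintype.card_subtype, Nat.card_eq_fintype_card,
    show ({t | t ≠ 0 ∧ t ≠ 1} : Finset F) = Finset.univ \ {0, 1} by ext; simp,
    Finset.card_univ_sdiff, Finset.card_pair zero_ne_one]

theorem card_torsorPoints [Finite F] :
    Nat.card {(x₁, x₂, x₃, z₁, z₂, z₃, z₄) : F⁷ | IsTorsorPoint x₁ x₂ x₃ z₁ z₂ z₃ z₄} =
      (Nat.card F - 1) ^ 4 * (Nat.card F ^ 2 + 4 * Nat.card F + 1) := by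
  have h₃₁ := card_torsorPoints_rotate (F := F) fun _ _ z₃ _ => z₃ = 0
  have h₂₃ := card_torsorPoints_rotate (F := F) fun _ z₂ _ _ => z₂ = 0
  beta_reduce at h₃₁ h₂₃
  rw [card_torsorPoints_eq_sum, ← h₃₁, h₂₃, Nat.card_congr torsorPointsZThreeEquiv,
    Nat.card_congr torsorPointsZFourEquiv, Nat.card_congr torsorPointsGenericEquiv]
  simp only [Nat.card_prod, Nat.card_subtype_ne, card_ne_zero_and_ne_one]
  have hq : 2 ≤ Nat.card F := Finite.one_lt_card
  generalize Nat.card F = q at *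
  zify [hq, (by omega : 1 ≤ q), Nat.one_le_iff_ne_zero.2 (by positivity : q * q ≠ 0)]
  ring

end TorsorCount

/-- The number of points of the torsor equation `x₁z₁ + x₂z₂ + x₃z₃ = 0` over `𝔽_p`
with the (mod `p` reductions of the) coprimality conditions.  Here
`v = (x₁, x₂, x₃, z₁, z₂, z₃, z₄)`. -/
theorem statement16 (p : ℕ) (hp : p.Prime) :
    Nat.card {v : ZMod p × ZMod p × ZMod p × ZMod p × ZMod p × ZMod p × ZMod p |
        v.1 * v.2.2.2.1 + v.2.1 * v.2.2.2.2.1 + v.2.2.1 * v.2.2.2.2.2.1 = 0 ∧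
        ¬(v.1 = 0 ∧ v.2.2.2.2.1 * v.2.2.2.2.2.1 * v.2.2.2.2.2.2 = 0) ∧
        ¬(v.2.1 = 0 ∧ v.2.2.2.1 * v.2.2.2.2.2.1 * v.2.2.2.2.2.2 = 0) ∧
        ¬(v.2.2.1 = 0 ∧ v.2.2.2.1 * v.2.2.2.2.1 * v.2.2.2.2.2.2 = 0) ∧
        ¬(v.2.2.2.1 = 0 ∧ v.2.2.2.2.1 = 0) ∧
        ¬(v.2.2.2.1 = 0 ∧ v.2.2.2.2.2.1 = 0) ∧
        ¬(v.2.2.2.2.1 = 0 ∧ v.2.2.2.2.2.1 = 0)} =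
      (p - 1) ^ 4 * (p ^ 2 + 4 * p + 1) := by
  have := Fact.mk hp
  have h := TorsorCount.card_torsorPoints (F := ZMod p)
  rwa [Nat.card_zmod] at h
end
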